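/- arXiv:2305.06846 — 7 statements merged into one kernel-verified Lean document; each statement's English description precedes it below -/
import Mathlib

section
/- Let G be a finite additive group of order v = mn and H a subgroup of G of order n. If S′ is simultaneously a (v,s,k,λ₁,μ₁)-DPDF and a (v,s,k,λ₂,μ₂)-EPDF in G whose constituent sets partition G∖H, then n divides μ₁ and n divides μ₂. -/
open Finset

/-- The multiset of internal differences of a finite subset of an additive group. -/
def dInt {G : Type*} [AddGroup G] [DecidableEq G] (D : Finset G) : Multiset G :=
  ((D ×ˢ D).filter fun p => p.1 ≠ p.2).val.map fun p => p.1 - p.2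

/-- The multiset of external differences between two finite subsets of an additive group. -/
def dExt {G : Type*} [AddGroup G] (D₁ D₂ : Finset G) : Multiset G :=
  (D₁ ×ˢ D₂).val.map fun p => p.1 - p.2

/-- The multiset union of the internal differences of a family of sets. -/
def IntFam {G : Type*} [AddGroup G] [DecidableEq G] {ι : Type*} [Fintype ι]
    (A : ι → Finset G) : Multiset G :=
  ∑ i, dInt (A i)

/-- The multiset union of external differences over ordered pairs of distinct sets. -/
def ExtFam {G : Type*} [AddGroup G] [DecidableEq G] {ι : Type*} [Fintype ι] [DecidableEq ι]
    (A : ι → Finset G) : Multiset G :=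
  ∑ i, ∑ j ∈ Finset.univ.erase i, dExt (A i) (A j)

/-- A `(v,s,k,lam,mu)`-disjoint partial difference family in the additive group `G`. -/
def IsDPDF (G : Type*) [AddGroup G] [Fintype G] [DecidableEq G] {ι : Type*} [Fintype ι]
    (v s k lam mu : ℕ) (A : ι → Finset G) : Prop :=
  Fintype.card G = v ∧ Fintype.card ι = s ∧
  (∀ i, (A i).card = k) ∧ (∀ i, (0 : G) ∉ A i) ∧
  (∀ i j, i ≠ j → Disjoint (A i) (A j)) ∧
  (∀ g : G, g ≠ 0 → (∃ i, g ∈ A i) → (IntFam A).count g = lam) ∧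
  (∀ g : G, g ≠ 0 → (∀ i, g ∉ A i) → (IntFam A).count g = mu)

/-- A `(v,s,k,lam,mu)`-external partial difference family in the additive group `G`. -/
def IsEPDF (G : Type*) [AddGroup G] [Fintype G] [DecidableEq G] {ι : Type*} [Fintype ι]
    [DecidableEq ι] (v s k lam mu : ℕ) (A : ι → Finset G) : Prop :=
  Fintype.card G = v ∧ Fintype.card ι = s ∧
  (∀ i, (A i).card = k) ∧ (∀ i, (0 : G) ∉ A i) ∧
  (∀ i j, i ≠ j → Disjoint (A i) (A j)) ∧
  (∀ g : G, g ≠ 0 → (∃ i, g ∈ A i) → (ExtFam A).count g = lam) ∧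
  (∀ g : G, g ≠ 0 → (∀ i, g ∉ A i) → (ExtFam A).count g = mu)


section Aux

variable {G : Type*} [AddGroup G] [Fintype G] [DecidableEq G]

lemma multiset_card_finset_sum {β : Type*} (f : β → Multiset G) (s : Finset β) :
    Multiset.card (∑ i ∈ s, f i) = ∑ i ∈ s, Multiset.card (f i) := by
  induction s using Finset.cons_induction with
  | empty => simp
  | cons a s ha ih => simp [Finset.sum_cons, ih]

lemma card_eq_sum_counts (M : Multiset G) :
    Multiset.card M = ∑ g : G, M.count g := by
  rw [← Multiset.toFinset_sum_count_eq]
  apply Finset.sum_subset (Finset.subset_univ _)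
  intro x _ hx
  rw [Multiset.count_eq_zero]
  intro h
  exact hx (Multiset.mem_toFinset.mpr h)

lemma dInt_card (D : Finset G) :
    Multiset.card (dInt D) = D.card * D.card - D.card := by
  rw [dInt, Multiset.card_map]
  have hfo : (D ×ˢ D).filter (fun p => p.1 ≠ p.2) = D.offDiag := by
    ext p; simp [Finset.mem_offDiag, and_assoc]
  rw [← Finset.offDiag_card D, ← hfo]; rfl

lemma dExt_card (D₁ D₂ : Finset G) :
    Multiset.card (dExt D₁ D₂) = D₁.card * D₂.card := by
  rw [dExt, Multiset.card_map]
  exact Finset.card_product D₁ D₂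

lemma dInt_count_zero (D : Finset G) : (dInt D).count (0 : G) = 0 := by
  rw [Multiset.count_eq_zero, dInt]
  intro h
  obtain ⟨p, hp, hp0⟩ := Multiset.mem_map.mp h
  rw [Finset.mem_val, Finset.mem_filter] at hp
  exact hp.2 (by rwa [sub_eq_zero] at hp0)

lemma dExt_count_zero (D₁ D₂ : Finset G) (h : Disjoint D₁ D₂) :
    (dExt D₁ D₂).count (0 : G) = 0 := by
  rw [Multiset.count_eq_zero, dExt]
  intro hmem
  obtain ⟨p, hp, hp0⟩ := Multiset.mem_map.mp hmem
  rw [Finset.mem_val, Finset.mem_product] at hp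
  rw [sub_eq_zero] at hp0
  exact Finset.disjoint_left.mp h hp.1 (hp0 ▸ hp.2)

open Classical in
lemma count_sum_card (H : AddSubgroup G) [Fintype H]
    {ι : Type*} [Fintype ι] (A : ι → Finset G)
    (hpart : ∀ x : G, (∃ i, x ∈ A i) ↔ x ∉ H)
    (M : Multiset G) (lam mu : ℕ)
    (h0 : M.count 0 = 0)
    (hl : ∀ g : G, g ≠ 0 → (∃ i, g ∈ A i) → M.count g = lam)
    (hm : ∀ g : G, g ≠ 0 → (∀ i, g ∉ A i) → M.count g = mu) :
    Multiset.card M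
      = (Fintype.card G - Fintype.card H) * lam + (Fintype.card H - 1) * mu := by
  classical
  have hHcard : (Finset.univ.filter (fun g : G => g ∈ H)).card = Fintype.card H :=
    (Fintype.card_of_subtype _ (fun x => by simp)).symm
  have hNcard : (Finset.univ.filter (fun g : G => ¬ g ∈ H)).card
      = Fintype.card G - Fintype.card H := by
    have := Finset.card_filter_add_card_filter_not
      (s := (Finset.univ : Finset G)) (fun g : G => g ∈ H)
    rw [Finset.card_univ] at this
    omega
  have h2 : ∑ g ∈ Finset.univ.filter (fun g : G => ¬ g ∈ H), M.count g
      = (Fintype.card G - Fintype.card H) * lam := by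
    rw [Finset.sum_congr rfl (fun g hg => ?_), Finset.sum_const, smul_eq_mul, hNcard]
    rw [Finset.mem_filter] at hg
    have hg0 : g ≠ 0 := fun h => hg.2 (h ▸ H.zero_mem)
    exact hl g hg0 ((hpart g).mpr hg.2)
  have h1 : ∑ g ∈ Finset.univ.filter (fun g : G => g ∈ H), M.count g
      = (Fintype.card H - 1) * mu := by
    have h0mem : (0 : G) ∈ Finset.univ.filter (fun g : G => g ∈ H) :=
      Finset.mem_filter.mpr ⟨Finset.mem_univ _, H.zero_mem⟩
    rw [← Finset.add_sum_erase _ _ h0mem, h0, zero_add]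
    rw [Finset.sum_congr rfl (fun g hg => ?_), Finset.sum_const, smul_eq_mul,
      Finset.card_erase_of_mem h0mem, hHcard]
    rw [Finset.mem_erase, Finset.mem_filter] at hg
    refine hm g hg.1 (fun i hi => ?_)
    exact (hpart g).mp ⟨i, hi⟩ hg.2.2
  rw [card_eq_sum_counts,
    ← Finset.sum_filter_add_sum_filter_not Finset.univ (fun g : G => g ∈ H)
      (fun g => M.count g), h1, h2, add_comm]

end Aux

/-- if a family is simultaneously a `(mn,s,k,λ₁,μ₁)`-DPDF and a
`(mn,s,k,λ₂,μ₂)`-EPDF in a group `G` of order `mn` and its sets partition `G∖H`,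
where `H` is a subgroup of order `n`, then `n ∣ μ₁` and `n ∣ μ₂`. -/
theorem n_divides_mu {G : Type*} [AddGroup G] [Fintype G] [DecidableEq G]
    (H : AddSubgroup G) [Fintype H] (m n s k lam₁ mu₁ lam₂ mu₂ : ℕ)
    (hG : Fintype.card G = m * n) (hH : Fintype.card H = n)
    {ι : Type*} [Fintype ι] [DecidableEq ι] (A : ι → Finset G)
    (hpart : ∀ x : G, (∃ i, x ∈ A i) ↔ x ∉ H)
    (hD : IsDPDF G (m * n) s k lam₁ mu₁ A)
    (hE : IsEPDF G (m * n) s k lam₂ mu₂ A) :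
    n ∣ mu₁ ∧ n ∣ mu₂ := by
  classical
  obtain ⟨-, hs, hk, -, hdisj, hDl, hDm⟩ := hD
  obtain ⟨-, -, -, -, -, hEl, hEm⟩ := hE
  have hn1 : 1 ≤ n := by
    rw [← hH]; exact Fintype.card_pos
  -- the union of the A i is the complement of H
  have hbiU : (Finset.univ.biUnion A) = Finset.univ.filter (fun g : G => ¬ g ∈ H) := by
    ext x
    simp only [Finset.mem_biUnion, Finset.mem_filter, Finset.mem_univ, true_and]
    exact Iff.trans (by simp) (hpart x)
  have hNcard : (Finset.univ.filter (fun g : G => ¬ g ∈ H)).card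
      = Fintype.card G - Fintype.card H := by
    have hHcard : (Finset.univ.filter (fun g : G => g ∈ H)).card = Fintype.card H :=
      (Fintype.card_of_subtype _ (fun x => by simp)).symm
    have := Finset.card_filter_add_card_filter_not
      (s := (Finset.univ : Finset G)) (fun g : G => g ∈ H)
    rw [Finset.card_univ] at this
    omega
  have hsk : s * k = Fintype.card G - Fintype.card H := by
    rw [← hNcard, ← hbiU, Finset.card_biUnion (fun i _ j _ hij => hdisj i j hij)]
    simp [hk, hs, mul_comm]
  have hndvd : n ∣ s * k := by
    rw [hsk, hG, hH]
    exact Nat.dvd_sub (dvd_mul_left n m) dvd_rfl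
  have cop : Nat.Coprime n (n - 1) := by
    obtain ⟨n', rfl⟩ : ∃ n', n = n' + 1 := ⟨n - 1, by omega⟩
    simp only [Nat.add_sub_cancel]
    unfold Nat.Coprime
    rw [add_comm, Nat.gcd_add_self_left, Nat.gcd_one_left]
  have key : ∀ mu : ℕ, n ∣ (n - 1) * mu → n ∣ mu := fun mu h =>
    cop.dvd_of_dvd_mul_left h
  constructor
  · -- DPDF case
    have hI0 : (IntFam A).count (0 : G) = 0 := by
      rw [IntFam, Multiset.count_sum']
      exact Finset.sum_eq_zero (fun i _ => dInt_count_zero (A i))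
    have hcard : Multiset.card (IntFam A)
        = (Fintype.card G - Fintype.card H) * lam₁ + (Fintype.card H - 1) * mu₁ :=
      count_sum_card H A hpart _ _ _ hI0 hDl hDm
    have hcard2 : Multiset.card (IntFam A) = (s * k) * (k - 1) := by
      rw [IntFam, multiset_card_finset_sum]
      rw [Finset.sum_congr rfl (fun i _ => (dInt_card (A i)).trans (by rw [hk]))]
      rw [Finset.sum_const, Finset.card_univ, hs, smul_eq_mul]
      cases k with
      | zero => simp
      | succ k' =>
        rw [Nat.succ_sub_one]
        have hkk : (k' + 1) * (k' + 1) - (k' + 1) = (k' + 1) * k' := by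
          rw [Nat.mul_succ]; omega
        rw [hkk]; ring
    have hdvd1 : n ∣ (Fintype.card H - 1) * mu₁ := by
      have h1 : n ∣ Multiset.card (IntFam A) := by
        rw [hcard2]; exact Dvd.dvd.mul_right hndvd _
      have h2 : n ∣ (Fintype.card G - Fintype.card H) * lam₁ := by
        rw [← hsk]; exact Dvd.dvd.mul_right hndvd _
      rw [hcard] at h1
      exact (Nat.dvd_add_right h2).mp h1
    rw [hH] at hdvd1
    exact key mu₁ hdvd1
  · -- EPDF case
    have hE0 : (ExtFam A).count (0 : G) = 0 := by
      rw [ExtFam, Multiset.count_sum']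
      refine Finset.sum_eq_zero (fun i _ => ?_)
      rw [Multiset.count_sum']
      refine Finset.sum_eq_zero (fun j hj => ?_)
      exact dExt_count_zero _ _ (hdisj i j (Finset.ne_of_mem_erase hj).symm)
    have hcard : Multiset.card (ExtFam A)
        = (Fintype.card G - Fintype.card H) * lam₂ + (Fintype.card H - 1) * mu₂ :=
      count_sum_card H A hpart _ _ _ hE0 hEl hEm
    have hcard2 : Multiset.card (ExtFam A) = (s * k) * ((s - 1) * k) := by
      have inner : ∀ i, Multiset.card (∑ j ∈ Finset.univ.erase i, dExt (A i) (A j))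
          = (s - 1) * (k * k) := fun i => by
        rw [multiset_card_finset_sum,
          Finset.sum_congr rfl (fun j _ => (dExt_card (A i) (A j)).trans (by rw [hk, hk])),
          Finset.sum_const, smul_eq_mul, Finset.card_erase_of_mem (Finset.mem_univ i),
          Finset.card_univ, hs]
      rw [ExtFam, multiset_card_finset_sum, Finset.sum_congr rfl (fun i _ => inner i),
        Finset.sum_const, Finset.card_univ, hs, smul_eq_mul]
      generalize s - 1 = a
      ring
    have hdvd1 : n ∣ (Fintype.card H - 1) * mu₂ := by
      have h1 : n ∣ Multiset.card (ExtFam A) := by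
        rw [hcard2]; exact Dvd.dvd.mul_right hndvd _
      have h2 : n ∣ (Fintype.card G - Fintype.card H) * lam₂ := by
        rw [← hsk]; exact Dvd.dvd.mul_right hndvd _
      rw [hcard] at h1
      exact (Nat.dvd_add_right h2).mp h1
    rw [hH] at hdvd1
    exact key mu₂ hdvd1
end

section
/- Let m > 3 be an odd integer, G = ℤ_{2m}, H = {0, m}, and for 1 ≤ i ≤ 2m−1 let S_i = {i, m−i, m+i, 2m−i} ⊆ ℤ_{2m}. Then: (a) each S_i with 1 ≤ i ≤ (m−1)/2 has exactly 4 elements and the sets S₁, …, S_{(m−1)/2} partition G∖H; (b) for 1 ≤ i ≤ (m−1)/2, the multiset Δ(S_i) equals 4 copies of {m} together with 2 copies of the set S_{2i}; (c) for 1 ≤ i ≠ j ≤ (m−1)/2, the multiset Δ(S_i, S_j) equals 2 copies of the set S_{i−j} together with 2 copies of the set S_{i+j} (indices taken modulo 2m, and noting S_i = S_{m−i} = S_{m+i} = S_{2m−i}). -/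
open Finset

/-- The set `S_x = {x, m−x, m+x, 2m−x}` in `ℤ_{2m}` (note `2m−x = −x`). -/
def Sfam (m : ℕ) (x : ZMod (2 * m)) : Finset (ZMod (2 * m)) :=
  {x, (m : ZMod (2 * m)) - x, (m : ZMod (2 * m)) + x, -x}

/-!
`Sfam m x` is the orbit of `x` under the Klein four-group generated by `z ↦ -z` and
`z ↦ m + z`, where `m` has order two in `ℤ_{2m}`. In any abelian group with an element `μ` of
order two, the differences between the orbits `{±x, μ ± x}` and `{±y, μ ± y}` are the values
`±(x ± y)` and `μ ± (x ± y)`, each taken twice, and the internal differences of one orbit are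
`μ` four times and `±2x, μ ± 2x` twice each; these counts are exact as soon as every orbit
involved has four elements, i.e. `2x ∉ {0, μ}`. In `ℤ_{2m}` the class of an integer `k` lies in
`H = {0, m}` iff `m ∣ k`, so for odd `m` the orbit of `k` has four elements iff `m ∤ k`, which
holds for `k = i, 2i, i ± j` when `1 ≤ i ≠ j ≤ (m - 1)/2`. Reducing `k` modulo `m` into
`(-m/2, m/2)` gives the partition of `G ∖ H`.
-/

section Differences

variable {G : Type*} [AddGroup G]

theorem dExt_eq_of_val_eq {D E : Finset G} {a b c d e f g h : G} (hD : D.val = ↑[a, b, c, d])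
    (hE : E.val = ↑[e, f, g, h]) :
    dExt D E = ↑[a - e, a - f, a - g, a - h, b - e, b - f, b - g, b - h,
      c - e, c - f, c - g, c - h, d - e, d - f, d - g, d - h] := by
  simp only [dExt, product_val, hD, hE, Multiset.coe_product, Multiset.map_coe]
  rfl

theorem dInt_eq_of_val_eq [DecidableEq G] {D : Finset G} {a b c d : G}
    (hD : D.val = ↑[a, b, c, d]) :
    dInt D = ↑[a - b, a - c, a - d, b - a, b - c, b - d,
      c - a, c - b, c - d, d - a, d - b, d - c] := by
  have hnd := D.nodup
  rw [hD, Multiset.coe_nodup] at hnd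
  simp only [List.nodup_cons, List.mem_cons, List.not_mem_nil, not_or] at hnd
  obtain ⟨⟨hab, hac, had, -⟩, ⟨hbc, hbd, -⟩, ⟨hcd, -⟩, -⟩ := hnd
  simp only [dInt, filter_val, product_val, hD, Multiset.coe_product, Multiset.filter_coe,
    Multiset.map_coe]
  simp [hab, hac, had, hbc, hbd, hcd, Ne.symm hab, Ne.symm hac, Ne.symm had, Ne.symm hbc,
    Ne.symm hbd, Ne.symm hcd]

end Differences

section NegShiftOrbit

variable {G : Type*} [AddCommGroup G] [DecidableEq G] {μ x y : G}

def negShiftOrbit (μ x : G) : Finset G := {x, μ - x, μ + x, -x}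

theorem mem_negShiftOrbit :
    y ∈ negShiftOrbit μ x ↔ y - x ∈ ({0, μ} : Finset G) ∨ y + x ∈ ({0, μ} : Finset G) := by
  simp only [negShiftOrbit, mem_insert, mem_singleton, sub_eq_iff_eq_add, zero_add,
    add_eq_zero_iff_eq_neg, eq_sub_iff_add_eq, add_comm μ x]
  tauto

theorem negShiftOrbit_val (hμ : μ ≠ 0) (hμμ : μ + μ = 0) (hx : x + x ∉ ({0, μ} : Finset G)) :
    (negShiftOrbit μ x).val = ↑[x, μ - x, μ + x, -x] := by
  simp only [mem_insert, mem_singleton, not_or] at hx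
  obtain ⟨hx0, hxμ⟩ := hx
  have hnd : [x, μ - x, μ + x, -x].Nodup := by
    simp only [List.nodup_cons, List.mem_cons, List.not_mem_nil, not_or, List.nodup_nil]
    refine ⟨⟨fun h => hxμ ?_, fun h => hμ ?_, fun h => hx0 ?_, ?_⟩,
      ⟨fun h => hx0 ?_, fun h => hμ ?_, ?_⟩, ⟨fun h => hxμ ?_, ?_⟩, ?_, trivial⟩
    all_goals first
      | trivial
      | linear_combination (norm := module) h
      | linear_combination (norm := module) -h
      | linear_combination (norm := module) h - hμμ
  rw [show negShiftOrbit μ x = [x, μ - x, μ + x, -x].toFinset by simp [negShiftOrbit],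
    List.toFinset_val, hnd.dedup]

theorem card_negShiftOrbit (hμ : μ ≠ 0) (hμμ : μ + μ = 0) (hx : x + x ∉ ({0, μ} : Finset G)) :
    (negShiftOrbit μ x).card = 4 := by
  rw [card_def, negShiftOrbit_val hμ hμμ hx]
  rfl

theorem dInt_negShiftOrbit (hμ : μ ≠ 0) (hμμ : μ + μ = 0) (hx : x + x ∉ ({0, μ} : Finset G))
    (hx2 : (x + x) + (x + x) ∉ ({0, μ} : Finset G)) :
    dInt (negShiftOrbit μ x) = Multiset.replicate 4 μ + 2 • (negShiftOrbit μ (x + x)).val := by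
  rw [dInt_eq_of_val_eq (negShiftOrbit_val hμ hμμ hx), negShiftOrbit_val hμ hμμ hx2]
  calc (↑[x - (μ - x), x - (μ + x), x - -x, μ - x - x, μ - x - (μ + x), μ - x - -x,
          μ + x - x, μ + x - (μ - x), μ + x - -x, -x - x, -x - (μ - x), -x - (μ + x)] :
            Multiset G)
      = ↑[μ + (x + x), μ, x + x, μ - (x + x), -(x + x), μ,
          μ, x + x, μ + (x + x), -(x + x), μ, μ - (x + x)] := by
        congr 1
        repeat' apply congrArg₂ List.cons
        all_goals first
          | rfl
          | module
          | linear_combination (norm := module) hμμ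
          | linear_combination (norm := module) -hμμ
    _ = _ := by
        simp only [two_nsmul, Multiset.replicate_succ, Multiset.replicate_zero,
          ← Multiset.singleton_add, ← Multiset.cons_coe, Multiset.coe_nil]
        abel

theorem dExt_negShiftOrbit (hμ : μ ≠ 0) (hμμ : μ + μ = 0) (hx : x + x ∉ ({0, μ} : Finset G))
    (hy : y + y ∉ ({0, μ} : Finset G)) (hsub : (x - y) + (x - y) ∉ ({0, μ} : Finset G))
    (hadd : (x + y) + (x + y) ∉ ({0, μ} : Finset G)) :
    dExt (negShiftOrbit μ x) (negShiftOrbit μ y) =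
      2 • (negShiftOrbit μ (x - y)).val + 2 • (negShiftOrbit μ (x + y)).val := by
  rw [dExt_eq_of_val_eq (negShiftOrbit_val hμ hμμ hx) (negShiftOrbit_val hμ hμμ hy),
    negShiftOrbit_val hμ hμμ hsub, negShiftOrbit_val hμ hμμ hadd]
  calc (↑[x - y, x - (μ - y), x - (μ + y), x - -y, μ - x - y, μ - x - (μ - y),
          μ - x - (μ + y), μ - x - -y, μ + x - y, μ + x - (μ - y), μ + x - (μ + y),
          μ + x - -y, -x - y, -x - (μ - y), -x - (μ + y), -x - -y] : Multiset G)
      = ↑[x - y, μ + (x + y), μ + (x - y), x + y, μ - (x + y), -(x - y), -(x + y),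
          μ - (x - y), μ + (x - y), x + y, x - y, μ + (x + y), -(x + y),
          μ - (x - y), μ - (x + y), -(x - y)] := by
        congr 1
        repeat' apply congrArg₂ List.cons
        all_goals first
          | rfl
          | module
          | linear_combination (norm := module) hμμ
          | linear_combination (norm := module) -hμμ
    _ = _ := by
        simp only [two_nsmul, ← Multiset.singleton_add, ← Multiset.cons_coe, Multiset.coe_nil]
        abel

end NegShiftOrbit

namespace ZMod

variable {m : ℕ}

theorem intCast_mem_pair_iff_dvd (k : ℤ) :
    (k : ZMod (2 * m)) ∈ ({0, (m : ZMod (2 * m))} : Finset _) ↔ (m : ℤ) ∣ k := by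
  rw [mem_insert, mem_singleton, intCast_zmod_eq_zero_iff_dvd, ← Int.cast_natCast m,
    intCast_eq_intCast_iff_dvd_sub]
  push_cast
  constructor
  · rintro (h | h)
    · exact (dvd_mul_left _ _).trans h
    · simpa using dvd_sub (dvd_refl (m : ℤ)) ((dvd_mul_left _ _).trans h)
  · rintro ⟨q, rfl⟩
    rcases Int.even_or_odd' q with ⟨t, rfl | rfl⟩
    · exact Or.inl ⟨t, by ring⟩
    · exact Or.inr ⟨-t, by ring⟩

theorem natCast_self_ne_zero (hm : m ≠ 0) : (m : ZMod (2 * m)) ≠ 0 := by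
  rw [Ne, natCast_eq_zero_iff]
  intro h
  have := Nat.le_of_dvd (Nat.pos_of_ne_zero hm) h
  omega

theorem natCast_self_add_self : (m : ZMod (2 * m)) + m = 0 := by
  rw [← Nat.cast_add, ← two_mul, natCast_self]

theorem add_self_notMem_pair (hodd : Odd m) {k : ℤ} (hk0 : k ≠ 0) (hlo : -(m : ℤ) < k)
    (hhi : k < m) {x : ZMod (2 * m)} (hx : (k : ZMod (2 * m)) = x) :
    x + x ∉ ({0, (m : ZMod (2 * m))} : Finset _) := by
  rw [← hx, ← Int.cast_add, intCast_mem_pair_iff_dvd, ← mul_two]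
  intro h
  have hcop : IsCoprime (m : ℤ) 2 :=
    Nat.isCoprime_iff_coprime.mpr (Nat.coprime_two_right.mpr hodd)
  exact hk0 (Int.eq_zero_of_abs_lt_dvd (hcop.dvd_of_dvd_mul_right h) (abs_lt.mpr ⟨hlo, hhi⟩))

end ZMod

section Sfam

variable {m : ℕ}

theorem Sfam_eq_negShiftOrbit (x : ZMod (2 * m)) :
    Sfam m x = negShiftOrbit (m : ZMod (2 * m)) x :=
  rfl

theorem intCast_mem_Sfam_iff (k a : ℤ) :
    (k : ZMod (2 * m)) ∈ Sfam m a ↔ (m : ℤ) ∣ k - a ∨ (m : ℤ) ∣ k + a := by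
  rw [Sfam_eq_negShiftOrbit, mem_negShiftOrbit, ← Int.cast_sub, ← Int.cast_add,
    ZMod.intCast_mem_pair_iff_dvd, ZMod.intCast_mem_pair_iff_dvd]

theorem card_Sfam (hodd : Odd m) {i : ℕ} (hi : 0 < i) (him : i < m) :
    (Sfam m i).card = 4 :=
  card_negShiftOrbit (ZMod.natCast_self_ne_zero hodd.pos.ne') ZMod.natCast_self_add_self
    (ZMod.add_self_notMem_pair hodd (k := i) (by omega) (by omega) (by omega) (by simp))

theorem disjoint_Sfam {i j : ℕ} (hi : 0 < i) (hj : 0 < j) (hij : i ≠ j) (hijm : i + j < m) :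
    Disjoint (Sfam m i) (Sfam m j) := by
  rw [disjoint_left]
  intro z hzi hzj
  obtain ⟨k, rfl⟩ := ZMod.intCast_surjective z
  rw [← Int.cast_natCast i, intCast_mem_Sfam_iff] at hzi
  rw [← Int.cast_natCast j, intCast_mem_Sfam_iff] at hzj
  have hdvd : (m : ℤ) ∣ i - j ∨ (m : ℤ) ∣ i + j := by
    rcases hzi with h₁ | h₁ <;> rcases hzj with h₂ | h₂
    · exact Or.inl (by rw [show (i - j : ℤ) = (k - j) - (k - i) by ring]; exact dvd_sub h₂ h₁)
    · exact Or.inr (by rw [show (i + j : ℤ) = (k + j) - (k - i) by ring]; exact dvd_sub h₂ h₁)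
    · exact Or.inr (by rw [show (i + j : ℤ) = (k + i) - (k - j) by ring]; exact dvd_sub h₁ h₂)
    · exact Or.inl (by rw [show (i - j : ℤ) = (k + i) - (k + j) by ring]; exact dvd_sub h₁ h₂)
  rcases hdvd with h | h <;>
    have := Int.eq_zero_of_abs_lt_dvd h (abs_lt.mpr ⟨by omega, by omega⟩) <;> omega

theorem ne_zero_and_ne_iff_exists_mem_Sfam (hodd : Odd m) (x : ZMod (2 * m)) :
    (x ≠ 0 ∧ x ≠ (m : ZMod (2 * m))) ↔
      ∃ i : ℕ, 1 ≤ i ∧ i ≤ (m - 1) / 2 ∧ x ∈ Sfam m (i : ZMod (2 * m)) := by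
  obtain ⟨t, ht⟩ := hodd
  obtain ⟨k, rfl⟩ := ZMod.intCast_surjective x
  have hnotH : ((k : ZMod (2 * m)) ≠ 0 ∧ (k : ZMod (2 * m)) ≠ m) ↔ ¬ (m : ℤ) ∣ k := by
    rw [← ZMod.intCast_mem_pair_iff_dvd]
    simp
  rw [hnotH]
  simp only [← Int.cast_natCast (R := ZMod (2 * m)), intCast_mem_Sfam_iff]
  constructor
  · intro hk
    obtain ⟨r, hr⟩ : ∃ r : ℕ, (r : ℤ) = k % m :=
      ⟨_, Int.toNat_of_nonneg (Int.emod_nonneg k (by omega))⟩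
    have hrm : k % m < m := Int.emod_lt_of_pos k (by omega)
    have hk_sub : (m : ℤ) ∣ k - r := hr ▸ Int.dvd_self_sub_emod
    have hr0 : r ≠ 0 := by
      rintro rfl
      exact hk (by simpa using hk_sub)
    by_cases hrt : r ≤ t
    · exact ⟨r, by omega, by omega, Or.inl hk_sub⟩
    · refine ⟨m - r, by omega, by omega, Or.inr ?_⟩
      rw [show k + ((m - r : ℕ) : ℤ) = (k - r) + m by omega]
      exact dvd_add hk_sub dvd_rfl
  · rintro ⟨i, hi, hit, hki | hki⟩ hk
    · have := Int.eq_zero_of_abs_lt_dvd (by simpa using dvd_sub hk hki)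
        (abs_lt.mpr ⟨by omega, by omega⟩)
      omega
    · have := Int.eq_zero_of_abs_lt_dvd (by simpa using dvd_sub hki hk)
        (abs_lt.mpr ⟨by omega, by omega⟩)
      omega

theorem dInt_Sfam (hodd : Odd m) {i : ℕ} (hi : 0 < i) (him : 2 * i < m) :
    dInt (Sfam m i) =
      Multiset.replicate 4 (m : ZMod (2 * m)) + 2 • (Sfam m ((2 * i : ℕ))).val := by
  rw [show ((2 * i : ℕ) : ZMod (2 * m)) = i + i by push_cast; ring]
  exact dInt_negShiftOrbit (ZMod.natCast_self_ne_zero hodd.pos.ne') ZMod.natCast_self_add_self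
    (ZMod.add_self_notMem_pair hodd (k := i) (by omega) (by omega) (by omega) (by simp))
    (ZMod.add_self_notMem_pair hodd (k := 2 * i) (by omega) (by omega) (by omega)
      (by push_cast; ring))

theorem dExt_Sfam (hodd : Odd m) {i j : ℕ} (hi : 0 < i) (hj : 0 < j) (hij : i ≠ j)
    (hijm : i + j < m) :
    dExt (Sfam m i) (Sfam m j) =
      2 • (Sfam m ((i : ZMod (2 * m)) - j)).val + 2 • (Sfam m ((i : ZMod (2 * m)) + j)).val :=
  dExt_negShiftOrbit (ZMod.natCast_self_ne_zero hodd.pos.ne') ZMod.natCast_self_add_self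
    (ZMod.add_self_notMem_pair hodd (k := i) (by omega) (by omega) (by omega) (by simp))
    (ZMod.add_self_notMem_pair hodd (k := j) (by omega) (by omega) (by omega) (by simp))
    (ZMod.add_self_notMem_pair hodd (k := i - j) (by omega) (by omega) (by omega)
      (by push_cast; ring))
    (ZMod.add_self_notMem_pair hodd (k := i + j) (by omega) (by omega) (by omega)
      (by push_cast; ring))

end Sfam

theorem Sfam_properties_general (m : ℕ) (hodd : Odd m) :
    (∀ i : ℕ, 1 ≤ i → i ≤ (m - 1) / 2 → (Sfam m (i : ZMod (2 * m))).card = 4) ∧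
    (∀ i j : ℕ, 1 ≤ i → i ≤ (m - 1) / 2 → 1 ≤ j → j ≤ (m - 1) / 2 → i ≠ j →
      Disjoint (Sfam m (i : ZMod (2 * m))) (Sfam m (j : ZMod (2 * m)))) ∧
    (∀ x : ZMod (2 * m), (x ≠ 0 ∧ x ≠ (m : ZMod (2 * m))) ↔
      ∃ i : ℕ, 1 ≤ i ∧ i ≤ (m - 1) / 2 ∧ x ∈ Sfam m (i : ZMod (2 * m))) ∧
    (∀ i : ℕ, 1 ≤ i → i ≤ (m - 1) / 2 →
      dInt (Sfam m (i : ZMod (2 * m))) =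
        Multiset.replicate 4 ((m : ZMod (2 * m))) + 2 • (Sfam m ((2 * i : ℕ) : ZMod (2 * m))).val) ∧
    (∀ i j : ℕ, 1 ≤ i → i ≤ (m - 1) / 2 → 1 ≤ j → j ≤ (m - 1) / 2 → i ≠ j →
      dExt (Sfam m (i : ZMod (2 * m))) (Sfam m (j : ZMod (2 * m))) =
        2 • (Sfam m ((i : ZMod (2 * m)) - (j : ZMod (2 * m)))).val +
        2 • (Sfam m ((i : ZMod (2 * m)) + (j : ZMod (2 * m)))).val) :=
  ⟨fun _ hi him => card_Sfam hodd (by omega) (by omega),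
    fun _ _ hi him hj hjm hij => disjoint_Sfam (by omega) (by omega) hij (by omega),
    ne_zero_and_ne_iff_exists_mem_Sfam hodd,
    fun _ hi him => dInt_Sfam hodd (by omega) (by omega),
    fun _ _ hi him hj hjm hij => dExt_Sfam hodd (by omega) (by omega) hij (by omega)⟩

/-- for odd `m > 3`, in `G = ℤ_{2m}` with `H = {0, m}` and
`S_i = {i, m−i, m+i, 2m−i}`: (a) each `S_i` (`1 ≤ i ≤ (m−1)/2`) has 4 elements and
`S_1, …, S_{(m−1)/2}` partition `G∖H`; (b) `Δ(S_i) = 4·{m} ∪ 2·S_{2i}`;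
(c) for `i ≠ j`, `Δ(S_i, S_j) = 2·S_{i−j} ∪ 2·S_{i+j}` (indices mod `2m`). -/
theorem Sfam_properties (m : ℕ) (hm : 3 < m) (hodd : Odd m) :
    (∀ i : ℕ, 1 ≤ i → i ≤ (m - 1) / 2 → (Sfam m (i : ZMod (2 * m))).card = 4) ∧
    (∀ i j : ℕ, 1 ≤ i → i ≤ (m - 1) / 2 → 1 ≤ j → j ≤ (m - 1) / 2 → i ≠ j →
      Disjoint (Sfam m (i : ZMod (2 * m))) (Sfam m (j : ZMod (2 * m)))) ∧
    (∀ x : ZMod (2 * m), (x ≠ 0 ∧ x ≠ (m : ZMod (2 * m))) ↔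
      ∃ i : ℕ, 1 ≤ i ∧ i ≤ (m - 1) / 2 ∧ x ∈ Sfam m (i : ZMod (2 * m))) ∧
    (∀ i : ℕ, 1 ≤ i → i ≤ (m - 1) / 2 →
      dInt (Sfam m (i : ZMod (2 * m))) =
        Multiset.replicate 4 ((m : ZMod (2 * m))) + 2 • (Sfam m ((2 * i : ℕ) : ZMod (2 * m))).val) ∧
    (∀ i j : ℕ, 1 ≤ i → i ≤ (m - 1) / 2 → 1 ≤ j → j ≤ (m - 1) / 2 → i ≠ j →
      dExt (Sfam m (i : ZMod (2 * m))) (Sfam m (j : ZMod (2 * m))) =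
        2 • (Sfam m ((i : ZMod (2 * m)) - (j : ZMod (2 * m)))).val +
        2 • (Sfam m ((i : ZMod (2 * m)) + (j : ZMod (2 * m)))).val) :=
  Sfam_properties_general m hodd
end

section
/- Let m > 3 be an odd integer, G = ℤ_{2m} and H = {0, m} ≤ G. The family S′ = {S_i : 1 ≤ i ≤ (m−1)/2}, where S_i = {i, m−i, m+i, 2m−i}, is a (2m, (m−1)/2, 4, 2, 2m−2)-DPDF and a (2m, (m−1)/2, 4, 2m−6, 0)-EPDF in G whose sets partition G∖H. -/
open Finset

set_option linter.unusedSectionVars false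
set_option linter.unusedVariables false
set_option linter.unusedSectionVars false

section Basic
variable {m : ℕ} (hm : 3 < m) (hodd : Odd m) [NeZero (2 * m)]

private lemma zzMM : ((m : ZMod (2*m)) + m) = 0 := by
  have : (((m + m : ℕ)) : ZMod (2*m)) = 0 := by
    rw [show m + m = 2*m by ring, ZMod.natCast_self]
  push_cast at this; linear_combination this

private lemma zz_cast_inj {a b : ℕ} (ha : a < 2*m) (hb : b < 2*m) :
    ((a : ZMod (2*m)) = b) ↔ a = b := by
  constructor
  · intro h
    have := congrArg ZMod.val h
    rwa [ZMod.val_natCast_of_lt ha, ZMod.val_natCast_of_lt hb] at this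
  · rintro rfl; rfl

private lemma zz_val_cast (z : ZMod (2*m)) : ((z.val : ℕ) : ZMod (2*m)) = z := by
  simp [ZMod.natCast_val, ZMod.cast_id]

private lemma zz_two_mul_eq_zero_iff (z : ZMod (2*m)) :
    2 * z = 0 ↔ z = 0 ∨ z = (m : ZMod (2*m)) := by
  constructor
  · intro h
    have h2 : (((2 * z.val : ℕ)) : ZMod (2*m)) = 0 := by
      push_cast [zz_val_cast]; linear_combination h
    rw [ZMod.natCast_eq_zero_iff] at h2
    have hv : z.val < 2*m := ZMod.val_lt z
    have hmd : m ∣ z.val := by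
      rcases h2 with ⟨k, hk⟩
      refine ⟨k, ?_⟩
      have h3 : 2*(m*k) = (2*m)*k := by ring
      omega
    have : z.val = 0 ∨ z.val = m := by
      obtain ⟨k, hk⟩ := hmd
      have hk2 : k < 2 := by
        by_contra hc
        push_neg at hc
        have : m * 2 ≤ m * k := Nat.mul_le_mul_left m hc
        have hmpos : 0 < m := by
          have := (NeZero.pos (2*m)); omega
        omega
      interval_cases k <;> omega
    rcases this with h0 | h0
    · left; rw [← zz_val_cast z, h0, Nat.cast_zero]
    · right; rw [← zz_val_cast z, h0]
  · rintro (rfl | rfl)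
    · ring
    · linear_combination (zzMM (m := m))

include hodd in
private lemma zz_two_mul_ne_M (z : ZMod (2*m)) : 2 * z ≠ (m : ZMod (2*m)) := by
  intro h
  have h2 : (((2 * z.val : ℕ)) : ZMod (2*m)) = ((m : ℕ) : ZMod (2*m)) := by
    push_cast [zz_val_cast]; linear_combination h
  rw [ZMod.natCast_eq_natCast_iff] at h2
  have := h2.dvd
  obtain ⟨k, hk⟩ := this
  push_cast at hk
  obtain ⟨t, ht⟩ := hodd
  have h2d : (2:ℤ) ∣ (m:ℤ) := ⟨m*k + z.val, by linarith⟩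
  obtain ⟨u, hu⟩ := h2d
  omega

end Basic

section SfamLemmas
variable {m : ℕ} (hm : 3 < m) (hodd : Odd m) [NeZero (2 * m)]

include hm in
private lemma zz_mem_Sfam (α x : ZMod (2*m)) :
    x ∈ Sfam m α ↔ 2*(x - α) = 0 ∨ 2*(x + α) = 0 := by
  simp only [Sfam, mem_insert, mem_singleton]
  rw [zz_two_mul_eq_zero_iff, zz_two_mul_eq_zero_iff]
  constructor
  · rintro (rfl | rfl | rfl | rfl)
    · exact Or.inl (Or.inl (by ring))
    · exact Or.inr (Or.inr (by ring))
    · exact Or.inl (Or.inr (by ring))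
    · exact Or.inr (Or.inl (by ring))
  · rintro ((h | h) | (h | h))
    · exact Or.inl (by linear_combination h)
    · exact Or.inr (Or.inr (Or.inl (by linear_combination h)))
    · exact Or.inr (Or.inr (Or.inr (by linear_combination h)))
    · exact Or.inr (Or.inl (by linear_combination h))

include hm in
private lemma zz_Sfam_add_M (α x : ZMod (2*m)) (h : x ∈ Sfam m α) :
    (m : ZMod (2*m)) + x ∈ Sfam m α := by
  rw [zz_mem_Sfam hm] at h ⊢
  have hmm := zzMM (m := m)
  rcases h with h | h
  · exact Or.inl (by linear_combination h + hmm)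
  · exact Or.inr (by linear_combination h + hmm)

include hm in
private lemma zz_same_class (α x y : ZMod (2*m)) (hx : x ∈ Sfam m α) (hy : y ∈ Sfam m α) :
    2*(x - y) = 0 ∨ 2*(x + y) = 0 := by
  rw [zz_mem_Sfam hm] at hx hy
  rcases hx with h | h <;> rcases hy with h' | h'
  · exact Or.inl (by linear_combination h - h')
  · exact Or.inr (by linear_combination h + h')
  · exact Or.inr (by linear_combination h + h')
  · exact Or.inl (by linear_combination h - h')

include hm in
private lemma zz_class_mem (α x y : ZMod (2*m)) (hx : x ∈ Sfam m α)
    (h : 2*(x - y) = 0 ∨ 2*(x + y) = 0) : y ∈ Sfam m α := by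
  rw [zz_mem_Sfam hm] at hx ⊢
  rcases hx with h' | h' <;> rcases h with h | h
  · exact Or.inl (by linear_combination h' - h)
  · exact Or.inr (by linear_combination h - h')
  · exact Or.inr (by linear_combination h' - h)
  · exact Or.inl (by linear_combination h - h')

private lemma zz_two_a_ne_zero {a : ℕ} (ha : 1 ≤ a) (ha' : a ≤ (m-1)/2) :
    2 * ((a : ℕ) : ZMod (2*m)) ≠ 0 := by
  intro h
  have h2 : (((2*a : ℕ)) : ZMod (2*m)) = ((0:ℕ) : ZMod (2*m)) := by push_cast; linear_combination h
  rw [zz_cast_inj (by omega) (by omega)] at h2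
  omega

include hodd in
private lemma zz_uniq {a b : ℕ} (ha : 1 ≤ a) (ha' : a ≤ (m-1)/2) (hb : 1 ≤ b) (hb' : b ≤ (m-1)/2)
    (h : 2*((a : ZMod (2*m)) - b) = 0 ∨ 2*((a : ZMod (2*m)) + b) = 0) : a = b := by
  obtain ⟨t, ht⟩ := hodd
  rcases h with h | h
  · have h2 : (((2*a : ℕ)) : ZMod (2*m)) = ((2*b : ℕ) : ZMod (2*m)) := by
      push_cast; linear_combination h
    rw [zz_cast_inj (by omega) (by omega)] at h2
    omega
  · have h2 : (((2*a + 2*b : ℕ)) : ZMod (2*m)) = ((0 : ℕ) : ZMod (2*m)) := by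
      push_cast; linear_combination h
    rw [zz_cast_inj (by omega) (by omega)] at h2
    omega

include hm hodd in
private lemma zz_exists_mem {x : ZMod (2*m)} (hx0 : x ≠ 0) (hxm : x ≠ (m : ZMod (2*m))) :
    ∃ a : ℕ, 1 ≤ a ∧ a ≤ (m-1)/2 ∧ x ∈ Sfam m ((a : ℕ) : ZMod (2*m)) := by
  obtain ⟨t, ht⟩ := hodd
  set n := x.val with hn
  have hnlt : n < 2*m := ZMod.val_lt x
  have hxn : ((n : ℕ) : ZMod (2*m)) = x := zz_val_cast x
  have hn0 : n ≠ 0 := by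
    intro h; apply hx0; rw [← hxn, h, Nat.cast_zero]
  have hnm : n ≠ m := by
    intro h; apply hxm; rw [← hxn, h]
  set r := n % m with hr
  have hmpos : 0 < m := by omega
  have hrlt : r < m := Nat.mod_lt _ hmpos
  have hdm : m * (n / m) + r = n := Nat.div_add_mod n m
  have hq2 : n / m < 2 := (Nat.div_lt_iff_lt_mul hmpos).mpr (by omega)
  have hcase : n = r ∨ n = m + r := by
    have hq01 : n / m = 0 ∨ n / m = 1 := by generalize n / m = q at hq2 ⊢; omega
    rcases hq01 with h | h <;> rw [h] at hdm <;> simp at hdm <;> omega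
  have hr0 : r ≠ 0 := by intro h; omega
  by_cases hc : r ≤ (m-1)/2
  · refine ⟨r, by omega, hc, ?_⟩
    rw [zz_mem_Sfam hm]
    rcases hcase with h' | h'
    · left
      have hx' : x = ((r : ℕ) : ZMod (2*m)) := by rw [← hxn]; congr 1
      rw [hx']; ring
    · left
      have hx' : x = (((m + r : ℕ)) : ZMod (2*m)) := by rw [← hxn]; congr 1
      rw [hx']; push_cast
      linear_combination (zzMM (m := m))
  · refine ⟨m - r, by omega, by omega, ?_⟩
    rw [zz_mem_Sfam hm]
    right
    have hcast : (((m - r : ℕ)) : ZMod (2*m)) = (m : ZMod (2*m)) - (r : ZMod (2*m)) := by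
      push_cast [Nat.cast_sub (le_of_lt hrlt)]; ring
    rcases hcase with h' | h'
    · have hx' : x = ((r : ℕ) : ZMod (2*m)) := by rw [← hxn]; congr 1
      rw [hx', hcast]; linear_combination (zzMM (m := m))
    · have hx' : x = (((m + r : ℕ)) : ZMod (2*m)) := by rw [← hxn]; congr 1
      rw [hx', hcast]; push_cast
      linear_combination 2 * (zzMM (m := m))

end SfamLemmas

section Counting

private lemma zz_count_map_finset {α β : Type*} [DecidableEq β] (s : Finset α) (f : α → β) (g : β) :
    (s.val.map f).count g = (s.filter (fun a => g = f a)).card := by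
  rw [Multiset.count_map]; rfl

private lemma zz_count_dExt {G : Type*} [AddGroup G] [DecidableEq G] (D₁ D₂ : Finset G) (g : G) :
    (dExt D₁ D₂).count g = (D₂.filter (fun y => g + y ∈ D₁)).card := by
  rw [dExt, zz_count_map_finset]
  refine Finset.card_nbij' (fun p => p.2) (fun y => (g + y, y)) ?_ ?_ ?_ ?_
  · intro p hp
    simp only [Finset.mem_coe, Finset.mem_filter, Finset.mem_product] at hp ⊢
    refine ⟨hp.1.2, ?_⟩
    have : p.1 = g + p.2 := by rw [hp.2, sub_add_cancel]
    rw [← this]; exact hp.1.1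
  · intro y hy
    simp only [Finset.mem_coe, Finset.mem_filter, Finset.mem_product] at hy ⊢
    exact ⟨⟨hy.2, hy.1⟩, (add_sub_cancel_right g y).symm⟩
  · intro p hp
    simp only [Finset.mem_coe, Finset.mem_filter, Finset.mem_product] at hp
    have : p.1 = g + p.2 := by rw [hp.2, sub_add_cancel]
    exact Prod.ext this.symm rfl
  · intro y hy; rfl

private lemma zz_count_dInt {G : Type*} [AddGroup G] [DecidableEq G] (D : Finset G) (g : G)
    (hg : g ≠ 0) :
    (dInt D).count g = (D.filter (fun y => g + y ∈ D)).card := by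
  rw [dInt, zz_count_map_finset, Finset.filter_filter]
  have hset : ((D ×ˢ D).filter fun p => p.1 ≠ p.2 ∧ g = p.1 - p.2)
      = ((D ×ˢ D).filter fun p => g = p.1 - p.2) := by
    refine Finset.filter_congr fun p _ => ?_
    constructor
    · exact fun h => h.2
    · intro h
      refine ⟨fun hne => hg ?_, h⟩
      rw [h, hne, sub_self]
    
  rw [hset]
  refine Finset.card_nbij' (fun p => p.2) (fun y => (g + y, y)) ?_ ?_ ?_ ?_
  · intro p hp
    simp only [Finset.mem_coe, Finset.mem_filter, Finset.mem_product] at hp ⊢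
    refine ⟨hp.1.2, ?_⟩
    have : p.1 = g + p.2 := by rw [hp.2, sub_add_cancel]
    rw [← this]; exact hp.1.1
  · intro y hy
    simp only [Finset.mem_coe, Finset.mem_filter, Finset.mem_product] at hy ⊢
    exact ⟨⟨hy.2, hy.1⟩, (add_sub_cancel_right g y).symm⟩
  · intro p hp
    simp only [Finset.mem_coe, Finset.mem_filter, Finset.mem_product] at hp
    have : p.1 = g + p.2 := by rw [hp.2, sub_add_cancel]
    exact Prod.ext this.symm rfl
  · intro y hy; rfl

private lemma zz_sum_filter_card {ι α : Type*} [Fintype ι] [Fintype α] [DecidableEq α]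
    (p : ι → α → Prop) [∀ i, DecidablePred (p i)] [DecidablePred (fun a => ∃ i, p i a)]
    (h : ∀ a i j, p i a → p j a → i = j) :
    ∑ i, (Finset.univ.filter (p i)).card
      = (Finset.univ.filter (fun a => ∃ i, p i a)).card := by
  simp only [Finset.card_filter]
  rw [Finset.sum_comm]
  refine Finset.sum_congr rfl fun a _ => ?_
  by_cases hx : ∃ i, p i a
  · obtain ⟨i₀, hi₀⟩ := hx
    rw [if_pos ⟨i₀, hi₀⟩, Finset.sum_eq_single i₀]
    · rw [if_pos hi₀]
    · intro b _ hb
      rw [if_neg]; intro hpb; exact hb (h a b i₀ hpb hi₀)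
    · intro habs; exact absurd (Finset.mem_univ i₀) habs
  · rw [if_neg hx]
    refine Finset.sum_eq_zero fun i _ => ?_
    rw [if_neg]; intro hp'; exact hx ⟨i, hp'⟩

end Counting

section Cards
variable {m : ℕ} (hm : 3 < m) (hodd : Odd m) [NeZero (2 * m)]

include hm in
private lemma zz_M_ne_zero : (m : ZMod (2*m)) ≠ 0 := by
  intro h
  have h2 : ((m : ℕ) : ZMod (2*m)) = ((0 : ℕ) : ZMod (2*m)) := by rw [h, Nat.cast_zero]
  rw [zz_cast_inj (by omega) (by omega)] at h2
  omega

include hm in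
private lemma zz_sol_props {g y : ZMod (2*m)} (hg : ¬ 2 * g = 0)
    (hw : 2*y + g = 0 ∨ 2*y + g = (m : ZMod (2*m))) :
    ¬ 2*y = 0 ∧ ¬ 2*(g+y) = 0 := by
  have hmm := zzMM (m := m)
  constructor
  · intro h2y
    rcases hw with h | h
    · exact hg (by linear_combination 2*h - 2*h2y)
    · exact hg (by linear_combination 2*h - 2*h2y + hmm)
  · intro h2gy
    rcases hw with h | h
    · exact hg (by linear_combination 2*h2gy - 2*h)
    · exact hg (by linear_combination 2*h2gy - 2*h - hmm)

include hm hodd in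
private lemma zz_solset_card (g : ZMod (2*m)) (hg : ¬ 2 * g = 0) :
    (Finset.univ.filter
      (fun y : ZMod (2*m) => 2*y + g = 0 ∨ 2*y + g = (m : ZMod (2*m)))).card = 2 := by
  have hmm := zzMM (m := m)
  set k : ℕ := (m+1)/2 with hk
  obtain ⟨t, ht⟩ := hodd
  have h2k : 2 * ((k : ℕ) : ZMod (2*m)) = (m : ZMod (2*m)) + 1 := by
    have : ((2*k : ℕ) : ZMod (2*m)) = ((m + 1 : ℕ) : ZMod (2*m)) := by congr 1; omega
    push_cast at this; linear_combination this
  have h2m0 : (2 : ZMod (2*m)) * (m : ZMod (2*m)) = 0 := by linear_combination hmm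
  set y₀ : ZMod (2*m) := -(k : ZMod (2*m)) * g with hy₀
  have hw₀ : 2*y₀ + g = 0 ∨ 2*y₀ + g = (m : ZMod (2*m)) := by
    have : 2*y₀ + g = -((m : ZMod (2*m)) * g) := by rw [hy₀]; linear_combination (-g) * h2k
    have hmg : (m : ZMod (2*m)) * g = 0 ∨ (m : ZMod (2*m)) * g = (m : ZMod (2*m)) := by
      apply (zz_two_mul_eq_zero_iff _).mp
      linear_combination g * h2m0
    rcases hmg with h | h
    · left; rw [this, h, neg_zero]
    · right; rw [this, h]; linear_combination -hmm
  have hset : (Finset.univ.filter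
      (fun y : ZMod (2*m) => 2*y + g = 0 ∨ 2*y + g = (m : ZMod (2*m))))
      = {y₀, y₀ + (m : ZMod (2*m))} := by
    ext y
    simp only [Finset.mem_filter, Finset.mem_univ, true_and, Finset.mem_insert,
      Finset.mem_singleton]
    constructor
    · intro hw
      have h2d : 2*(y - y₀) = 0 := by
        rcases hw with h | h <;> rcases hw₀ with h' | h'
        · linear_combination h - h'
        · exfalso; exact zz_two_mul_ne_M ⟨t, ht⟩ (y - y₀) (by linear_combination h - h' - hmm)
        · exfalso; exact zz_two_mul_ne_M ⟨t, ht⟩ (y₀ - y) (by linear_combination h' - h - hmm)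
        · linear_combination h - h'
      rcases (zz_two_mul_eq_zero_iff _).mp h2d with h | h
      · left; linear_combination h
      · right; linear_combination h
    · rintro (rfl | rfl)
      · exact hw₀
      · rcases hw₀ with h | h
        · left; linear_combination h + hmm
        · right; linear_combination h + hmm
  rw [hset]
  rw [Finset.card_insert_of_notMem, Finset.card_singleton]
  simp only [Finset.mem_singleton]
  intro h
  exact zz_M_ne_zero hm (by linear_combination -h)

include hm in
private lemma zz_pair_card (g : ZMod (2*m)) (hg : ¬ 2 * g = 0) :
    (Finset.univ.filter
      (fun y : ZMod (2*m) => ¬ 2*y = 0 ∧ ¬ 2*(g + y) = 0)).card = 2*m - 4 := by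
  have hmm := zzMM (m := m)
  have hg0 : g ≠ 0 := by rintro rfl; exact hg (by ring)
  have hgm : g ≠ (m : ZMod (2*m)) := by rintro rfl; exact hg (by linear_combination hmm)
  have hMne := zz_M_ne_zero hm
  have hcompl : (Finset.univ.filter
      (fun y : ZMod (2*m) => ¬ (¬ 2*y = 0 ∧ ¬ 2*(g + y) = 0)))
      = {0, (m : ZMod (2*m)), -g, (m : ZMod (2*m)) - g} := by
    ext y
    simp only [Finset.mem_filter, Finset.mem_univ, true_and, Finset.mem_insert,
      Finset.mem_singleton, not_and_or, not_not]
    constructor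
    · rintro (h | h)
      · rcases (zz_two_mul_eq_zero_iff _).mp h with h' | h'
        · left; exact h'
        · right; left; exact h'
      · rcases (zz_two_mul_eq_zero_iff _).mp h with h' | h'
        · right; right; left; linear_combination h'
        · right; right; right; linear_combination h'
    · rintro (rfl | rfl | rfl | rfl)
      · left; ring
      · left; linear_combination hmm
      · right; ring
      · right; linear_combination hmm
  have hn1 : (0 : ZMod (2*m)) ∉ ({(m : ZMod (2*m)), -g, (m : ZMod (2*m)) - g} : Finset (ZMod (2*m))) := by
    simp only [Finset.mem_insert, Finset.mem_singleton]
    rintro (h | h | h)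
    · exact hMne h.symm
    · exact hg0 (by linear_combination h)
    · exact hgm (by linear_combination h)
  have hn2 : (m : ZMod (2*m)) ∉ ({-g, (m : ZMod (2*m)) - g} : Finset (ZMod (2*m))) := by
    simp only [Finset.mem_insert, Finset.mem_singleton]
    rintro (h | h)
    · exact hg (by linear_combination 2*h - hmm)
    · exact hg0 (by linear_combination h)
  have hn3 : -g ∉ ({(m : ZMod (2*m)) - g} : Finset (ZMod (2*m))) := by
    simp only [Finset.mem_singleton]
    intro h; exact hMne (by linear_combination -h)
  have hc4 : ({0, (m : ZMod (2*m)), -g, (m : ZMod (2*m)) - g} : Finset (ZMod (2*m))).card = 4 := by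
    rw [Finset.card_insert_of_notMem hn1, Finset.card_insert_of_notMem hn2,
      Finset.card_insert_of_notMem hn3, Finset.card_singleton]
  have htot := Finset.card_filter_add_card_filter_not
    (s := (Finset.univ : Finset (ZMod (2*m))))
    (fun y : ZMod (2*m) => ¬ 2*y = 0 ∧ ¬ 2*(g + y) = 0)
  rw [Finset.card_univ, ZMod.card, hcompl, hc4] at htot
  omega

include hm in
private lemma zz_nH_card :
    (Finset.univ.filter (fun y : ZMod (2*m) => ¬ 2*y = 0)).card = 2*m - 2 := by
  have hmm := zzMM (m := m)
  have hMne := zz_M_ne_zero hm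
  have hcompl : (Finset.univ.filter (fun y : ZMod (2*m) => ¬ ¬ 2*y = 0))
      = {0, (m : ZMod (2*m))} := by
    ext y
    simp only [Finset.mem_filter, Finset.mem_univ, true_and, Finset.mem_insert,
      Finset.mem_singleton, not_not]
    constructor
    · intro h; exact (zz_two_mul_eq_zero_iff _).mp h
    · rintro (rfl | rfl)
      · ring
      · linear_combination hmm
  have hc2 : ({0, (m : ZMod (2*m))} : Finset (ZMod (2*m))).card = 2 := by
    rw [Finset.card_insert_of_notMem, Finset.card_singleton]
    simp only [Finset.mem_singleton]
    exact fun h => hMne h.symm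
  have htot := Finset.card_filter_add_card_filter_not
    (s := (Finset.univ : Finset (ZMod (2*m))))
    (fun y : ZMod (2*m) => ¬ 2*y = 0)
  rw [Finset.card_univ, ZMod.card, hcompl, hc2] at htot
  omega

end Cards

/-- for odd `m > 3`, the family `{S_i : 1 ≤ i ≤ (m−1)/2}` with
`S_i = {i, m−i, m+i, 2m−i}` is a `(2m,(m−1)/2,4,2,2m−2)`-DPDF and a
`(2m,(m−1)/2,4,2m−6,0)`-EPDF in `ℤ_{2m}`, whose sets partition `G∖H` for `H = {0, m}`. -/
theorem Sfam_dpdf_epdf (m : ℕ) (hm : 3 < m) (hodd : Odd m) [NeZero (2 * m)]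
    (A : Fin ((m - 1) / 2) → Finset (ZMod (2 * m)))
    (hA : ∀ i : Fin ((m - 1) / 2), A i = Sfam m (((i : ℕ) + 1 : ℕ) : ZMod (2 * m))) :
    IsDPDF (ZMod (2 * m)) (2 * m) ((m - 1) / 2) 4 2 (2 * m - 2) A ∧
    IsEPDF (ZMod (2 * m)) (2 * m) ((m - 1) / 2) 4 (2 * m - 6) 0 A ∧
    (∀ x : ZMod (2 * m), (∃ i, x ∈ A i) ↔ (x ≠ 0 ∧ x ≠ (m : ZMod (2 * m)))) := by
  have hmm := zzMM (m := m)
  have hodd' := hodd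
  obtain ⟨t, ht⟩ := hodd'
  have hMne : (m : ZMod (2*m)) ≠ 0 := zz_M_ne_zero hm
  have hbound : ∀ i : Fin ((m - 1) / 2), 1 ≤ (i:ℕ)+1 ∧ (i:ℕ)+1 ≤ (m-1)/2 :=
    fun i => ⟨by omega, by have := i.isLt; omega⟩
  have hmem : ∀ (i : Fin ((m - 1) / 2)) (x : ZMod (2*m)),
      x ∈ A i ↔ 2*(x - (((i:ℕ)+1 : ℕ) : ZMod (2*m))) = 0
        ∨ 2*(x + (((i:ℕ)+1 : ℕ) : ZMod (2*m))) = 0 := fun i x => by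
    rw [hA i]; exact zz_mem_Sfam hm _ x
  have h2a : ∀ i : Fin ((m - 1) / 2), 2 * (((i:ℕ)+1 : ℕ) : ZMod (2*m)) ≠ 0 :=
    fun i => zz_two_a_ne_zero (hbound i).1 (hbound i).2
  -- disjointness
  have hdisj : ∀ i j, i ≠ j → Disjoint (A i) (A j) := by
    intro i j hij
    rw [Finset.disjoint_left]
    intro x hxi hxj
    apply hij
    rw [hA i] at hxi
    have hrel := (hmem j x).mp hxj
    have hβ : (((j:ℕ)+1 : ℕ) : ZMod (2*m)) ∈ Sfam m (((i:ℕ)+1 : ℕ) : ZMod (2*m)) :=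
      zz_class_mem hm _ x _ hxi hrel
    have h4 := (zz_mem_Sfam hm _ _).mp hβ
    have := zz_uniq hodd (hbound j).1 (hbound j).2 (hbound i).1 (hbound i).2 h4
    exact (Fin.ext (by omega)).symm
  have hexcl : ∀ (x : ZMod (2*m)) i j, x ∈ A i → x ∈ A j → i = j := by
    intro x i j hi hj
    by_contra hne
    exact (Finset.disjoint_left.mp (hdisj i j hne) hi) hj
  -- partition
  have hpart : ∀ x : ZMod (2*m), (∃ i, x ∈ A i) ↔ ¬ (2*x = 0) := by
    intro x
    constructor
    · rintro ⟨i, hxi⟩ h2x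
      rcases (hmem i x).mp hxi with h | h
      · exact h2a i (by linear_combination h2x - h)
      · exact h2a i (by linear_combination h - h2x)
    · intro h2x
      have hx0 : x ≠ 0 := by rintro rfl; exact h2x (by ring)
      have hxM : x ≠ (m : ZMod (2*m)) := by rintro rfl; exact h2x (by linear_combination hmm)
      obtain ⟨a, ha1, ha2, hmem'⟩ := zz_exists_mem hm hodd hx0 hxM
      refine ⟨⟨a - 1, by omega⟩, ?_⟩
      rw [hA]
      have hval : ((⟨a - 1, by omega⟩ : Fin ((m-1)/2)) : ℕ) + 1 = a := by simp; omega
      rw [hval]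
      exact hmem'
  -- partition in final form
  have hpart' : ∀ x : ZMod (2*m), (∃ i, x ∈ A i) ↔ (x ≠ 0 ∧ x ≠ (m : ZMod (2*m))) := by
    intro x
    rw [hpart x]
    constructor
    · intro h
      constructor
      · rintro rfl; exact h (by ring)
      · rintro rfl; exact h (by linear_combination hmm)
    · rintro ⟨h0, hM⟩ h2x
      rcases (zz_two_mul_eq_zero_iff x).mp h2x with h | h
      · exact h0 h
      · exact hM h
  -- cardinality of each block
  have hcard : ∀ i, (A i).card = 4 := by
    intro i
    have hb := hbound i
    set α : ZMod (2*m) := (((i:ℕ)+1 : ℕ) : ZMod (2*m)) with hα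
    have h2α := h2a i
    have h2αM : 2*α ≠ (m : ZMod (2*m)) := zz_two_mul_ne_M hodd α
    rw [hA i, Sfam]
    have hn1 : α ∉ ({(m : ZMod (2*m)) - α, (m : ZMod (2*m)) + α, -α} : Finset (ZMod (2*m))) := by
      simp only [Finset.mem_insert, Finset.mem_singleton]
      rintro (h | h | h)
      · exact h2αM (by linear_combination h)
      · exact hMne (by linear_combination -h)
      · exact h2α (by linear_combination h)
    have hn2 : (m : ZMod (2*m)) - α ∉ ({(m : ZMod (2*m)) + α, -α} : Finset (ZMod (2*m))) := by
      simp only [Finset.mem_insert, Finset.mem_singleton]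
      rintro (h | h)
      · exact h2α (by linear_combination -h)
      · exact hMne (by linear_combination h)
    have hn3 : (m : ZMod (2*m)) + α ∉ ({-α} : Finset (ZMod (2*m))) := by
      simp only [Finset.mem_singleton]
      intro h
      exact h2αM (by linear_combination h - hmm)
    rw [Finset.card_insert_of_notMem hn1, Finset.card_insert_of_notMem hn2,
      Finset.card_insert_of_notMem hn3, Finset.card_singleton]
  -- 0 not in blocks
  have hzero : ∀ i, (0 : ZMod (2*m)) ∉ A i := by
    intro i h
    rcases (hmem i 0).mp h with h' | h'
    · exact h2a i (by linear_combination -h')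
    · exact h2a i (by linear_combination h')
  -- internal count key
  have hkey : ∀ g : ZMod (2*m), g ≠ 0 → (IntFam A).count g
      = (Finset.univ.filter (fun y : ZMod (2*m) => ∃ i, y ∈ A i ∧ g + y ∈ A i)).card := by
    intro g hg0
    rw [IntFam, Multiset.count_sum']
    have h1 : ∀ i ∈ (Finset.univ : Finset (Fin ((m-1)/2))), (dInt (A i)).count g
        = (Finset.univ.filter (fun y : ZMod (2*m) => y ∈ A i ∧ g + y ∈ A i)).card := by
      intro i _
      rw [zz_count_dInt _ _ hg0]
      congr 1
      ext y
      simp [Finset.mem_filter]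
    rw [Finset.sum_congr rfl h1]
    exact zz_sum_filter_card _ (fun y i j hi hj => hexcl y i j hi.1 hj.1)
  -- the solution-set identification for g with 2g ≠ 0
  have hIntSet : ∀ g : ZMod (2*m), ¬ 2*g = 0 →
      (Finset.univ.filter (fun y : ZMod (2*m) => ∃ i, y ∈ A i ∧ g + y ∈ A i))
        = Finset.univ.filter
            (fun y : ZMod (2*m) => 2*y + g = 0 ∨ 2*y + g = (m : ZMod (2*m))) := by
    intro g hgH
    ext y
    simp only [Finset.mem_filter, Finset.mem_univ, true_and]
    constructor
    · rintro ⟨i, hyi, hgyi⟩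
      rw [hA i] at hyi hgyi
      rcases zz_same_class hm _ (g+y) y hgyi hyi with h | h
      · exact absurd (by linear_combination h : 2*g = 0) hgH
      · rcases (zz_two_mul_eq_zero_iff _).mp h with h' | h'
        · left; linear_combination h'
        · right; linear_combination h'
    · intro hw
      have hprops := zz_sol_props hm hgH hw
      obtain ⟨i, hyi⟩ := (hpart y).mpr hprops.1
      refine ⟨i, hyi, ?_⟩
      rw [hA i] at hyi ⊢
      refine zz_class_mem hm _ y (g+y) hyi (Or.inr ?_)
      rcases hw with h | h
      · linear_combination 2*h
      · linear_combination 2*h + hmm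
  -- same-set identification at g = M
  have hMSet : (Finset.univ.filter
        (fun y : ZMod (2*m) => ∃ i, y ∈ A i ∧ (m : ZMod (2*m)) + y ∈ A i))
      = Finset.univ.filter (fun y : ZMod (2*m) => ¬ 2*y = 0) := by
    ext y
    simp only [Finset.mem_filter, Finset.mem_univ, true_and]
    constructor
    · rintro ⟨i, hyi, _⟩
      exact (hpart y).mp ⟨i, hyi⟩
    · intro hy
      obtain ⟨i, hyi⟩ := (hpart y).mpr hy
      refine ⟨i, hyi, ?_⟩
      rw [hA i] at hyi ⊢
      exact zz_Sfam_add_M hm _ y hyi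
  -- external count key
  have hextkey : ∀ g : ZMod (2*m), (ExtFam A).count g
        + (Finset.univ.filter (fun y : ZMod (2*m) => ∃ i, y ∈ A i ∧ g + y ∈ A i)).card
      = (Finset.univ.filter
          (fun y : ZMod (2*m) => (¬ 2*y = 0) ∧ ¬ 2*(g+y) = 0)).card := by
    intro g
    rw [ExtFam, Multiset.count_sum']
    have h1 : ∀ i ∈ (Finset.univ : Finset (Fin ((m-1)/2))),
        (∑ j ∈ Finset.univ.erase i, dExt (A i) (A j)).count g
        = ∑ j ∈ Finset.univ.erase i,
            (Finset.univ.filter (fun y : ZMod (2*m) => y ∈ A j ∧ g + y ∈ A i)).card := by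
      intro i _
      rw [Multiset.count_sum']
      refine Finset.sum_congr rfl fun j _ => ?_
      rw [zz_count_dExt]
      congr 1
      ext y
      simp [Finset.mem_filter]
    rw [Finset.sum_congr rfl h1]
    have hdiag : ∑ i : Fin ((m-1)/2),
        (Finset.univ.filter (fun y : ZMod (2*m) => y ∈ A i ∧ g + y ∈ A i)).card
        = (Finset.univ.filter (fun y : ZMod (2*m) => ∃ i, y ∈ A i ∧ g + y ∈ A i)).card :=
      zz_sum_filter_card _ (fun y i j hi hj => hexcl y i j hi.1 hj.1)
    rw [← hdiag, ← Finset.sum_add_distrib]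
    have h2 : ∀ i ∈ (Finset.univ : Finset (Fin ((m-1)/2))),
        (∑ j ∈ Finset.univ.erase i,
          (Finset.univ.filter (fun y : ZMod (2*m) => y ∈ A j ∧ g + y ∈ A i)).card)
        + (Finset.univ.filter (fun y : ZMod (2*m) => y ∈ A i ∧ g + y ∈ A i)).card
        = ∑ j, (Finset.univ.filter (fun y : ZMod (2*m) => y ∈ A j ∧ g + y ∈ A i)).card :=
      fun i _ => Finset.sum_erase_add _ _ (Finset.mem_univ i)
    rw [Finset.sum_congr rfl h2, Finset.sum_comm]
    have h3 : ∀ j ∈ (Finset.univ : Finset (Fin ((m-1)/2))),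
        ∑ i, (Finset.univ.filter (fun y : ZMod (2*m) => y ∈ A j ∧ g + y ∈ A i)).card
        = (Finset.univ.filter (fun y : ZMod (2*m) => ∃ i, y ∈ A j ∧ g + y ∈ A i)).card :=
      fun j _ => zz_sum_filter_card _ (fun y i i' hi hi' => hexcl (g+y) i i' hi.2 hi'.2)
    rw [Finset.sum_congr rfl h3]
    rw [zz_sum_filter_card (fun j y => ∃ i, y ∈ A j ∧ g + y ∈ A i)
      (fun y j j' hj hj' => by
        obtain ⟨i, hyj, _⟩ := hj
        obtain ⟨i', hyj', _⟩ := hj'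
        exact hexcl y j j' hyj hyj')]
    congr 1
    ext y
    simp only [Finset.mem_filter, Finset.mem_univ, true_and]
    constructor
    · rintro ⟨j, i, hyj, hgyi⟩
      exact ⟨(hpart y).mp ⟨j, hyj⟩, (hpart (g+y)).mp ⟨i, hgyi⟩⟩
    · rintro ⟨h1', h2'⟩
      obtain ⟨j, hyj⟩ := (hpart y).mpr h1'
      obtain ⟨i, hgyi⟩ := (hpart (g+y)).mpr h2'
      exact ⟨j, i, hyj, hgyi⟩
  -- now assemble
  refine ⟨⟨ZMod.card (2*m), Fintype.card_fin _, hcard, hzero, hdisj, ?_, ?_⟩,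
    ⟨ZMod.card (2*m), Fintype.card_fin _, hcard, hzero, hdisj, ?_, ?_⟩, hpart'⟩
  · -- DPDF lambda = 2
    intro g hg0 hgex
    have hgH : ¬ 2*g = 0 := (hpart g).mp hgex
    rw [hkey g hg0, hIntSet g hgH, zz_solset_card hm hodd g hgH]
  · -- DPDF mu = 2m-2
    intro g hg0 hgnone
    have h2g : 2*g = 0 := by
      by_contra h
      obtain ⟨i, hi⟩ := (hpart g).mpr h
      exact hgnone i hi
    have hgM : g = (m : ZMod (2*m)) :=
      ((zz_two_mul_eq_zero_iff g).mp h2g).resolve_left hg0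
    subst hgM
    rw [hkey _ hg0, hMSet, zz_nH_card hm]
  · -- EPDF lambda = 2m-6
    intro g hg0 hgex
    have hgH : ¬ 2*g = 0 := (hpart g).mp hgex
    have h := hextkey g
    rw [hIntSet g hgH, zz_solset_card hm hodd g hgH, zz_pair_card hm g hgH] at h
    omega
  · -- EPDF mu = 0
    intro g hg0 hgnone
    have h2g : 2*g = 0 := by
      by_contra h
      obtain ⟨i, hi⟩ := (hpart g).mpr h
      exact hgnone i hi
    have hgM : g = (m : ZMod (2*m)) :=
      ((zz_two_mul_eq_zero_iff g).mp h2g).resolve_left hg0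
    subst hgM
    have h := hextkey (m : ZMod (2*m))
    rw [hMSet, zz_nH_card hm] at h
    have hset2 : (Finset.univ.filter
          (fun y : ZMod (2*m) => (¬ 2*y = 0) ∧ ¬ 2*((m : ZMod (2*m))+y) = 0))
        = Finset.univ.filter (fun y : ZMod (2*m) => ¬ 2*y = 0) := by
      ext y
      simp only [Finset.mem_filter, Finset.mem_univ, true_and]
      constructor
      · exact fun h' => h'.1
      · intro h'
        refine ⟨h', fun h2 => h' ?_⟩
        linear_combination h2 - hmm
    rw [hset2, zz_nH_card hm] at h
    omega
end

section
/- Let p be a prime with p ≡ 1 (mod 4) and let G = ℤ_{2p}. Define A₀ = {s, s+p ∈ ℤ_{2p} : s ∈ {1,…,p−1} is a nonzero quadratic residue modulo p} and A₁ = {t, t+p ∈ ℤ_{2p} : t ∈ {1,…,p−1} is a quadratic non-residue modulo p}. Then the multiset Δ(A₀) equals (p−5)/2 copies of the set A₀, together with (p−1)/2 copies of the set A₁, together with (p−1) copies of {p}; and the multiset Δ(A₁) equals (p−5)/2 copies of A₁, together with (p−1)/2 copies of A₀, together with (p−1) copies of {p}. -/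
open Finset

/-- `s` is a (nonzero) quadratic residue modulo `p`: `s ≡ x² (mod p)` for some integer
`x` not divisible by `p`. -/
def IsQRmod (p s : ℕ) : Prop :=
  ∃ x : ℤ, ¬ ((p : ℤ) ∣ x) ∧ (s : ℤ) ≡ x ^ 2 [ZMOD (p : ℤ)]

/-- Given a set `Q` of natural numbers, the subset `{s, s+p : s ∈ Q}` of `ℤ_{2p}`. -/
def liftPair (p : ℕ) (Q : Finset ℕ) : Finset (ZMod (2 * p)) :=
  Q.image (fun s : ℕ => (s : ZMod (2 * p))) ∪ Q.image (fun s : ℕ => (s : ZMod (2 * p)) + p)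


section AuxQRDF

variable {p : ℕ} [Fact p.Prime]

theorem aux_chi_neg_one (hp4 : p % 4 = 1) :
    quadraticChar (ZMod p) (-1) = 1 := by
  have hchar : ringChar (ZMod p) ≠ 2 := by
    rw [ZMod.ringChar_zmod_n]; intro h; rw [h] at hp4; simp at hp4
  rw [quadraticChar_neg_one hchar, ZMod.card]
  exact ZMod.χ₄_nat_one_mod_four hp4

theorem aux_chi_sum_mul (hp2 : p ≠ 2) (b : ZMod p) (hb : b ≠ 0) :
    ∑ v : ZMod p, quadraticChar (ZMod p) v * quadraticChar (ZMod p) (v + b) = -1 := by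
  have hchar : ringChar (ZMod p) ≠ 2 := by rw [ZMod.ringChar_zmod_n]; exact hp2
  have h1 : ∀ v : ZMod p, v ≠ 0 →
      quadraticChar (ZMod p) v * quadraticChar (ZMod p) (v + b)
        = quadraticChar (ZMod p) (1 + b * v⁻¹) := by
    intro v hv
    have he : v + b = v * (1 + b * v⁻¹) := by field_simp
    rw [he, map_mul, ← mul_assoc, ← sq, quadraticChar_sq_one hv, one_mul]
  rw [← Finset.sum_filter_add_sum_filter_not Finset.univ (fun v => v = 0)]
  have e0 : (Finset.univ.filter (fun v : ZMod p => v = 0)) = {0} := by ext v; simp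
  rw [e0, Finset.sum_singleton, quadraticChar_zero, zero_mul, zero_add]
  rw [Finset.sum_congr rfl (fun v hv => h1 v (by simpa using hv))]
  have key : ∑ v ∈ Finset.univ.filter (fun v : ZMod p => ¬ v = 0),
      quadraticChar (ZMod p) (1 + b * v⁻¹)
      = ∑ w ∈ Finset.univ.filter (fun w : ZMod p => ¬ w = 1), quadraticChar (ZMod p) w := by
    refine Finset.sum_nbij' (fun v => 1 + b * v⁻¹) (fun w => b * (w - 1)⁻¹) ?_ ?_ ?_ ?_ ?_
    · intro v hv
      simp only [Finset.mem_filter, Finset.mem_univ, true_and] at hv ⊢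
      intro h
      have : b * v⁻¹ = 0 := by linear_combination h
      rcases mul_eq_zero.mp this with h' | h'
      · exact hb h'
      · exact hv (inv_eq_zero.mp h')
    · intro w hw
      simp only [Finset.mem_filter, Finset.mem_univ, true_and] at hw ⊢
      have h1 : w - 1 ≠ 0 := sub_ne_zero.mpr hw
      exact mul_ne_zero hb (inv_ne_zero h1)
    · intro v hv
      simp only [Finset.mem_filter, Finset.mem_univ, true_and] at hv
      field_simp
      rw [add_sub_cancel_left, div_self hb]
    · intro w hw
      simp only [Finset.mem_filter, Finset.mem_univ, true_and] at hw
      have h1 : w - 1 ≠ 0 := sub_ne_zero.mpr hw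
      field_simp
      ring
    · intro v _; rfl
  rw [key]
  have := quadraticChar_sum_zero hchar
  rw [← Finset.sum_filter_add_sum_filter_not Finset.univ (fun w : ZMod p => w = 1)] at this
  have e1 : (Finset.univ.filter (fun w : ZMod p => w = 1)) = {1} := by ext w; simp
  rw [e1, Finset.sum_singleton, map_one] at this
  linarith

theorem aux_chi_level_card (hp2 : p ≠ 2) (ε : ℤ) (hε : ε = 1 ∨ ε = -1) :
    2 * (Finset.univ.filter fun v : ZMod p => quadraticChar (ZMod p) v = ε).card = p - 1 := by
  have hchar : ringChar (ZMod p) ≠ 2 := by rw [ZMod.ringChar_zmod_n]; exact hp2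
  have hsum : ∑ v : ZMod p, (1 + ε * quadraticChar (ZMod p) v) = p := by
    rw [Finset.sum_add_distrib, ← Finset.mul_sum]
    rw [show (∑ v : ZMod p, quadraticChar (ZMod p) v) = 0 from quadraticChar_sum_zero hchar]
    simp [ZMod.card]
  rw [← Finset.sum_filter_add_sum_filter_not Finset.univ
    (fun v : ZMod p => quadraticChar (ZMod p) v = ε)] at hsum
  have h1 : ∑ v ∈ Finset.univ.filter (fun v : ZMod p => quadraticChar (ZMod p) v = ε),
      (1 + ε * quadraticChar (ZMod p) v)
      = 2 * (Finset.univ.filter fun v : ZMod p => quadraticChar (ZMod p) v = ε).card := by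
    have hterm : ∀ v ∈ Finset.univ.filter (fun v : ZMod p => quadraticChar (ZMod p) v = ε),
        (1 + ε * quadraticChar (ZMod p) v) = (2 : ℤ) := by
      intro v hv
      rw [(Finset.mem_filter.mp hv).2]
      rcases hε with h | h <;> subst h <;> norm_num
    rw [Finset.sum_congr rfl hterm, Finset.sum_const, nsmul_eq_mul, mul_comm]
  have h2 : ∑ v ∈ Finset.univ.filter (fun v : ZMod p => ¬ quadraticChar (ZMod p) v = ε),
      (1 + ε * quadraticChar (ZMod p) v) = 1 := by
    rw [← Finset.sum_subset (s₁ := ({0} : Finset (ZMod p))) ?_ ?_]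
    · simp
    · intro v hv
      simp only [Finset.mem_singleton] at hv
      subst hv
      simp only [Finset.mem_filter, Finset.mem_univ, true_and, quadraticChar_zero]
      rcases hε with h | h <;> rw [h] <;> norm_num
    · intro v hv hv0
      simp only [Finset.mem_filter, Finset.mem_univ, true_and] at hv
      simp only [Finset.mem_singleton] at hv0
      rcases quadraticChar_dichotomy (F := ZMod p) (a := v) hv0 with h | h <;>
        rcases hε with h' | h' <;> subst h' <;> rw [h] <;>
        first | (exact absurd h hv) | norm_num
  rw [h1, h2] at hsum
  have hp1 : 1 ≤ p := (Fact.out : p.Prime).one_lt.le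
  have : (2 * (Finset.univ.filter fun v : ZMod p =>
      quadraticChar (ZMod p) v = ε).card : ℤ) = (p : ℤ) - 1 := by linarith
  omega

theorem aux_chi_pair_card (hp4 : p % 4 = 1) (ε : ℤ) (hε : ε = 1 ∨ ε = -1)
    (b : ZMod p) (hb : b ≠ 0) :
    (4:ℤ) * (Finset.univ.filter fun v : ZMod p =>
        quadraticChar (ZMod p) v = ε ∧ quadraticChar (ZMod p) (v + b) = ε).card
      = p - 3 - 2 * ε * quadraticChar (ZMod p) b := by
  have hp2 : p ≠ 2 := by intro h; rw [h] at hp4; simp at hp4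
  have hchar : ringChar (ZMod p) ≠ 2 := by rw [ZMod.ringChar_zmod_n]; exact hp2
  have hee : ε * ε = 1 := by rcases hε with h | h <;> subst h <;> norm_num
  set f : ZMod p → ℤ := fun v =>
    (1 + ε * quadraticChar (ZMod p) v) * (1 + ε * quadraticChar (ZMod p) (v + b)) with hf
  have way1 : ∑ v : ZMod p, f v = p - 1 := by
    have expand : ∀ v : ZMod p, f v = 1 + ε * quadraticChar (ZMod p) v
        + ε * quadraticChar (ZMod p) (v + b)
        + (ε * ε) * (quadraticChar (ZMod p) v * quadraticChar (ZMod p) (v + b)) := by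
      intro v; rw [hf]; ring
    rw [Finset.sum_congr rfl (fun v _ => expand v)]
    rw [Finset.sum_add_distrib, Finset.sum_add_distrib, Finset.sum_add_distrib]
    rw [← Finset.mul_sum, ← Finset.mul_sum, ← Finset.mul_sum]
    have s1 : (∑ v : ZMod p, quadraticChar (ZMod p) v) = 0 := quadraticChar_sum_zero hchar
    have s2 : (∑ v : ZMod p, quadraticChar (ZMod p) (v + b)) = 0 :=
      (Fintype.sum_equiv (Equiv.addRight b) (fun v => quadraticChar (ZMod p) (v + b))
        (fun w => quadraticChar (ZMod p) w) (fun v => rfl)).trans (quadraticChar_sum_zero hchar)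
    rw [s1, s2, aux_chi_sum_mul hp2 b hb, hee]
    simp [ZMod.card]
    ring
  have hchib : quadraticChar (ZMod p) (-b) = quadraticChar (ZMod p) b := by
    rw [show -b = -1 * b by ring, map_mul, aux_chi_neg_one hp4, one_mul]
  have way2 : ∑ v : ZMod p, f v = 4 * (Finset.univ.filter fun v : ZMod p =>
      quadraticChar (ZMod p) v = ε ∧ quadraticChar (ZMod p) (v + b) = ε).card
      + 2 * (1 + ε * quadraticChar (ZMod p) b) := by
    rw [← Finset.sum_filter_add_sum_filter_not Finset.univ (fun v : ZMod p =>
      quadraticChar (ZMod p) v = ε ∧ quadraticChar (ZMod p) (v + b) = ε)]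
    have h1 : ∑ v ∈ Finset.univ.filter (fun v : ZMod p =>
        quadraticChar (ZMod p) v = ε ∧ quadraticChar (ZMod p) (v + b) = ε), f v
        = 4 * (Finset.univ.filter fun v : ZMod p =>
          quadraticChar (ZMod p) v = ε ∧ quadraticChar (ZMod p) (v + b) = ε).card := by
      have hterm : ∀ v ∈ Finset.univ.filter (fun v : ZMod p =>
          quadraticChar (ZMod p) v = ε ∧ quadraticChar (ZMod p) (v + b) = ε),
          f v = (4 : ℤ) := by
        intro v hv
        obtain ⟨h1, h2⟩ := (Finset.mem_filter.mp hv).2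
        rw [hf]; simp only [h1, h2]
        rw [hee]; norm_num
      rw [Finset.sum_congr rfl hterm, Finset.sum_const, nsmul_eq_mul, mul_comm]
    have hεne : ε ≠ 0 := by rcases hε with h | h <;> subst h <;> norm_num
    have h2 : ∑ v ∈ Finset.univ.filter (fun v : ZMod p =>
        ¬(quadraticChar (ZMod p) v = ε ∧ quadraticChar (ZMod p) (v + b) = ε)), f v
        = 2 * (1 + ε * quadraticChar (ZMod p) b) := by
      rw [← Finset.sum_subset (s₁ := ({0, -b} : Finset (ZMod p))) ?_ ?_]
      · rw [Finset.sum_pair (Ne.symm (neg_ne_zero.mpr hb))]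
        rw [hf]
        simp only [quadraticChar_zero, zero_add, neg_add_cancel, mul_zero, add_zero, mul_one]
        rw [hchib]; ring
      · intro v hv
        simp only [Finset.mem_insert, Finset.mem_singleton] at hv
        simp only [Finset.mem_filter, Finset.mem_univ, true_and]
        rcases hv with h | h <;> subst h
        · rw [quadraticChar_zero]
          intro hc
          exact hεne hc.1.symm
        · rw [neg_add_cancel, quadraticChar_zero]
          intro hc
          exact hεne hc.2.symm
      · intro v hv hv0
        simp only [Finset.mem_filter, Finset.mem_univ, true_and] at hv
        simp only [Finset.mem_insert, Finset.mem_singleton] at hv0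
        push_neg at hv0
        obtain ⟨hv1, hv2⟩ := hv0
        have hvb : v + b ≠ 0 := fun hc => hv2 (by linear_combination hc)
        rcases Decidable.not_and_iff_or_not.mp hv with h | h
        · have := quadraticChar_dichotomy (F := ZMod p) (a := v) hv1
          have hval : quadraticChar (ZMod p) v = -ε := by
            rcases hε with h' | h' <;> subst h' <;> rcases this with h'' | h'' <;>
              first | (exact absurd h'' h) | (rw [h'']; try norm_num)
          show (1 + ε * quadraticChar (ZMod p) v)
            * (1 + ε * quadraticChar (ZMod p) (v + b)) = 0
          rw [hval]
          have hz : 1 + ε * -ε = 0 := by linarith [hee]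
          rw [hz, zero_mul]
        · have := quadraticChar_dichotomy (F := ZMod p) (a := v + b) hvb
          have hval : quadraticChar (ZMod p) (v + b) = -ε := by
            rcases hε with h' | h' <;> subst h' <;> rcases this with h'' | h'' <;>
              first | (exact absurd h'' h) | (rw [h'']; try norm_num)
          show (1 + ε * quadraticChar (ZMod p) v)
            * (1 + ε * quadraticChar (ZMod p) (v + b)) = 0
          rw [hval]
          have hz : 1 + ε * -ε = 0 := by linarith [hee]
          rw [hz, mul_zero]
    rw [h1, h2]
  rw [way1] at way2
  linarith

instance : NeZero (2 * p) := ⟨by have := (Fact.out : p.Prime).one_lt; omega⟩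

noncomputable abbrev projP (p : ℕ) : ZMod (2 * p) →+* ZMod p :=
  ZMod.castHom (dvd_mul_left p 2) (ZMod p)

theorem aux_p_ne_zero : (p : ZMod (2 * p)) ≠ 0 := by
  have hp := (Fact.out : p.Prime).one_lt
  rw [Ne, ZMod.natCast_eq_zero_iff]
  intro h
  have := Nat.le_of_dvd (by omega) h
  omega

theorem aux_proj_natCast (s : ℕ) : projP p (s : ZMod (2 * p)) = (s : ZMod p) := map_natCast _ s

theorem aux_proj_p : projP p ((p : ℕ) : ZMod (2 * p)) = 0 := by
  rw [aux_proj_natCast, ZMod.natCast_self]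

theorem aux_proj_eq_zero_iff (x : ZMod (2 * p)) :
    projP p x = 0 ↔ x = 0 ∨ x = (p : ZMod (2 * p)) := by
  have hp := (Fact.out : p.Prime).one_lt
  constructor
  · intro h
    have hx : x = ((x.val : ℕ) : ZMod (2 * p)) := (ZMod.natCast_rightInverse x).symm
    rw [hx, aux_proj_natCast, ZMod.natCast_eq_zero_iff] at h
    have hlt : x.val < 2 * p := ZMod.val_lt x
    have : x.val = 0 ∨ x.val = p := by
      rcases h with ⟨k, hk⟩
      have hk2 : k < 2 := by
        by_contra hge
        push_neg at hge
        have : 2 * p ≤ p * k :=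
          le_trans (le_of_eq (by ring)) (Nat.mul_le_mul_left p hge)
        omega
      interval_cases k <;> omega
    rcases this with h' | h'
    · left; rw [hx, h']; simp
    · right; rw [hx, h']
  · rintro (h | h) <;> subst h
    · simp
    · exact aux_proj_p

theorem aux_proj_fiber (v : ZMod p) :
    (Finset.univ.filter fun g : ZMod (2 * p) => projP p g = v)
      = {(v.val : ZMod (2 * p)), (v.val : ZMod (2 * p)) + p} := by
  have hproj : projP p ((v.val : ℕ) : ZMod (2 * p)) = v := by
    rw [aux_proj_natCast, ZMod.natCast_val, ZMod.cast_id]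
  ext g
  simp only [Finset.mem_filter, Finset.mem_univ, true_and, Finset.mem_insert,
    Finset.mem_singleton]
  constructor
  · intro h
    have : projP p (g - (v.val : ZMod (2 * p))) = 0 := by rw [map_sub, h, hproj, sub_self]
    rcases (aux_proj_eq_zero_iff _).mp this with h' | h'
    · left; exact sub_eq_zero.mp h'
    · right; linear_combination h'
  · rintro (h | h) <;> subst h
    · exact hproj
    · rw [map_add, hproj, aux_proj_p, add_zero]

theorem aux_proj_fiber_card (v : ZMod p) :
    (Finset.univ.filter fun g : ZMod (2 * p) => projP p g = v).card = 2 := by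
  rw [aux_proj_fiber]
  rw [Finset.card_insert_of_notMem, Finset.card_singleton]
  simp only [Finset.mem_singleton]
  intro h
  exact aux_p_ne_zero (by linear_combination -h)

theorem aux_card_filter_proj (P : ZMod p → Prop) [DecidablePred P] :
    (Finset.univ.filter fun g : ZMod (2 * p) => P (projP p g)).card
      = 2 * (Finset.univ.filter P).card := by
  classical
  rw [Finset.card_eq_sum_card_fiberwise (f := projP p) (t := Finset.univ.filter P)
    (fun g hg => by simpa using (Finset.mem_filter.mp hg).2)]
  have hfib : ∀ v ∈ Finset.univ.filter P,
      ((Finset.univ.filter fun g : ZMod (2 * p) => P (projP p g)).filter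
        fun g => projP p g = v).card = 2 := by
    intro v hv
    have hPv : P v := (Finset.mem_filter.mp hv).2
    rw [Finset.filter_filter]
    rw [Finset.filter_congr (q := fun g : ZMod (2 * p) => projP p g = v)
      (fun g _ => ⟨And.right, fun h => ⟨by rw [h]; exact hPv, h⟩⟩)]
    exact aux_proj_fiber_card v
  rw [Finset.sum_congr rfl hfib, Finset.sum_const, smul_eq_mul, mul_comm]

theorem aux_isQRmod_iff {s : ℕ} (hs : (s : ZMod p) ≠ 0) :
    IsQRmod p s ↔ IsSquare ((s : ZMod p)) := by
  constructor
  · rintro ⟨x, hx, hcong⟩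
    have : ((s : ℤ) : ZMod p) = ((x ^ 2 : ℤ) : ZMod p) :=
      (ZMod.intCast_eq_intCast_iff _ _ _).mpr hcong
    push_cast at this
    exact ⟨(x : ZMod p), by rw [this]; ring⟩
  · rintro ⟨r, hr⟩
    have hrne : r ≠ 0 := by rintro rfl; rw [mul_zero] at hr; exact hs hr
    refine ⟨(r.val : ℤ), ?_, ?_⟩
    · rw [Int.natCast_dvd_natCast]
      intro hdvd
      have := ZMod.val_lt r
      have hv0 : r.val ≠ 0 := fun h => hrne (by
        have := ZMod.natCast_rightInverse (n := p) r
        rw [h] at this; simpa using this.symm)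
      have := Nat.le_of_dvd (Nat.pos_of_ne_zero hv0) hdvd
      omega
    · rw [← ZMod.intCast_eq_intCast_iff]
      push_cast
      rw [ZMod.natCast_val, ZMod.cast_id, hr]
      ring

theorem aux_mem_liftPair_Q (Q : Finset ℕ)
    (hQ : ∀ s : ℕ, s ∈ Q ↔ (1 ≤ s ∧ s ≤ p - 1 ∧ IsQRmod p s)) (g : ZMod (2 * p)) :
    g ∈ liftPair p Q ↔ quadraticChar (ZMod p) (projP p g) = 1 := by
  have hp2 := (Fact.out : p.Prime).two_le
  have hcast_ne : ∀ s : ℕ, 1 ≤ s → s ≤ p - 1 → (s : ZMod p) ≠ 0 := by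
    intro s h1 h2 hc
    rw [ZMod.natCast_eq_zero_iff] at hc
    have := Nat.le_of_dvd (by omega) hc
    omega
  constructor
  · intro hg
    rw [liftPair, Finset.mem_union, Finset.mem_image, Finset.mem_image] at hg
    have : ∃ s ∈ Q, projP p g = (s : ZMod p) := by
      rcases hg with ⟨s, hs, rfl⟩ | ⟨s, hs, rfl⟩
      · exact ⟨s, hs, aux_proj_natCast s⟩
      · refine ⟨s, hs, ?_⟩
        rw [map_add, aux_proj_natCast, aux_proj_natCast, ZMod.natCast_self, add_zero]
    obtain ⟨s, hs, hproj⟩ := this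
    obtain ⟨h1, h2, h3⟩ := (hQ s).mp hs
    have hne := hcast_ne s h1 h2
    rw [hproj]
    exact (quadraticChar_one_iff_isSquare hne).mpr ((aux_isQRmod_iff hne).mp h3)
  · intro hg
    set v := projP p g with hv
    have hvne : v ≠ 0 := by
      intro h; rw [h, quadraticChar_zero] at hg; exact absurd hg (by norm_num)
    have hsq : IsSquare v := (quadraticChar_one_iff_isSquare hvne).mp hg
    have hval0 : v.val ≠ 0 := fun h => hvne (by
      have := ZMod.natCast_rightInverse (n := p) v
      rw [h] at this; simpa using this.symm)
    have hvlt := ZMod.val_lt v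
    have hvcast : ((v.val : ℕ) : ZMod p) = v := ZMod.natCast_rightInverse v
    have hQR : IsQRmod p v.val := (aux_isQRmod_iff (by rw [hvcast]; exact hvne)).mpr
      (by rw [hvcast]; exact hsq)
    have hsQ : v.val ∈ Q := (hQ v.val).mpr ⟨by omega, by omega, hQR⟩
    have hgmem : g ∈ (Finset.univ.filter fun g : ZMod (2 * p) => projP p g = v) := by
      simp [hv]
    rw [aux_proj_fiber, Finset.mem_insert, Finset.mem_singleton] at hgmem
    rw [liftPair, Finset.mem_union, Finset.mem_image, Finset.mem_image]
    rcases hgmem with h | h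
    · exact Or.inl ⟨v.val, hsQ, h.symm⟩
    · exact Or.inr ⟨v.val, hsQ, h.symm⟩

theorem aux_mem_liftPair_N (N : Finset ℕ)
    (hN : ∀ t : ℕ, t ∈ N ↔ (1 ≤ t ∧ t ≤ p - 1 ∧ ¬ IsQRmod p t)) (g : ZMod (2 * p)) :
    g ∈ liftPair p N ↔ quadraticChar (ZMod p) (projP p g) = -1 := by
  have hp2 := (Fact.out : p.Prime).two_le
  have hcast_ne : ∀ s : ℕ, 1 ≤ s → s ≤ p - 1 → (s : ZMod p) ≠ 0 := by
    intro s h1 h2 hc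
    rw [ZMod.natCast_eq_zero_iff] at hc
    have := Nat.le_of_dvd (by omega) hc
    omega
  constructor
  · intro hg
    rw [liftPair, Finset.mem_union, Finset.mem_image, Finset.mem_image] at hg
    have : ∃ s ∈ N, projP p g = (s : ZMod p) := by
      rcases hg with ⟨s, hs, rfl⟩ | ⟨s, hs, rfl⟩
      · exact ⟨s, hs, aux_proj_natCast s⟩
      · refine ⟨s, hs, ?_⟩
        rw [map_add, aux_proj_natCast, aux_proj_natCast, ZMod.natCast_self, add_zero]
    obtain ⟨s, hs, hproj⟩ := this
    obtain ⟨h1, h2, h3⟩ := (hN s).mp hs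
    have hne := hcast_ne s h1 h2
    rw [hproj]
    exact quadraticChar_neg_one_iff_not_isSquare.mpr
      (fun hsq => h3 ((aux_isQRmod_iff hne).mpr hsq))
  · intro hg
    set v := projP p g with hv
    have hvne : v ≠ 0 := by
      intro h; rw [h, quadraticChar_zero] at hg; exact absurd hg (by norm_num)
    have hnsq : ¬ IsSquare v := quadraticChar_neg_one_iff_not_isSquare.mp hg
    have hval0 : v.val ≠ 0 := fun h => hvne (by
      have := ZMod.natCast_rightInverse (n := p) v
      rw [h] at this; simpa using this.symm)
    have hvlt := ZMod.val_lt v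
    have hvcast : ((v.val : ℕ) : ZMod p) = v := ZMod.natCast_rightInverse v
    have hQR : ¬ IsQRmod p v.val := fun hqr =>
      hnsq (by rw [← hvcast]; exact (aux_isQRmod_iff (by rw [hvcast]; exact hvne)).mp hqr)
    have hsQ : v.val ∈ N := (hN v.val).mpr ⟨by omega, by omega, hQR⟩
    have hgmem : g ∈ (Finset.univ.filter fun g : ZMod (2 * p) => projP p g = v) := by
      simp [hv]
    rw [aux_proj_fiber, Finset.mem_insert, Finset.mem_singleton] at hgmem
    rw [liftPair, Finset.mem_union, Finset.mem_image, Finset.mem_image]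
    rcases hgmem with h | h
    · exact Or.inl ⟨v.val, hsQ, h.symm⟩
    · exact Or.inr ⟨v.val, hsQ, h.symm⟩

end AuxQRDF

section AuxDInt

theorem aux_count_dInt {G : Type*} [AddGroup G] [DecidableEq G] (D : Finset G) (g : G) :
    (dInt D).count g = ((D ×ˢ D).filter fun q => q.1 ≠ q.2 ∧ q.1 - q.2 = g).card := by
  rw [dInt, Multiset.count_map, ← Finset.filter_val, Finset.filter_filter]
  have heq : ((D ×ˢ D).filter fun a : G × G => a.1 ≠ a.2 ∧ g = a.1 - a.2)
      = ((D ×ˢ D).filter fun q : G × G => q.1 ≠ q.2 ∧ q.1 - q.2 = g) :=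
    Finset.filter_congr fun q _ =>
      ⟨fun ⟨h1, h2⟩ => ⟨h1, h2.symm⟩, fun ⟨h1, h2⟩ => ⟨h1, h2.symm⟩⟩
  rw [heq]
  rfl

theorem aux_count_dInt_zero {G : Type*} [AddGroup G] [DecidableEq G] (D : Finset G) :
    (dInt D).count 0 = 0 := by
  rw [aux_count_dInt, Finset.card_eq_zero, Finset.filter_eq_empty_iff]
  rintro ⟨x, y⟩ _ ⟨hne, hxy⟩
  exact hne (sub_eq_zero.mp hxy)

theorem aux_count_dInt_ne_zero {G : Type*} [AddCommGroup G] [DecidableEq G] [Fintype G]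
    (D : Finset G) (g : G) (hg : g ≠ 0) :
    (dInt D).count g = (Finset.univ.filter fun y : G => y + g ∈ D ∧ y ∈ D).card := by
  rw [aux_count_dInt]
  refine Finset.card_nbij' (fun q => q.2) (fun y => (y + g, y)) ?_ ?_ ?_ ?_
  · rintro ⟨x, y⟩ hq
    simp only [Finset.mem_coe, Finset.mem_filter, Finset.mem_product] at hq
    obtain ⟨⟨hx, hy⟩, _, hsub⟩ := hq
    simp only [Finset.mem_coe, Finset.mem_filter, Finset.mem_univ, true_and]
    have : x = y + g := by rw [← hsub]; abel
    exact ⟨this ▸ hx, hy⟩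
  · intro y hy
    simp only [Finset.mem_coe, Finset.mem_filter, Finset.mem_univ, true_and] at hy
    simp only [Finset.mem_coe, Finset.mem_filter, Finset.mem_product]
    refine ⟨⟨hy.1, hy.2⟩, ?_, by abel⟩
    intro h
    apply hg
    have := congrArg (fun z => z - y) h
    simpa using this
  · rintro ⟨x, y⟩ hq
    simp only [Finset.mem_coe, Finset.mem_filter, Finset.mem_product] at hq
    obtain ⟨_, _, hsub⟩ := hq
    have : x = y + g := by rw [← hsub]; abel
    simp [this]
  · intro y _; rfl

theorem aux_count_rhs {G : Type*} [DecidableEq G] (A B : Finset G) (c₀ c₁ m : ℕ) (c g : G) :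
    (c₀ • A.val + c₁ • B.val + Multiset.replicate m c).count g
      = c₀ * (if g ∈ A then 1 else 0) + c₁ * (if g ∈ B then 1 else 0)
        + (if g = c then m else 0) := by
  rw [Multiset.count_add, Multiset.count_add, Multiset.count_nsmul, Multiset.count_nsmul,
    Multiset.count_replicate]
  rw [Multiset.count_eq_of_nodup A.nodup, Multiset.count_eq_of_nodup B.nodup]
  simp [Finset.mem_val, eq_comm]

end AuxDInt

theorem aux_dInt_eq {p : ℕ} [Fact p.Prime] (hp4 : p % 4 = 1) (ε : ℤ) (hε : ε = 1 ∨ ε = -1)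
    (A B : Finset (ZMod (2 * p)))
    (hA : ∀ g, g ∈ A ↔ quadraticChar (ZMod p) (projP p g) = ε)
    (hB : ∀ g, g ∈ B ↔ quadraticChar (ZMod p) (projP p g) = -ε) :
    dInt A = ((p - 5) / 2) • A.val + ((p - 1) / 2) • B.val +
        Multiset.replicate (p - 1) ((p : ZMod (2 * p))) := by
  have hp2 : p ≠ 2 := by intro h; rw [h] at hp4; norm_num at hp4
  have hp5 : 5 ≤ p := by have := (Fact.out : p.Prime).two_le; omega
  have hεne : ε ≠ 0 := by rcases hε with h | h <;> subst h <;> norm_num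
  have hee : ε * ε = 1 := by rcases hε with h | h <;> subst h <;> norm_num
  have hnee : -ε ≠ ε := by rcases hε with h | h <;> subst h <;> norm_num
  have hpne : (p : ZMod (2 * p)) ≠ 0 := aux_p_ne_zero
  have h0A : (0 : ZMod (2 * p)) ∉ A := fun h => by
    have := (hA 0).mp h
    rw [map_zero, quadraticChar_zero] at this
    exact hεne this.symm
  have h0B : (0 : ZMod (2 * p)) ∉ B := fun h => by
    have := (hB 0).mp h
    rw [map_zero, quadraticChar_zero] at this
    exact (neg_ne_zero.mpr hεne) this.symm
  have hpA : (p : ZMod (2 * p)) ∉ A := fun h => by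
    have := (hA _).mp h
    rw [aux_proj_p, quadraticChar_zero] at this
    exact hεne this.symm
  have hpB : (p : ZMod (2 * p)) ∉ B := fun h => by
    have := (hB _).mp h
    rw [aux_proj_p, quadraticChar_zero] at this
    exact (neg_ne_zero.mpr hεne) this.symm
  ext g
  rw [aux_count_rhs]
  by_cases hb : projP p g = 0
  · rcases (aux_proj_eq_zero_iff g).mp hb with rfl | rfl
    · rw [aux_count_dInt_zero]
      have hne0p : ¬ ((0 : ZMod (2 * p)) = (p : ZMod (2 * p))) := fun h => hpne h.symm
      simp [h0A, h0B, hne0p]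
    · rw [aux_count_dInt_ne_zero A _ hpne]
      have hcongr : (Finset.univ.filter fun y : ZMod (2 * p) =>
            y + (p : ZMod (2 * p)) ∈ A ∧ y ∈ A)
          = Finset.univ.filter fun y : ZMod (2 * p) =>
            (fun v => quadraticChar (ZMod p) v = ε) (projP p y) := by
        apply Finset.filter_congr
        intro y _
        rw [hA, hA, map_add, aux_proj_p, add_zero]
        exact ⟨And.left, fun h => ⟨h, h⟩⟩
      rw [hcongr, aux_card_filter_proj (fun v => quadraticChar (ZMod p) v = ε),
        aux_chi_level_card hp2 ε hε]
      simp [hpA, hpB]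
  · have hg0 : g ≠ 0 := fun h => hb (by rw [h, map_zero])
    have hgp : ¬ (g = (p : ZMod (2 * p))) := fun h => hb (by rw [h, aux_proj_p])
    rw [aux_count_dInt_ne_zero A g hg0]
    have hcongr : (Finset.univ.filter fun y : ZMod (2 * p) => y + g ∈ A ∧ y ∈ A)
        = Finset.univ.filter fun y : ZMod (2 * p) =>
          (fun v => quadraticChar (ZMod p) v = ε
            ∧ quadraticChar (ZMod p) (v + projP p g) = ε) (projP p y) := by
      apply Finset.filter_congr
      intro y _
      rw [hA, hA, map_add]
      exact ⟨fun ⟨h1, h2⟩ => ⟨h2, h1⟩, fun ⟨h1, h2⟩ => ⟨h2, h1⟩⟩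
    rw [hcongr, aux_card_filter_proj (fun v => quadraticChar (ZMod p) v = ε
      ∧ quadraticChar (ZMod p) (v + projP p g) = ε)]
    have hpair := aux_chi_pair_card hp4 ε hε (projP p g) hb
    have hdich : quadraticChar (ZMod p) (projP p g) = ε
        ∨ quadraticChar (ZMod p) (projP p g) = -ε := by
      rcases quadraticChar_dichotomy (F := ZMod p) (a := projP p g) hb with h | h <;>
        rcases hε with h' | h' <;> subst h' <;> rw [h] <;> norm_num
    rcases hdich with hχ | hχ
    · have hgA : g ∈ A := (hA g).mpr hχ
      have hgB : g ∉ B := fun h => hnee (((hB g).mp h).symm.trans hχ)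
      rw [hχ] at hpair
      have h4 : (4 : ℤ) * (Finset.univ.filter fun v : ZMod p =>
          quadraticChar (ZMod p) v = ε
            ∧ quadraticChar (ZMod p) (v + projP p g) = ε).card = (p : ℤ) - 5 := by
        rw [hpair]; linarith [hee]
      simp only [hgA, hgB, hgp, if_true, if_false, mul_one, mul_zero, add_zero]
      omega
    · have hgA : g ∉ A := fun h => hnee (hχ.symm.trans ((hA g).mp h))
      have hgB : g ∈ B := (hB g).mpr hχ
      rw [hχ] at hpair
      have h4 : (4 : ℤ) * (Finset.univ.filter fun v : ZMod p =>
          quadraticChar (ZMod p) v = ε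
            ∧ quadraticChar (ZMod p) (v + projP p g) = ε).card = (p : ℤ) - 1 := by
        rw [hpair]; linarith [hee]
      simp only [hgA, hgB, hgp, if_true, if_false, mul_one, mul_zero, add_zero, zero_add]
      omega

/-- for a prime `p ≡ 1 (mod 4)`, with `A₀ = {s, s+p : s a QR mod p}` and
`A₁ = {t, t+p : t a non-QR mod p}` in `ℤ_{2p}`, the multiset `Δ(A₀)` consists of
`(p−5)/2` copies of `A₀`, `(p−1)/2` copies of `A₁` and `p−1` copies of `{p}`;
and symmetrically for `Δ(A₁)`. -/
theorem quadratic_residue_diffs (p : ℕ) (hp : p.Prime) (hp4 : p % 4 = 1)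
    (Q N : Finset ℕ)
    (hQ : ∀ s : ℕ, s ∈ Q ↔ (1 ≤ s ∧ s ≤ p - 1 ∧ IsQRmod p s))
    (hN : ∀ t : ℕ, t ∈ N ↔ (1 ≤ t ∧ t ≤ p - 1 ∧ ¬ IsQRmod p t)) :
    dInt (liftPair p Q) =
      ((p - 5) / 2) • (liftPair p Q).val + ((p - 1) / 2) • (liftPair p N).val +
        Multiset.replicate (p - 1) ((p : ZMod (2 * p))) ∧
    dInt (liftPair p N) =
      ((p - 5) / 2) • (liftPair p N).val + ((p - 1) / 2) • (liftPair p Q).val +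
        Multiset.replicate (p - 1) ((p : ZMod (2 * p))) := by
  haveI : Fact p.Prime := ⟨hp⟩
  constructor
  · exact aux_dInt_eq hp4 1 (Or.inl rfl) (liftPair p Q) (liftPair p N)
      (aux_mem_liftPair_Q Q hQ)
      (fun g => by rw [aux_mem_liftPair_N N hN g])
  · exact aux_dInt_eq hp4 (-1) (Or.inr rfl) (liftPair p N) (liftPair p Q)
      (aux_mem_liftPair_N N hN)
      (fun g => by rw [aux_mem_liftPair_Q Q hQ g]; norm_num)
end

section
/- Let p be a prime with p ≡ 1 (mod 4) and let G = ℤ_{2p} with subgroup H = {0, p}. Define A₀ = {s, s+p ∈ ℤ_{2p} : s ∈ {1,…,p−1} is a nonzero quadratic residue modulo p} and A₁ = {t, t+p ∈ ℤ_{2p} : t ∈ {1,…,p−1} is a quadratic non-residue modulo p}. Then {A₀, A₁} forms a (2p, 2, p−1, p−3, 2p−2)-DPDF and a (2p, 2, p−1, p−1, 0)-EPDF in ℤ_{2p}, whose sets partition G∖H. -/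
open Finset

variable {G : Type*} [AddCommGroup G] [DecidableEq G]

lemma qr_count_pairs (D₁ D₂ : Finset G) (g : G) :
    ((D₁ ×ˢ D₂).filter fun q => g = q.1 - q.2).card
      = (D₂.filter fun y => g + y ∈ D₁).card := by
  refine Finset.card_bij' (fun q _ => q.2) (fun y _ => (g + y, y)) ?_ ?_ ?_ ?_
  · intro q hq
    simp only [Finset.mem_filter, Finset.mem_product] at hq ⊢
    refine ⟨hq.1.2, ?_⟩
    have h : g + q.2 = q.1 := eq_sub_iff_add_eq.mp hq.2
    rw [h]; exact hq.1.1
  · intro y hy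
    simp only [Finset.mem_filter, Finset.mem_product] at hy ⊢
    exact ⟨⟨hy.2, hy.1⟩, by abel⟩
  · intro q hq
    simp only [Finset.mem_filter, Finset.mem_product] at hq
    have h : g + q.2 = q.1 := eq_sub_iff_add_eq.mp hq.2
    exact Prod.ext h rfl
  · intro y _; rfl

lemma qr_count_dExt (D₁ D₂ : Finset G) (g : G) :
    (dExt D₁ D₂).count g = (D₂.filter fun y => g + y ∈ D₁).card := by
  rw [dExt, Multiset.count_map, ← Finset.filter_val]
  exact qr_count_pairs D₁ D₂ g

lemma qr_count_dInt (D : Finset G) (g : G) (hg : g ≠ 0) :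
    (dInt D).count g = (D.filter fun y => g + y ∈ D).card := by
  have h1 : ((D ×ˢ D).filter fun q => q.1 ≠ q.2).filter (fun q => g = q.1 - q.2)
      = (D ×ˢ D).filter fun q => g = q.1 - q.2 := by
    rw [Finset.filter_filter]
    apply Finset.filter_congr
    intro q _
    constructor
    · exact fun h => h.2
    · intro h
      refine ⟨fun e => hg ?_, h⟩
      rw [h, e, sub_self]
  rw [dInt, Multiset.count_map, ← Finset.filter_val, ← Finset.card_def, h1, qr_count_pairs]


section Fiber
variable {p : ℕ} [hpp : Fact p.Prime]

lemma qr_fiber_eq (a : ZMod p) :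
    (univ.filter fun x : ZMod (2*p) => ZMod.castHom (dvd_mul_left p 2) (ZMod p) x = a)
      = {((a.val : ℕ) : ZMod (2*p)), (((a.val + p : ℕ)) : ZMod (2*p))} := by
  haveI : NeZero (2*p) := ⟨by have := hpp.out.pos; omega⟩
  ext x
  simp only [Finset.mem_filter, Finset.mem_univ, true_and, Finset.mem_insert,
    Finset.mem_singleton]
  have hπ : ZMod.castHom (dvd_mul_left p 2) (ZMod p) x = ((x.val : ℕ) : ZMod p) := by
    rw [ZMod.castHom_apply, ← ZMod.natCast_val]
  constructor
  · intro h
    have hval : x.val % p = a.val := by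
      rw [hπ] at h
      have := congrArg ZMod.val h
      rwa [ZMod.val_natCast] at this
    have hlt : x.val < 2*p := ZMod.val_lt x
    have hap : a.val < p := ZMod.val_lt a
    have hx : x.val = a.val ∨ x.val = a.val + p := by
      have hdm := Nat.div_add_mod x.val p
      have hd : x.val / p < 2 := Nat.div_lt_of_lt_mul (by omega)
      have h01 : x.val / p = 0 ∨ x.val / p = 1 := by interval_cases h01 : x.val / p <;> simp
      rcases h01 with h01 | h01 <;> rw [h01] at hdm <;> omega
    rcases hx with hx | hx
    · left; rw [← hx, ZMod.natCast_zmod_val]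
    · right; rw [← hx, ZMod.natCast_zmod_val]
  · intro h
    rcases h with h | h <;> rw [h, map_natCast] <;> push_cast <;>
      simp [ZMod.natCast_zmod_val, ZMod.natCast_self]

lemma qr_card_fiber (a : ZMod p) :
    (univ.filter fun x : ZMod (2*p) =>
      ZMod.castHom (dvd_mul_left p 2) (ZMod p) x = a).card = 2 := by
  haveI : NeZero (2*p) := ⟨by have := hpp.out.pos; omega⟩
  rw [qr_fiber_eq, Finset.card_insert_of_notMem, Finset.card_singleton]
  simp only [Finset.mem_singleton]
  intro h
  have hap : a.val < p := ZMod.val_lt a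
  have hp0 : 0 < p := hpp.out.pos
  have := congrArg ZMod.val h
  rw [ZMod.val_natCast, ZMod.val_natCast, Nat.mod_eq_of_lt (by omega),
    Nat.mod_eq_of_lt (by omega)] at this
  omega

lemma qr_card_filter_comp (P : ZMod p → Prop) [DecidablePred P] :
    (univ.filter fun x : ZMod (2*p) =>
        P (ZMod.castHom (dvd_mul_left p 2) (ZMod p) x)).card
      = 2 * (univ.filter P).card := by
  set π := ZMod.castHom (dvd_mul_left p 2) (ZMod p) with hπ
  rw [Finset.card_eq_sum_card_fiberwise
    (f := π) (t := univ.filter P)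
    (fun x hx => by
      simp only [Finset.mem_coe, Finset.mem_filter, Finset.mem_univ, true_and] at hx ⊢; exact hx)]
  have h : ∀ b ∈ univ.filter P,
      ((univ.filter fun x : ZMod (2*p) => P (π x)).filter fun x => π x = b).card = 2 := by
    intro b hb
    have hPb : P b := (Finset.mem_filter.mp hb).2
    have he : (univ.filter fun x : ZMod (2*p) => P (π x)).filter (fun x => π x = b)
        = univ.filter fun x : ZMod (2*p) => π x = b := by
      ext x
      simp only [Finset.mem_filter, Finset.mem_univ, true_and]
      exact ⟨fun h => h.2, fun h => ⟨h ▸ hPb, h⟩⟩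
    rw [he, hπ, qr_card_fiber]
  rw [Finset.sum_congr rfl h, Finset.sum_const, smul_eq_mul, mul_comm]

end Fiber

lemma qr_two_mul_card {α : Type*} [Fintype α] [DecidableEq α] (f : α → ℤ)
    (hf : ∀ a, f a = 0 ∨ f a = 1 ∨ f a = -1) :
    (2 * ((univ.filter fun a => f a = 1).card : ℤ)
        = ((univ.filter fun a => f a ≠ 0).card : ℤ) + ∑ a, f a)
    ∧ (2 * ((univ.filter fun a => f a = -1).card : ℤ)
        = ((univ.filter fun a => f a ≠ 0).card : ℤ) - ∑ a, f a) := by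
  have h1 : ∑ a, f a
      = (∑ a : α, (if f a = 1 then (1:ℤ) else 0)) - ∑ a : α, (if f a = -1 then (1:ℤ) else 0) := by
    rw [← Finset.sum_sub_distrib]
    apply Finset.sum_congr rfl
    intro a _
    rcases hf a with h | h | h <;> rw [h] <;> norm_num
  have h2 : ((univ.filter fun a => f a ≠ 0).card : ℤ)
      = (∑ a : α, (if f a = 1 then (1:ℤ) else 0)) + ∑ a : α, (if f a = -1 then (1:ℤ) else 0) := by
    rw [← Finset.sum_boole, ← Finset.sum_add_distrib]
    apply Finset.sum_congr rfl
    intro a _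
    rcases hf a with h | h | h <;> rw [h] <;> norm_num
  have h3 : ((univ.filter fun a => f a = 1).card : ℤ)
      = ∑ a : α, (if f a = 1 then (1:ℤ) else 0) := (Finset.sum_boole _ _).symm
  have h4 : ((univ.filter fun a => f a = -1).card : ℤ)
      = ∑ a : α, (if f a = -1 then (1:ℤ) else 0) := (Finset.sum_boole _ _).symm
  constructor <;> linarith [h1, h2, h3, h4]



section Char
variable {p : ℕ} [hpp : Fact p.Prime]

lemma qr_sum_quadChar (hp2 : p ≠ 2) (g : ZMod p) (hg : g ≠ 0) :
    ∑ a : ZMod p, quadraticChar (ZMod p) a * quadraticChar (ZMod p) (g + a) = -1 := by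
  set χ := quadraticChar (ZMod p) with hχ
  have hchar : ringChar (ZMod p) ≠ 2 := by
    rw [ZMod.ringChar_zmod_n]; exact hp2
  have h0 : ∑ a ∈ univ.erase (0 : ZMod p), χ a * χ (g + a)
      = ∑ a : ZMod p, χ a * χ (g + a) :=
    Finset.sum_erase _ (by simp [hχ, quadraticChar_eq_zero_iff])
  rw [← h0]
  have h1 : ∀ a ∈ univ.erase (0 : ZMod p), χ a * χ (g + a) = χ (1 + g * a⁻¹) := by
    intro a ha
    have ha0 : a ≠ 0 := (Finset.mem_erase.mp ha).1
    have hsq : χ a * χ a = 1 := by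
      rcases quadraticChar_isQuadratic (ZMod p) a with h | h | h
      · exact absurd (quadraticChar_eq_zero_iff.mp h) ha0
      · rw [hχ, h]; norm_num
      · rw [hχ, h]; norm_num
    have hrw : g + a = a * (1 + g * a⁻¹) := by
      field_simp
      ring
    rw [hrw, map_mul, ← mul_assoc, hsq, one_mul]
  rw [Finset.sum_congr rfl h1]
  have h2 : ∑ a ∈ univ.erase (0 : ZMod p), χ (1 + g * a⁻¹)
      = ∑ b ∈ univ.erase (1 : ZMod p), χ b := by
    apply Finset.sum_nbij' (i := fun a => 1 + g * a⁻¹) (j := fun b => g * (b - 1)⁻¹)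
    · intro a ha
      have ha0 : a ≠ 0 := (Finset.mem_erase.mp ha).1
      simp only [Finset.mem_erase, Finset.mem_univ, and_true]
      intro h
      have : g * a⁻¹ = 0 := by linear_combination h
      rcases mul_eq_zero.mp this with h' | h'
      · exact hg h'
      · exact ha0 (inv_eq_zero.mp h')
    · intro b hb
      have hb1 : b ≠ 1 := (Finset.mem_erase.mp hb).1
      simp only [Finset.mem_erase, Finset.mem_univ, and_true]
      intro h
      rcases mul_eq_zero.mp h with h' | h'
      · exact hg h'
      · exact hb1 (by
          have := inv_eq_zero.mp h'
          have := sub_eq_zero.mp this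
          exact this)
    · intro a ha
      have ha0 : a ≠ 0 := (Finset.mem_erase.mp ha).1
      field_simp
      simp [hg]
    · intro b hb
      have hb1 : b ≠ 1 := (Finset.mem_erase.mp hb).1
      have hb1' : b - 1 ≠ 0 := sub_ne_zero.mpr hb1
      field_simp
      ring
    · intro a _; rfl
  rw [h2]
  have h3 : ∑ b ∈ univ.erase (1 : ZMod p), χ b + χ 1 = ∑ b : ZMod p, χ b :=
    Finset.sum_erase_add univ _ (Finset.mem_univ 1)
  have h4 : ∑ b : ZMod p, χ b = 0 := quadraticChar_sum_zero hchar
  have h5 : χ 1 = 1 := χ.map_one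
  linarith

lemma qr_isQRmod_iff (s : ℕ) :
    IsQRmod p s ↔ ((s : ZMod p) ≠ 0 ∧ IsSquare ((s : ZMod p))) := by
  constructor
  · rintro ⟨x, hx, hmod⟩
    have h : ((s : ℤ) : ZMod p) = ((x ^ 2 : ℤ) : ZMod p) :=
      (ZMod.intCast_eq_intCast_iff _ _ _).mpr hmod
    push_cast at h
    have hx0 : (x : ZMod p) ≠ 0 := fun h0 =>
      hx ((ZMod.intCast_zmod_eq_zero_iff_dvd x p).mp h0)
    rw [h]
    exact ⟨pow_ne_zero 2 hx0, ⟨(x : ZMod p), by ring⟩⟩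
  · rintro ⟨h0, r, hr⟩
    have hr0 : r ≠ 0 := by
      intro h
      rw [h, mul_zero] at hr
      exact h0 hr
    refine ⟨(r.val : ℤ), ?_, ?_⟩
    · rw [Int.natCast_dvd_natCast]
      intro hdvd
      have : (r.val : ZMod p) = 0 := (ZMod.natCast_eq_zero_iff _ _).mpr hdvd
      rw [ZMod.natCast_zmod_val] at this
      exact hr0 this
    · rw [← ZMod.intCast_eq_intCast_iff]
      push_cast
      rw [ZMod.natCast_zmod_val, hr]
      ring

lemma qr_mem_liftPair (S : Finset ℕ) (c : ℤ) (hc : c = 1 ∨ c = -1)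
    (hS : ∀ s : ℕ, s ∈ S ↔ (1 ≤ s ∧ s ≤ p - 1 ∧ quadraticChar (ZMod p) ((s : ZMod p)) = c))
    (x : ZMod (2*p)) :
    x ∈ liftPair p S
      ↔ quadraticChar (ZMod p) (ZMod.castHom (dvd_mul_left p 2) (ZMod p) x) = c := by
  haveI : NeZero (2*p) := ⟨by have := hpp.out.pos; omega⟩
  set χ := quadraticChar (ZMod p) with hχ
  set π := ZMod.castHom (dvd_mul_left p 2) (ZMod p) with hπdef
  have hπnat : ∀ s : ℕ, π ((s : ℕ) : ZMod (2*p)) = (s : ZMod p) := fun s => map_natCast π s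
  constructor
  · intro hx
    rcases Finset.mem_union.mp hx with hx | hx
    · rcases Finset.mem_image.mp hx with ⟨s, hsS, rfl⟩
      rw [hπnat]
      exact ((hS s).mp hsS).2.2
    · rcases Finset.mem_image.mp hx with ⟨s, hsS, rfl⟩
      have : π ((s : ZMod (2*p)) + (p : ZMod (2*p))) = (s : ZMod p) := by
        rw [map_add, hπnat, map_natCast, ZMod.natCast_self, add_zero]
      rw [this]
      exact ((hS s).mp hsS).2.2
  · intro h
    have hπ0 : π x ≠ 0 := by
      intro h0
      rw [h0] at h
      have : χ (0 : ZMod p) = 0 := quadraticChar_eq_zero_iff.mpr rfl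
      rw [this] at h
      rcases hc with rfl | rfl <;> norm_num at h
    set s := (π x).val with hsdef
    have hs1 : 1 ≤ s := by
      rcases Nat.eq_zero_or_pos s with h' | h'
      · exact absurd ((ZMod.val_eq_zero _).mp h') hπ0
      · exact h'
    have hslt : s < p := ZMod.val_lt (π x)
    have hsp : s ≤ p - 1 := by omega
    have hcast : ((s : ℕ) : ZMod p) = π x := ZMod.natCast_zmod_val (π x)
    have hsS : s ∈ S := (hS s).mpr ⟨hs1, hsp, by rw [hcast]; exact h⟩
    have hfib : x ∈ ({((s : ℕ) : ZMod (2*p)), (((s + p : ℕ)) : ZMod (2*p))} :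
        Finset (ZMod (2*p))) := by
      have hx : x ∈ univ.filter fun y : ZMod (2*p) =>
          ZMod.castHom (dvd_mul_left p 2) (ZMod p) y = π x := by
        simp [hπdef]
      rw [qr_fiber_eq (π x)] at hx
      exact hx
    rcases Finset.mem_insert.mp hfib with h' | h'
    · exact Finset.mem_union_left _ (Finset.mem_image.mpr ⟨s, hsS, h'.symm⟩)
    · refine Finset.mem_union_right _ (Finset.mem_image.mpr ⟨s, hsS, ?_⟩)
      rw [Finset.mem_singleton.mp h']
      push_cast
      ring

end Char
section MainCount

open Finset

variable {p : ℕ} [hpp : Fact p.Prime]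

local notation "χ" => quadraticChar (ZMod p)
local notation "π" => ZMod.castHom (dvd_mul_left p 2) (ZMod p)

lemma qr_card_ne_zero : (univ.filter fun a : ZMod p => ¬ a = 0).card = p - 1 := by
  have e : (univ.filter fun a : ZMod p => ¬ a = 0) = univ.erase 0 := by
    ext a; simp [Finset.mem_erase]
  rw [e, Finset.card_erase_of_mem (Finset.mem_univ _), Finset.card_univ, ZMod.card]

lemma qr_card_char (hp2 : p ≠ 2) (c : ℤ) (hc : c = 1 ∨ c = -1) :
    2 * (univ.filter fun a : ZMod p => χ a = c).card = p - 1 := by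
  have hchar : ringChar (ZMod p) ≠ 2 := by rw [ZMod.ringChar_zmod_n]; exact hp2
  have hval := quadraticChar_isQuadratic (ZMod p)
  obtain ⟨k1, k2⟩ := qr_two_mul_card (fun a : ZMod p => χ a) hval
  have hsum : ∑ a : ZMod p, χ a = 0 := quadraticChar_sum_zero hchar
  have hne : (univ.filter fun a : ZMod p => χ a ≠ 0).card = p - 1 := by
    have h1 : (univ.filter fun a : ZMod p => χ a ≠ 0)
        = univ.filter fun a : ZMod p => ¬ a = 0 := by
      apply Finset.filter_congr
      intro a _
      exact not_congr quadraticChar_eq_zero_iff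
    rw [h1, qr_card_ne_zero]
  have h2le : 2 ≤ p := hpp.out.two_le
  rcases hc with rfl | rfl
  · rw [hsum, hne] at k1; omega
  · rw [hsum, hne] at k2; omega

lemma qr_count_main (hp2 : p ≠ 2) (h : ZMod p) :
    2 * (univ.filter fun a : ZMod p => χ a * χ (h + a) = 1).card
        = (if h = 0 then 2 * p - 2 else p - 3)
    ∧ 2 * (univ.filter fun a : ZMod p => χ a * χ (h + a) = -1).card
        = (if h = 0 then 0 else p - 1) := by
  have hval := quadraticChar_isQuadratic (ZMod p)
  have h2le : 2 ≤ p := hpp.out.two_le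
  have hf : ∀ a : ZMod p,
      (χ a * χ (h + a) = 0) ∨ (χ a * χ (h + a) = 1) ∨ (χ a * χ (h + a) = -1) := by
    intro a
    rcases hval a with h1 | h1 | h1 <;> rcases hval (h + a) with h2 | h2 | h2 <;>
      rw [h1, h2] <;> norm_num
  obtain ⟨k1, k2⟩ := qr_two_mul_card (fun a : ZMod p => χ a * χ (h + a)) hf
  by_cases h0 : h = 0
  · subst h0
    have hsum : ∑ a : ZMod p, χ a * χ ((0 : ZMod p) + a) = ((p : ℤ) - 1) := by
      have hterm : ∀ a ∈ (univ : Finset (ZMod p)),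
          χ a * χ ((0 : ZMod p) + a) = (if ¬ a = 0 then (1 : ℤ) else 0) := by
        intro a _
        rw [zero_add]
        rcases hval a with h1 | h1 | h1
        · have ha0 : a = 0 := quadraticChar_eq_zero_iff.mp h1
          rw [h1, if_neg (not_not.mpr ha0)]; ring
        · have ha0 : a ≠ 0 := by
            intro e
            rw [e, quadraticChar_eq_zero_iff.mpr rfl] at h1
            norm_num at h1
          rw [h1, if_pos ha0]; norm_num
        · have ha0 : a ≠ 0 := by
            intro e
            rw [e, quadraticChar_eq_zero_iff.mpr rfl] at h1
            norm_num at h1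
          rw [h1, if_pos ha0]; norm_num
      rw [Finset.sum_congr rfl hterm, Finset.sum_boole, qr_card_ne_zero]
      push_cast
      omega
    have hne : (univ.filter fun a : ZMod p => χ a * χ ((0 : ZMod p) + a) ≠ 0).card = p - 1 := by
      have h1 : (univ.filter fun a : ZMod p => χ a * χ ((0 : ZMod p) + a) ≠ 0)
          = univ.filter fun a : ZMod p => ¬ a = 0 := by
        apply Finset.filter_congr
        intro a _
        rw [zero_add, Ne, mul_self_eq_zero]
        exact not_congr quadraticChar_eq_zero_iff
      rw [h1, qr_card_ne_zero]
    rw [hsum, hne] at k1 k2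
    rw [if_pos rfl, if_pos rfl]
    omega
  · have hsum : ∑ a : ZMod p, χ a * χ (h + a) = -1 := qr_sum_quadChar hp2 h h0
    have hne : (univ.filter fun a : ZMod p => χ a * χ (h + a) ≠ 0).card = p - 1 - 1 := by
      have hpt : ∀ a : ZMod p, (χ a * χ (h + a) ≠ 0) ↔ (a ≠ 0 ∧ a ≠ -h) := by
        intro a
        rw [mul_ne_zero_iff]
        constructor
        · rintro ⟨h1', h2'⟩
          constructor
          · intro e; exact h1' (by rw [e]; exact quadraticChar_eq_zero_iff.mpr rfl)
          · intro e
            apply h2'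
            rw [e, quadraticChar_eq_zero_iff]
            ring
        · rintro ⟨h1', h2'⟩
          constructor
          · intro e; exact h1' (quadraticChar_eq_zero_iff.mp e)
          · intro e
            apply h2'
            have he := quadraticChar_eq_zero_iff.mp e
            linear_combination he
      have e : (univ.filter fun a : ZMod p => χ a * χ (h + a) ≠ 0)
          = (univ.erase (-h)).erase 0 := by
        ext a
        rw [Finset.mem_filter, Finset.mem_erase, Finset.mem_erase]
        simp only [Finset.mem_univ, true_and, and_true]
        rw [hpt a]
      rw [e, Finset.card_erase_of_mem, Finset.card_erase_of_mem (Finset.mem_univ _),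
        Finset.card_univ, ZMod.card]
      all_goals try exact Finset.mem_erase.mpr ⟨(neg_ne_zero.mpr h0).symm, Finset.mem_univ _⟩
    rw [hsum, hne] at k1 k2
    rw [if_neg h0, if_neg h0]
    omega

end MainCount
section SetCount

open Finset

variable {p : ℕ} [hpp : Fact p.Prime]

local notation "χ" => quadraticChar (ZMod p)
local notation "π" => ZMod.castHom (dvd_mul_left p 2) (ZMod p)

lemma qr_ker (x : ZMod (2*p)) : π x = 0 ↔ (x = 0 ∨ x = (p : ZMod (2*p))) := by
  constructor
  · intro h
    have hx : x ∈ univ.filter (fun y : ZMod (2*p) => π y = (0 : ZMod p)) := by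
      rw [Finset.mem_filter]; exact ⟨Finset.mem_univ _, h⟩
    rw [qr_fiber_eq] at hx
    simpa using hx
  · rintro (rfl | rfl)
    · simp
    · rw [map_natCast, ZMod.natCast_self]

lemma qr_counts (hp2 : p ≠ 2) (A B : Finset (ZMod (2*p)))
    (hA : ∀ x, x ∈ A ↔ χ (π x) = 1) (hB : ∀ x, x ∈ B ↔ χ (π x) = -1) :
    A.card = p - 1 ∧ B.card = p - 1 ∧
    (∀ g : ZMod (2*p), g ≠ 0 → π g ≠ 0 →
      (dInt A + dInt B).count g = p - 3 ∧ (dExt A B + dExt B A).count g = p - 1) ∧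
    (∀ g : ZMod (2*p), g ≠ 0 → π g = 0 →
      (dInt A + dInt B).count g = 2 * p - 2 ∧ (dExt A B + dExt B A).count g = 0) := by
  have hAset : A = univ.filter (fun x : ZMod (2*p) => (fun a : ZMod p => χ a = 1) (π x)) := by
    ext x; simp only [Finset.mem_filter, Finset.mem_univ, true_and]; exact hA x
  have hBset : B = univ.filter (fun x : ZMod (2*p) => (fun a : ZMod p => χ a = -1) (π x)) := by
    ext x; simp only [Finset.mem_filter, Finset.mem_univ, true_and]; exact hB x
  -- generic count computation
  have hcount : ∀ g : ZMod (2*p), g ≠ 0 →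
      (dInt A + dInt B).count g
          = 2 * (univ.filter fun a : ZMod p => χ a * χ (π g + a) = 1).card
      ∧ (dExt A B + dExt B A).count g
          = 2 * (univ.filter fun a : ZMod p => χ a * χ (π g + a) = -1).card := by
    intro g hg
    have e11 : A.filter (fun y => g + y ∈ A)
        = univ.filter (fun y : ZMod (2*p) =>
            (fun a : ZMod p => χ a = 1 ∧ χ (π g + a) = 1) (π y)) := by
      ext y
      simp only [Finset.mem_filter, Finset.mem_univ, true_and]
      rw [hA y, hA (g + y), map_add]
    have e22 : B.filter (fun y => g + y ∈ B)
        = univ.filter (fun y : ZMod (2*p) =>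
            (fun a : ZMod p => χ a = -1 ∧ χ (π g + a) = -1) (π y)) := by
      ext y
      simp only [Finset.mem_filter, Finset.mem_univ, true_and]
      rw [hB y, hB (g + y), map_add]
    have e21 : B.filter (fun y => g + y ∈ A)
        = univ.filter (fun y : ZMod (2*p) =>
            (fun a : ZMod p => χ a = -1 ∧ χ (π g + a) = 1) (π y)) := by
      ext y
      simp only [Finset.mem_filter, Finset.mem_univ, true_and]
      rw [hB y, hA (g + y), map_add]
    have e12 : A.filter (fun y => g + y ∈ B)
        = univ.filter (fun y : ZMod (2*p) =>
            (fun a : ZMod p => χ a = 1 ∧ χ (π g + a) = -1) (π y)) := by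
      ext y
      simp only [Finset.mem_filter, Finset.mem_univ, true_and]
      rw [hA y, hB (g + y), map_add]
    have c11 := qr_card_filter_comp (fun a : ZMod p => χ a = 1 ∧ χ (π g + a) = 1)
    have c22 := qr_card_filter_comp (fun a : ZMod p => χ a = -1 ∧ χ (π g + a) = -1)
    have c21 := qr_card_filter_comp (fun a : ZMod p => χ a = -1 ∧ χ (π g + a) = 1)
    have c12 := qr_card_filter_comp (fun a : ZMod p => χ a = 1 ∧ χ (π g + a) = -1)
    have hval := quadraticChar_isQuadratic (ZMod p)
    constructor
    · rw [Multiset.count_add, qr_count_dInt A g hg, qr_count_dInt B g hg,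
        e11, e22, c11, c22, ← mul_add]
      congr 1
      have hdisj : Disjoint (univ.filter fun a : ZMod p => χ a = 1 ∧ χ (π g + a) = 1)
          (univ.filter fun a : ZMod p => χ a = -1 ∧ χ (π g + a) = -1) := by
        rw [Finset.disjoint_left]
        intro a ha hb
        rw [Finset.mem_filter] at ha hb
        have := ha.2.1.symm.trans hb.2.1
        norm_num at this
      rw [← Finset.card_union_of_disjoint hdisj]
      congr 1
      rw [← Finset.filter_or]
      apply Finset.filter_congr
      intro a _
      rcases hval a with h1 | h1 | h1 <;> rcases hval (π g + a) with h2 | h2 | h2 <;>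
        rw [h1, h2] <;> norm_num
    · rw [Multiset.count_add, qr_count_dExt A B g, qr_count_dExt B A g,
        e21, e12, c21, c12, ← mul_add]
      congr 1
      have hdisj : Disjoint (univ.filter fun a : ZMod p => χ a = -1 ∧ χ (π g + a) = 1)
          (univ.filter fun a : ZMod p => χ a = 1 ∧ χ (π g + a) = -1) := by
        rw [Finset.disjoint_left]
        intro a ha hb
        rw [Finset.mem_filter] at ha hb
        have := ha.2.1.symm.trans hb.2.1
        norm_num at this
      rw [← Finset.card_union_of_disjoint hdisj]
      congr 1
      rw [← Finset.filter_or]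
      apply Finset.filter_congr
      intro a _
      rcases hval a with h1 | h1 | h1 <;> rcases hval (π g + a) with h2 | h2 | h2 <;>
        rw [h1, h2] <;> norm_num
  refine ⟨?_, ?_, ?_, ?_⟩
  · have c := qr_card_filter_comp (fun a : ZMod p => χ a = 1)
    rw [hAset, c]
    exact qr_card_char hp2 1 (Or.inl rfl)
  · have c := qr_card_filter_comp (fun a : ZMod p => χ a = -1)
    rw [hBset, c]
    exact qr_card_char hp2 (-1) (Or.inr rfl)
  · intro g hg hπg
    obtain ⟨hc1, hc2⟩ := hcount g hg
    obtain ⟨hm1, hm2⟩ := qr_count_main hp2 (π g)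
    rw [if_neg hπg] at hm1 hm2
    exact ⟨hc1.trans hm1, hc2.trans hm2⟩
  · intro g hg hπg
    obtain ⟨hc1, hc2⟩ := hcount g hg
    obtain ⟨hm1, hm2⟩ := qr_count_main hp2 (π g)
    rw [if_pos hπg] at hm1 hm2
    exact ⟨hc1.trans hm1, hc2.trans hm2⟩

end SetCount

/-- for a prime `p ≡ 1 (mod 4)`, the pair `{A₀, A₁}`, where
`A₀ = {s, s+p : s a QR mod p}` and `A₁ = {t, t+p : t a non-QR mod p}`, forms a
`(2p,2,p−1,p−3,2p−2)`-DPDF and a `(2p,2,p−1,p−1,0)`-EPDF in `ℤ_{2p}`, whose sets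
partition `G∖H` for `H = {0, p}`. -/
theorem quadratic_residue_dpdf_epdf (p : ℕ) (hp : p.Prime) (hp4 : p % 4 = 1)
    [NeZero (2 * p)] (Q N : Finset ℕ)
    (hQ : ∀ s : ℕ, s ∈ Q ↔ (1 ≤ s ∧ s ≤ p - 1 ∧ IsQRmod p s))
    (hN : ∀ t : ℕ, t ∈ N ↔ (1 ≤ t ∧ t ≤ p - 1 ∧ ¬ IsQRmod p t)) :
    IsDPDF (ZMod (2 * p)) (2 * p) 2 (p - 1) (p - 3) (2 * p - 2) ![liftPair p Q, liftPair p N] ∧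
    IsEPDF (ZMod (2 * p)) (2 * p) 2 (p - 1) (p - 1) 0 ![liftPair p Q, liftPair p N] ∧
    (∀ x : ZMod (2 * p), (x ∈ liftPair p Q ∨ x ∈ liftPair p N) ↔
      (x ≠ 0 ∧ x ≠ (p : ZMod (2 * p)))) := by
  haveI hpf : Fact p.Prime := ⟨hp⟩
  have h2le : 2 ≤ p := hp.two_le
  have hp2 : p ≠ 2 := by omega
  have hp5 : 5 ≤ p := by
    by_contra hlt
    push_neg at hlt
    interval_cases p <;> omega
  have hval := quadraticChar_isQuadratic (ZMod p)
  have hchi0 : quadraticChar (ZMod p) (0 : ZMod p) = 0 := quadraticChar_eq_zero_iff.mpr rfl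
  -- membership characterizations
  have hQ' : ∀ s : ℕ, s ∈ Q ↔ (1 ≤ s ∧ s ≤ p - 1 ∧ quadraticChar (ZMod p) ((s : ZMod p)) = 1) := by
    intro s
    rw [hQ s]
    constructor
    · rintro ⟨h1, h2, h3⟩
      obtain ⟨h0, hsq⟩ := (qr_isQRmod_iff s).mp h3
      exact ⟨h1, h2, (quadraticChar_one_iff_isSquare h0).mpr hsq⟩
    · rintro ⟨h1, h2, h3⟩
      have h0 : (s : ZMod p) ≠ 0 := by
        intro e
        rw [e, hchi0] at h3
        norm_num at h3
      exact ⟨h1, h2, (qr_isQRmod_iff s).mpr ⟨h0, (quadraticChar_one_iff_isSquare h0).mp h3⟩⟩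
  have hN' : ∀ t : ℕ, t ∈ N ↔ (1 ≤ t ∧ t ≤ p - 1 ∧ quadraticChar (ZMod p) ((t : ZMod p)) = -1) := by
    intro t
    rw [hN t]
    constructor
    · rintro ⟨h1, h2, h3⟩
      have h0 : (t : ZMod p) ≠ 0 := by
        rw [Ne, ZMod.natCast_eq_zero_iff]
        intro hdvd
        have := Nat.le_of_dvd (by omega) hdvd
        omega
      refine ⟨h1, h2, quadraticChar_neg_one_iff_not_isSquare.mpr fun hsq => ?_⟩
      exact h3 ((qr_isQRmod_iff t).mpr ⟨h0, hsq⟩)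
    · rintro ⟨h1, h2, h3⟩
      refine ⟨h1, h2, fun hqr => ?_⟩
      have hsq := ((qr_isQRmod_iff t).mp hqr).2
      rw [quadraticChar_neg_one_iff_not_isSquare] at h3
      exact h3 hsq
  have hA : ∀ x : ZMod (2*p), x ∈ liftPair p Q ↔
      quadraticChar (ZMod p) (ZMod.castHom (dvd_mul_left p 2) (ZMod p) x) = 1 :=
    qr_mem_liftPair Q 1 (Or.inl rfl) hQ'
  have hB : ∀ x : ZMod (2*p), x ∈ liftPair p N ↔
      quadraticChar (ZMod p) (ZMod.castHom (dvd_mul_left p 2) (ZMod p) x) = -1 :=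
    qr_mem_liftPair N (-1) (Or.inr rfl) hN'
  obtain ⟨hcardA, hcardB, hmain1, hmain0⟩ := qr_counts hp2 (liftPair p Q) (liftPair p N) hA hB
  have hzeroA : (0 : ZMod (2*p)) ∉ liftPair p Q := by
    intro h
    have h' := (hA 0).mp h
    rw [map_zero, hchi0] at h'
    norm_num at h'
  have hzeroB : (0 : ZMod (2*p)) ∉ liftPair p N := by
    intro h
    have h' := (hB 0).mp h
    rw [map_zero, hchi0] at h'
    norm_num at h'
  have hdisj : Disjoint (liftPair p Q) (liftPair p N) := by
    rw [Finset.disjoint_left]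
    intro x hx hx'
    have h1 := (hA x).mp hx
    have h2 := (hB x).mp hx'
    rw [h1] at h2
    norm_num at h2
  have hparts : ∀ x : ZMod (2*p), (x ∈ liftPair p Q ∨ x ∈ liftPair p N) ↔
      (x ≠ 0 ∧ x ≠ (p : ZMod (2*p))) := by
    intro x
    rw [hA x, hB x]
    have hk := qr_ker (p := p) x
    constructor
    · intro h
      have hx0 : ZMod.castHom (dvd_mul_left p 2) (ZMod p) x ≠ 0 := by
        intro e
        rcases h with h | h <;> rw [e, hchi0] at h <;> norm_num at h
      exact ⟨fun e => hx0 (hk.mpr (Or.inl e)), fun e => hx0 (hk.mpr (Or.inr e))⟩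
    · rintro ⟨h1, h2⟩
      have hx0 : ZMod.castHom (dvd_mul_left p 2) (ZMod p) x ≠ 0 := by
        intro e
        rcases hk.mp e with e' | e'
        · exact h1 e'
        · exact h2 e'
      rcases hval (ZMod.castHom (dvd_mul_left p 2) (ZMod p) x) with h | h | h
      · exact absurd (quadraticChar_eq_zero_iff.mp h) hx0
      · exact Or.inl h
      · exact Or.inr h
  have hIF : IntFam ![liftPair p Q, liftPair p N]
      = dInt (liftPair p Q) + dInt (liftPair p N) := by
    rw [IntFam, Fin.sum_univ_two]
    rfl
  have hEF : ExtFam ![liftPair p Q, liftPair p N]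
      = dExt (liftPair p Q) (liftPair p N) + dExt (liftPair p N) (liftPair p Q) := by
    rw [ExtFam, Fin.sum_univ_two,
      show (univ.erase (0 : Fin 2)) = {1} from by decide,
      show (univ.erase (1 : Fin 2)) = {0} from by decide,
      Finset.sum_singleton, Finset.sum_singleton]
    rfl
  -- facts used for conditions 6/7
  have hex_ne : ∀ g : ZMod (2*p), (∃ i, g ∈ (![liftPair p Q, liftPair p N]) i) →
      ZMod.castHom (dvd_mul_left p 2) (ZMod p) g ≠ 0 := by
    rintro g ⟨i, hi⟩
    fin_cases i
    · have h' := (hA g).mp hi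
      intro e
      rw [e, hchi0] at h'
      norm_num at h'
    · have h' := (hB g).mp hi
      intro e
      rw [e, hchi0] at h'
      norm_num at h'
  have hall_eq : ∀ g : ZMod (2*p), (∀ i, g ∉ (![liftPair p Q, liftPair p N]) i) →
      ZMod.castHom (dvd_mul_left p 2) (ZMod p) g = 0 := by
    intro g hall
    have h0 : g ∉ liftPair p Q := hall 0
    have h1 : g ∉ liftPair p N := hall 1
    rcases hval (ZMod.castHom (dvd_mul_left p 2) (ZMod p) g) with h | h | h
    · exact quadraticChar_eq_zero_iff.mp h
    · exact absurd ((hA g).mpr h) h0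
    · exact absurd ((hB g).mpr h) h1
  have hcards : ∀ i, ((![liftPair p Q, liftPair p N]) i).card = p - 1 :=
    Fin.forall_fin_two.mpr ⟨hcardA, hcardB⟩
  have hzeros : ∀ i, (0 : ZMod (2*p)) ∉ (![liftPair p Q, liftPair p N]) i :=
    Fin.forall_fin_two.mpr ⟨hzeroA, hzeroB⟩
  have hdisjs : ∀ i j, i ≠ j →
      Disjoint ((![liftPair p Q, liftPair p N]) i) ((![liftPair p Q, liftPair p N]) j) := by
    refine Fin.forall_fin_two.mpr ⟨Fin.forall_fin_two.mpr ⟨?_, ?_⟩,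
      Fin.forall_fin_two.mpr ⟨?_, ?_⟩⟩
    · intro h; exact absurd rfl h
    · intro _; exact hdisj
    · intro _; exact hdisj.symm
    · intro h; exact absurd rfl h
  refine ⟨⟨ZMod.card _, by simp, hcards, hzeros, hdisjs, ?_, ?_⟩,
    ⟨ZMod.card _, by simp, hcards, hzeros, hdisjs, ?_, ?_⟩, hparts⟩
  · intro g hg hex
    rw [hIF]
    exact (hmain1 g hg (hex_ne g hex)).1
  · intro g hg hall
    rw [hIF]
    exact (hmain0 g hg (hall_eq g hall)).1
  · intro g hg hex
    rw [hEF]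
    exact (hmain1 g hg (hex_ne g hex)).2
  · intro g hg hall
    rw [hEF]
    exact (hmain0 g hg (hall_eq g hall)).2
end

section
/- Let d be a positive integer, G = ℤ_{12d+4}, H = {0, 3d+1, 6d+2, 9d+3} ≤ G and K = {0, 6d+2} ≤ G. Let S′ be any family of 6d pairwise disjoint 2-element subsets of G whose union is G∖H, such that exactly 2d of the sets have the form {x, x+(6d+2)} (i.e. are cosets of K) and the remaining 4d sets each have the form {x, x+(3d+1)}. Then S′ is a (12d+4, 6d, 2, 0, 4d)-DPDF and a (12d+4, 6d, 2, 12d−4, 8d)-EPDF in G. -/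
/-!
`H = ⟨3d+1⟩ = {0, 3d+1, 6d+2, 9d+3}` is the subgroup of order 4, and every block has the form
`{x, x + δ}` with `δ ∈ H ∖ {0}`, so its internal differences are `±δ`. Hence `Int(A)` vanishes
off `H`, and each nonzero element of `H` occurs `4d` times in it (`6d+2 = -(6d+2)` twice in each
of the `2d` cosets of `K`, and `±(3d+1)` once in each of the other `4d` blocks). Because the
blocks partition `S = G ∖ H`, for `g ≠ 0` the counts of `g` in `Int(A)` and `Ext(A)` add up to
`#{y ∈ S | g + y ∈ S}`, which is `|G| - |H|` for `g ∈ H` and `|G| - 2|H|` for `g ∉ H` (then `H`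
and `H - g` are disjoint cosets).
-/

open Finset

section Differences

variable {G : Type*} [AddGroup G] [DecidableEq G]

lemma count_dExt (D₁ D₂ : Finset G) (g : G) :
    (dExt D₁ D₂).count g = #{y ∈ D₂ | g + y ∈ D₁} := by
  rw [dExt, Multiset.count_map, ← filter_val, card_val, card_filter,
    card_filter, sum_product_right]
  simp_rw [eq_sub_iff_add_eq, sum_ite_eq]

lemma count_dExt_self_of_ne_zero (D : Finset G) {g : G} (hg : g ≠ 0) :
    (dExt D D).count g = (dInt D).count g := by
  rw [dExt, dInt, Multiset.count_map, Multiset.count_map, ← filter_val,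
    ← filter_val, filter_filter]
  congr 3
  ext p
  refine ⟨fun h => ⟨fun hp => hg ?_, h⟩, And.right⟩
  rw [h, hp, sub_self]

end Differences

section Families

variable {α G ι : Type*} [Fintype ι]

lemma card_eq_sum_card_of_partition [DecidableEq α] {A : ι → Finset α} {S : Finset α}
    (hdisj : ∀ i j, i ≠ j → Disjoint (A i) (A j)) (hS : ∀ x, (∃ i, x ∈ A i) ↔ x ∈ S) :
    #S = ∑ i, #(A i) := by
  have : S = univ.biUnion A := by ext x; simp [← hS]
  rw [this, card_biUnion fun i _ j _ hij => hdisj i j hij]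

variable [AddGroup G] [DecidableEq G] {A : ι → Finset G}

lemma sum_sum_count_dExt (hdisj : ∀ i j, i ≠ j → Disjoint (A i) (A j)) {S : Finset G}
    (hS : ∀ x, (∃ i, x ∈ A i) ↔ x ∈ S) (g : G) :
    ∑ i, ∑ j, (dExt (A i) (A j)).count g = #{y ∈ S | g + y ∈ S} := by
  have hpreimage (j : ι) : ∑ i, #{y ∈ A j | g + y ∈ A i} = #{y ∈ A j | g + y ∈ S} := by
    refine (card_eq_sum_card_of_partition (A := fun i => {y ∈ A j | g + y ∈ A i}) ?_ ?_).symm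
    · exact fun i i' hii' => disjoint_left.mpr fun y hy hy' =>
        disjoint_left.mp (hdisj i i' hii') (mem_filter.mp hy).2 (mem_filter.mp hy').2
    · simp [← hS, exists_and_left]
  simp_rw [count_dExt]
  rw [sum_comm]
  simp_rw [hpreimage]
  refine (card_eq_sum_card_of_partition (A := fun j => {y ∈ A j | g + y ∈ S}) ?_ ?_).symm
  · exact fun i j hij => (hdisj i j hij).mono (filter_subset _ _) (filter_subset _ _)
  · simp [← hS]

lemma count_extFam_add_count_intFam [DecidableEq ι] {g : G} (hg : g ≠ 0) :
    (ExtFam A).count g + (IntFam A).count g = ∑ i, ∑ j, (dExt (A i) (A j)).count g := by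
  simp_rw [ExtFam, IntFam, Multiset.count_sum', ← count_dExt_self_of_ne_zero _ hg,
    ← sum_add_distrib]
  exact sum_congr rfl fun i _ => sum_erase_add _ _ (mem_univ i)

end Families

section Translates

variable {G ι : Type*} [AddCommGroup G] [DecidableEq G]

lemma dInt_pair (x : G) {δ : G} (hδ : δ ≠ 0) :
    dInt {x, x + δ} = {δ, -δ} := by
  have hne : x ≠ x + δ := by simpa [eq_comm] using hδ
  have : (({x, x + δ} ×ˢ {x, x + δ} : Finset (G × G)).filter fun p => p.1 ≠ p.2)
      = {(x + δ, x), (x, x + δ)} := by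
    ext ⟨a, b⟩
    simp only [mem_filter, mem_product, mem_insert, mem_singleton, Prod.mk.injEq]
    grind
  rw [dInt, this]
  simp [hne.symm]

lemma intFam_eq_of_two_translates [Fintype ι] [DecidableEq ι] {A : ι → Finset G}
    (T : Finset ι) {a b : G} (ha : a ≠ 0) (hb : b ≠ 0)
    (hTa : ∀ i ∈ T, ∃ x, A i = {x, x + a}) (hTb : ∀ i ∉ T, ∃ x, A i = {x, x + b}) :
    IntFam A = #T • {a, -a} + #Tᶜ • {b, -b} := by
  have hT : ∀ i ∈ T, dInt (A i) = {a, -a} := fun i hi => by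
    obtain ⟨x, hx⟩ := hTa i hi
    rw [hx, dInt_pair x ha]
  have hTc : ∀ i ∈ Tᶜ, dInt (A i) = {b, -b} := fun i hi => by
    obtain ⟨x, hx⟩ := hTb i (mem_compl.mp hi)
    rw [hx, dInt_pair x hb]
  rw [IntFam, ← sum_add_sum_compl T, sum_congr rfl hT, sum_congr rfl hTc, sum_const, sum_const]

end Translates

section SubgroupComplement

variable {G : Type*} [AddGroup G] [Fintype G] (H : AddSubgroup G) [DecidablePred (· ∈ H)]

lemma card_filter_mem_addSubgroup : #{y | y ∈ H} = Nat.card H := by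
  rw [Nat.card_eq_fintype_card, Fintype.card_subtype]

lemma card_filter_notMem_and_add_notMem_of_mem {g : G} (hg : g ∈ H) :
    #{y | y ∉ H ∧ g + y ∉ H} = Fintype.card G - Nat.card H := by
  have hsplit := card_filter_add_card_filter_not (s := univ) fun y => y ∈ H
  rw [card_univ, card_filter_mem_addSubgroup] at hsplit
  simp_rw [H.add_mem_cancel_left hg, and_self]
  omega

lemma card_filter_notMem_and_add_notMem_of_notMem {g : G} (hg : g ∉ H) :
    #{y | y ∉ H ∧ g + y ∉ H} = Fintype.card G - 2 * Nat.card H := by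
  have htranslate : #({y | g + y ∈ H} : Finset G) = #{y | y ∈ H} :=
    card_equiv (Equiv.addLeft g) fun y => by simp
  have hdisj : Disjoint ({y | y ∈ H} : Finset G) ({y | g + y ∈ H} : Finset G) :=
    disjoint_filter.mpr fun y _ hy hgy => hg (by simpa using H.sub_mem hgy hy)
  classical
  have hcompl := card_filter_add_card_filter_not (s := univ) fun y => y ∈ H ∨ g + y ∈ H
  simp_rw [not_or, card_univ] at hcompl
  rw [filter_or, card_union_of_disjoint hdisj, htranslate, card_filter_mem_addSubgroup] at hcompl
  omega

end SubgroupComplement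

lemma natCast_ne_natCast_of_lt {n a b : ℕ} (ha : a < n) (hb : b < n) (hab : a ≠ b) :
    (a : ZMod n) ≠ b := fun h => hab <| by
  rw [← ZMod.val_cast_of_lt ha, h, ZMod.val_cast_of_lt hb]

section QuarterSubgroup

variable (d : ℕ)

lemma addOrderOf_natCast_quarter :
    addOrderOf ((3 * d + 1 : ℕ) : ZMod (12 * d + 4)) = 4 := by
  rw [ZMod.addOrderOf_coe _ (by omega), show 12 * d + 4 = 4 * (3 * d + 1) by ring,
    Nat.gcd_mul_left_left, Nat.mul_div_cancel _ (by omega)]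

lemma mem_zmultiples_natCast_quarter_iff (x : ZMod (12 * d + 4)) :
    x ∈ AddSubgroup.zmultiples ((3 * d + 1 : ℕ) : ZMod (12 * d + 4)) ↔
      x = 0 ∨ x = ((3 * d + 1 : ℕ) : ZMod (12 * d + 4)) ∨
        x = ((6 * d + 2 : ℕ) : ZMod (12 * d + 4)) ∨ x = ((9 * d + 3 : ℕ) : ZMod (12 * d + 4)) := by
  rw [mem_zmultiples_iff_mem_range_addOrderOf, addOrderOf_natCast_quarter]
  simp only [range_add_one, range_zero, insert_empty_eq, image_insert,
    image_singleton, mem_insert, mem_singleton, nsmul_eq_mul]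
  push_cast
  ring_nf
  tauto

lemma neg_natCast_half :
    -((6 * d + 2 : ℕ) : ZMod (12 * d + 4)) = ((6 * d + 2 : ℕ) : ZMod (12 * d + 4)) := by
  rw [neg_eq_iff_add_eq_zero, ← Nat.cast_add, show 6 * d + 2 + (6 * d + 2) = 12 * d + 4 by ring,
    ZMod.natCast_self]

lemma neg_natCast_quarter :
    -((3 * d + 1 : ℕ) : ZMod (12 * d + 4)) = ((9 * d + 3 : ℕ) : ZMod (12 * d + 4)) := by
  rw [neg_eq_iff_add_eq_zero, ← Nat.cast_add, show 3 * d + 1 + (9 * d + 3) = 12 * d + 4 by ring,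
    ZMod.natCast_self]

lemma count_intFam_of_quarter_translates (A : Fin (6 * d) → Finset (ZMod (12 * d + 4)))
    (T : Finset (Fin (6 * d))) (hT : T.card = 2 * d)
    (hKcoset : ∀ i ∈ T, ∃ x : ZMod (12 * d + 4),
      A i = {x, x + ((6 * d + 2 : ℕ) : ZMod (12 * d + 4))})
    (hHalf : ∀ i ∉ T, ∃ x : ZMod (12 * d + 4),
      A i = {x, x + ((3 * d + 1 : ℕ) : ZMod (12 * d + 4))})
    {g : ZMod (12 * d + 4)} (hg : g ≠ 0) :
    (IntFam A).count g =
      if g ∈ AddSubgroup.zmultiples ((3 * d + 1 : ℕ) : ZMod (12 * d + 4)) then 4 * d else 0 := by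
  have hne {a b : ℕ} (ha : a < 12 * d + 4) (hb : b < 12 * d + 4) (hab : a ≠ b) :
      (a : ZMod (12 * d + 4)) ≠ b := natCast_ne_natCast_of_lt ha hb hab
  have h1 := hne (a := 3 * d + 1) (b := 0) (by omega) (by omega) (by omega)
  have h2 := hne (a := 6 * d + 2) (b := 0) (by omega) (by omega) (by omega)
  have h12 := hne (a := 3 * d + 1) (b := 6 * d + 2) (by omega) (by omega) (by omega)
  have h13 := hne (a := 3 * d + 1) (b := 9 * d + 3) (by omega) (by omega) (by omega)
  have h23 := hne (a := 6 * d + 2) (b := 9 * d + 3) (by omega) (by omega) (by omega)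
  rw [Nat.cast_zero] at h1 h2
  rw [intFam_eq_of_two_translates T h2 h1 hKcoset hHalf, card_compl, hT, Fintype.card_fin,
    neg_natCast_half, neg_natCast_quarter]
  simp only [Multiset.count_add, Multiset.count_nsmul, Multiset.insert_eq_cons,
    Multiset.count_cons, Multiset.count_singleton]
  by_cases hgH : g ∈ AddSubgroup.zmultiples ((3 * d + 1 : ℕ) : ZMod (12 * d + 4))
  · rw [if_pos hgH]
    rcases (mem_zmultiples_natCast_quarter_iff d g).mp hgH with rfl | rfl | rfl | rfl
    · exact absurd rfl hg
    · rw [if_neg h12, if_pos rfl, if_neg h13]; omega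
    · rw [if_pos rfl, if_neg h12.symm, if_neg h23]; omega
    · rw [if_neg h23.symm, if_neg h13.symm, if_pos rfl]; omega
  · rw [if_neg hgH]
    simp only [mem_zmultiples_natCast_quarter_iff, not_or] at hgH
    obtain ⟨-, hg1, hg2, hg3⟩ := hgH
    rw [if_neg hg1, if_neg hg2, if_neg hg3]
    ring

end QuarterSubgroup

theorem coset_partition_dpdf_epdf_general (d : ℕ) [NeZero (12 * d + 4)]
    (A : Fin (6 * d) → Finset (ZMod (12 * d + 4)))
    (hcard : ∀ i, (A i).card = 2)
    (hdisj : ∀ i j, i ≠ j → Disjoint (A i) (A j))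
    (hunion : ∀ x : ZMod (12 * d + 4), (∃ i, x ∈ A i) ↔
      (x ≠ 0 ∧ x ≠ ((3 * d + 1 : ℕ) : ZMod (12 * d + 4)) ∧
        x ≠ ((6 * d + 2 : ℕ) : ZMod (12 * d + 4)) ∧
        x ≠ ((9 * d + 3 : ℕ) : ZMod (12 * d + 4))))
    (T : Finset (Fin (6 * d))) (hT : T.card = 2 * d)
    (hKcoset : ∀ i ∈ T, ∃ x : ZMod (12 * d + 4),
      A i = {x, x + ((6 * d + 2 : ℕ) : ZMod (12 * d + 4))})
    (hHalf : ∀ i ∉ T, ∃ x : ZMod (12 * d + 4),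
      A i = {x, x + ((3 * d + 1 : ℕ) : ZMod (12 * d + 4))}) :
    IsDPDF (ZMod (12 * d + 4)) (12 * d + 4) (6 * d) 2 0 (4 * d) A ∧
    IsEPDF (ZMod (12 * d + 4)) (12 * d + 4) (6 * d) 2 (12 * d - 4) (8 * d) A := by
  set H := AddSubgroup.zmultiples ((3 * d + 1 : ℕ) : ZMod (12 * d + 4))
  have hS (x : ZMod (12 * d + 4)) : (∃ i, x ∈ A i) ↔ x ∉ H := by
    rw [hunion, mem_zmultiples_natCast_quarter_iff]
    tauto
  have hH {g} (hgS : ∀ i, g ∉ A i) : g ∈ H := by simpa [hgS] using hS g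
  have hcardH : Nat.card H = 4 := by rw [Nat.card_zmultiples, addOrderOf_natCast_quarter]
  have hInt {g} (hg : g ≠ 0) := count_intFam_of_quarter_translates d A T hT hKcoset hHalf hg
  have hExt {g} (hg : g ≠ 0) :
      (ExtFam A).count g + (IntFam A).count g = #{y | y ∉ H ∧ g + y ∉ H} := by
    rw [count_extFam_add_count_intFam hg,
      sum_sum_count_dExt hdisj (S := {y | y ∉ H}) (by simpa using hS), filter_filter]
    simp only [mem_filter, mem_univ, true_and]
  have hzero i : (0 : ZMod (12 * d + 4)) ∉ A i := fun h0 => (hS 0).mp ⟨i, h0⟩ H.zero_mem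
  refine ⟨⟨ZMod.card _, Fintype.card_fin _, hcard, hzero, hdisj, ?_, ?_⟩,
    ⟨ZMod.card _, Fintype.card_fin _, hcard, hzero, hdisj, ?_, ?_⟩⟩
  · intro g hg hgS
    rw [hInt hg, if_neg ((hS g).mp hgS)]
  · intro g hg hgS
    rw [hInt hg, if_pos (hH hgS)]
  · intro g hg hgS
    have hcount := hExt hg
    rw [hInt hg, if_neg ((hS g).mp hgS),
      card_filter_notMem_and_add_notMem_of_notMem H ((hS g).mp hgS), ZMod.card, hcardH] at hcount
    omega
  · intro g hg hgS
    have hcount := hExt hg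
    rw [hInt hg, if_pos (hH hgS), card_filter_notMem_and_add_notMem_of_mem H (hH hgS),
      ZMod.card, hcardH] at hcount
    omega

/-- for `d ≥ 1`, `G = ℤ_{12d+4}`, `H = {0, 3d+1, 6d+2, 9d+3}` and
`K = {0, 6d+2}`, any family of `6d` pairwise disjoint 2-element subsets of `G` whose
union is `G∖H`, with exactly `2d` sets of the form `{x, x+(6d+2)}` (cosets of `K`) and
the remaining `4d` sets of the form `{x, x+(3d+1)}`, is a `(12d+4,6d,2,0,4d)`-DPDF and
a `(12d+4,6d,2,12d−4,8d)`-EPDF in `G`. -/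
theorem coset_partition_dpdf_epdf (d : ℕ) (hd : 0 < d) [NeZero (12 * d + 4)]
    (A : Fin (6 * d) → Finset (ZMod (12 * d + 4)))
    (hcard : ∀ i, (A i).card = 2)
    (hdisj : ∀ i j, i ≠ j → Disjoint (A i) (A j))
    (hunion : ∀ x : ZMod (12 * d + 4), (∃ i, x ∈ A i) ↔
      (x ≠ 0 ∧ x ≠ ((3 * d + 1 : ℕ) : ZMod (12 * d + 4)) ∧
        x ≠ ((6 * d + 2 : ℕ) : ZMod (12 * d + 4)) ∧
        x ≠ ((9 * d + 3 : ℕ) : ZMod (12 * d + 4))))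
    (T : Finset (Fin (6 * d))) (hT : T.card = 2 * d)
    (hKcoset : ∀ i ∈ T, ∃ x : ZMod (12 * d + 4),
      A i = {x, x + ((6 * d + 2 : ℕ) : ZMod (12 * d + 4))})
    (hHalf : ∀ i ∉ T, ∃ x : ZMod (12 * d + 4),
      A i = {x, x + ((3 * d + 1 : ℕ) : ZMod (12 * d + 4))}) :
    IsDPDF (ZMod (12 * d + 4)) (12 * d + 4) (6 * d) 2 0 (4 * d) A ∧
    IsEPDF (ZMod (12 * d + 4)) (12 * d + 4) (6 * d) 2 (12 * d - 4) (8 * d) A :=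
  coset_partition_dpdf_epdf_general d A hcard hdisj hunion T hT hKcoset hHalf
end

section
/- Let q be a prime power, let F be the finite field GF(q²) with prime subfield extension GF(q) ⊆ F, and let α be a primitive element of F (a generator of the multiplicative group F^*), so that every element of F is uniquely expressible as a + bα with a, b ∈ GF(q). For each c ∈ GF(q)^*, let S_c = {x ∈ F^* : x = a + cα for some a ∈ GF(q)}. Then the family {S_c : c ∈ GF(q)^*} is a (q²−1, q−1, q, q−1, 0)-DPDF and a (q²−1, q−1, q, (q−1)(q−2), q²−q)-EPDF in the multiplicative group F^*. -/
open Finset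

/-- The multiset of internal differences (quotients) of a finite subset of a group. -/
def mulDInt {G : Type*} [Group G] [DecidableEq G] (D : Finset G) : Multiset G :=
  ((D ×ˢ D).filter fun p => p.1 ≠ p.2).val.map fun p => p.1 * p.2⁻¹

/-- The multiset of external differences (quotients) between two finite subsets of a group. -/
def mulDExt {G : Type*} [Group G] (D₁ D₂ : Finset G) : Multiset G :=
  (D₁ ×ˢ D₂).val.map fun p => p.1 * p.2⁻¹

/-- The multiset union of the internal differences of a family of sets. -/
def MulIntFam {G : Type*} [Group G] [DecidableEq G] {ι : Type*} [Fintype ι]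
    (A : ι → Finset G) : Multiset G :=
  ∑ i, mulDInt (A i)

/-- The multiset union of external differences over ordered pairs of distinct sets. -/
def MulExtFam {G : Type*} [Group G] [DecidableEq G] {ι : Type*} [Fintype ι] [DecidableEq ι]
    (A : ι → Finset G) : Multiset G :=
  ∑ i, ∑ j ∈ Finset.univ.erase i, mulDExt (A i) (A j)

/-- A `(v,s,k,lam,mu)`-disjoint partial difference family in the multiplicative group `G`. -/
def IsMulDPDF (G : Type*) [Group G] [Fintype G] [DecidableEq G] {ι : Type*} [Fintype ι]
    (v s k lam mu : ℕ) (A : ι → Finset G) : Prop :=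
  Fintype.card G = v ∧ Fintype.card ι = s ∧
  (∀ i, (A i).card = k) ∧ (∀ i, (1 : G) ∉ A i) ∧
  (∀ i j, i ≠ j → Disjoint (A i) (A j)) ∧
  (∀ g : G, g ≠ 1 → (∃ i, g ∈ A i) → (MulIntFam A).count g = lam) ∧
  (∀ g : G, g ≠ 1 → (∀ i, g ∉ A i) → (MulIntFam A).count g = mu)

/-- A `(v,s,k,lam,mu)`-external partial difference family in the multiplicative group `G`. -/
def IsMulEPDF (G : Type*) [Group G] [Fintype G] [DecidableEq G] {ι : Type*} [Fintype ι]
    [DecidableEq ι] (v s k lam mu : ℕ) (A : ι → Finset G) : Prop :=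
  Fintype.card G = v ∧ Fintype.card ι = s ∧
  (∀ i, (A i).card = k) ∧ (∀ i, (1 : G) ∉ A i) ∧
  (∀ i j, i ≠ j → Disjoint (A i) (A j)) ∧
  (∀ g : G, g ≠ 1 → (∃ i, g ∈ A i) → (MulExtFam A).count g = lam) ∧
  (∀ g : G, g ≠ 1 → (∀ i, g ∉ A i) → (MulExtFam A).count g = mu)

/-- An `(m,n,k,lam)`-relative difference set in `G` relative to the subgroup `H`:
`G` has order `mn`, `H` has order `n`, `R` is a `k`-subset of `G` whose internal
differences hit every element of `G∖H` exactly `lam` times and every non-identity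
element of `H` exactly `0` times. -/
def IsRDS (G : Type*) [Group G] [Fintype G] [DecidableEq G] (H : Subgroup G) [Fintype H]
    (m n k lam : ℕ) (R : Finset G) : Prop :=
  Fintype.card G = m * n ∧ Fintype.card H = n ∧ R.card = k ∧
  (∀ g : G, g ∉ H → (mulDInt R).count g = lam) ∧
  (∀ g : G, g ∈ H → g ≠ 1 → (mulDInt R).count g = 0)

lemma count_mulDInt' {G : Type*} [Group G] [DecidableEq G] (D : Finset G) (g : G) :
    (mulDInt D).count g = (D.filter fun y => g * y ∈ D ∧ g * y ≠ y).card := by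
  rw [mulDInt, Multiset.count_map, ← Finset.filter_val, ← Finset.card_def]
  refine Finset.card_bij' (fun p _ => p.2) (fun y _ => (g * y, y)) ?_ ?_ ?_ ?_
  · intro p hp
    simp only [Finset.mem_filter, Finset.mem_product] at hp ⊢
    obtain ⟨⟨⟨h1, h2⟩, hne⟩, hg⟩ := hp
    have hgp : g * p.2 = p.1 := by rw [hg]; group
    exact ⟨h2, by rw [hgp]; exact h1, by rw [hgp]; exact hne⟩
  · intro y hy
    simp only [Finset.mem_filter, Finset.mem_product] at hy ⊢
    obtain ⟨h1, h2, h3⟩ := hy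
    exact ⟨⟨⟨h2, h1⟩, h3⟩, by group⟩
  · intro p hp
    simp only [Finset.mem_filter, Finset.mem_product] at hp
    obtain ⟨⟨⟨h1, h2⟩, hne⟩, hg⟩ := hp
    have hgp : g * p.2 = p.1 := by rw [hg]; group
    exact Prod.ext hgp rfl
  · intro y hy; rfl

lemma count_mulDExt' {G : Type*} [Group G] [DecidableEq G] (D₁ D₂ : Finset G) (g : G) :
    (mulDExt D₁ D₂).count g = (D₂.filter fun y => g * y ∈ D₁).card := by
  rw [mulDExt, Multiset.count_map, ← Finset.filter_val, ← Finset.card_def]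
  refine Finset.card_bij' (fun p _ => p.2) (fun y _ => (g * y, y)) ?_ ?_ ?_ ?_
  · intro p hp
    simp only [Finset.mem_filter, Finset.mem_product] at hp ⊢
    obtain ⟨⟨h1, h2⟩, hg⟩ := hp
    have hgp : g * p.2 = p.1 := by rw [hg]; group
    exact ⟨h2, by rw [hgp]; exact h1⟩
  · intro y hy
    simp only [Finset.mem_filter, Finset.mem_product] at hy ⊢
    obtain ⟨h1, h2⟩ := hy
    exact ⟨⟨h2, h1⟩, by group⟩
  · intro p hp
    simp only [Finset.mem_filter, Finset.mem_product] at hp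
    obtain ⟨⟨h1, h2⟩, hg⟩ := hp
    have hgp : g * p.2 = p.1 := by rw [hg]; group
    exact Prod.ext hgp rfl
  · intro y hy; rfl

/-- Bose: let `F = GF(q²)` with subfield `K = GF(q)` and primitive
element `α` of `F` (with `α ∉ K`, so every element of `F` is uniquely `a + bα`,
`a, b ∈ K`).  For `c ∈ K*`, `S_c = {x ∈ F* : x = a + cα for some a ∈ K}`.  The family
`{S_c : c ∈ K*}` is a `(q²−1, q−1, q, q−1, 0)`-DPDF and a
`(q²−1, q−1, q, (q−1)(q−2), q²−q)`-EPDF in the multiplicative group `F*`. -/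
theorem bose_dpdf_epdf (q : ℕ) (hq : ∃ p r : ℕ, p.Prime ∧ 0 < r ∧ q = p ^ r)
    (F : Type*) [Field F] [Fintype F] [DecidableEq F] (hF : Fintype.card F = q ^ 2)
    (K : Subfield F) [Fintype K] (hK : Fintype.card K = q)
    (α : F) (hprim : ∀ x : F, x ≠ 0 → ∃ k : ℕ, α ^ k = x) (hαK : α ∉ K)
    (S : (↥K)ˣ → Finset Fˣ)
    (hS : ∀ (c : (↥K)ˣ) (x : Fˣ),
      x ∈ S c ↔ ∃ a ∈ K, (x : F) = a + ((c : ↥K) : F) * α) :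
    IsMulDPDF Fˣ (q ^ 2 - 1) (q - 1) q (q - 1) 0 S ∧
    IsMulEPDF Fˣ (q ^ 2 - 1) (q - 1) q ((q - 1) * (q - 2)) (q ^ 2 - q) S := by
  classical
  have hq2 : 2 ≤ q := by
    obtain ⟨p, r, hp, hr, rfl⟩ := hq
    exact Nat.one_lt_pow hr.ne' hp.one_lt
  have huniq : ∀ a b a' b' : ↥K, (a : F) + (b : F) * α = (a' : F) + (b' : F) * α →
      a = a' ∧ b = b' := by
    intro a b a' b' h
    have hbb : b = b' := by
      by_contra hbb
      apply hαK
      have hb : (b : F) - (b' : F) ≠ 0 := by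
        intro h0
        exact hbb (Subtype.ext (by linear_combination h0))
      have h3 : α * ((b : F) - b') = (a' : F) - a := by linear_combination h
      have h4 : α = ((a' : F) - a) / ((b : F) - b') := (eq_div_iff hb).mpr h3
      rw [h4]
      exact K.div_mem (K.sub_mem (SetLike.coe_mem a') (SetLike.coe_mem a))
        (K.sub_mem (SetLike.coe_mem b) (SetLike.coe_mem b'))
    subst hbb
    refine ⟨Subtype.ext ?_, rfl⟩
    exact add_right_cancel h
  let e : ↥K × ↥K → F := fun p => (p.1 : F) + (p.2 : F) * α
  have hinj : Function.Injective e := by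
    rintro ⟨a, b⟩ ⟨a', b'⟩ h
    obtain ⟨h1, h2⟩ := huniq a b a' b' h
    exact Prod.ext h1 h2
  have hcard2 : Fintype.card (↥K × ↥K) = Fintype.card F := by
    rw [Fintype.card_prod, hK, hF, sq]
  have hbij : Function.Bijective e :=
    (Fintype.bijective_iff_injective_and_card e).mpr ⟨hinj, hcard2⟩
  let E : ↥K × ↥K ≃ F := Equiv.ofBijective e hbij
  let A : F → ↥K := fun x => (E.symm x).1
  let B : F → ↥K := fun x => (E.symm x).2
  have hrep : ∀ x : F, ((A x : F)) + (B x : F) * α = x := fun x => E.apply_symm_apply x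
  have hBspec : ∀ a b : ↥K, B ((a : F) + (b : F) * α) = b :=
    fun a b => congrArg Prod.snd (E.symm_apply_apply (a, b))
  have hAspec : ∀ a b : ↥K, A ((a : F) + (b : F) * α) = a :=
    fun a b => congrArg Prod.fst (E.symm_apply_apply (a, b))
  have hB0 : ∀ x : F, B x = 0 ↔ x ∈ K := by
    intro x
    constructor
    · intro h
      have hx := hrep x
      rw [h] at hx
      push_cast at hx
      rw [zero_mul, add_zero] at hx
      rw [← hx]
      exact SetLike.coe_mem (A x)
    · intro hx
      have h1 : x = ((⟨x, hx⟩ : ↥K) : F) + ((0 : ↥K) : F) * α := by push_cast; ring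
      rw [h1, hBspec]
  have hBadd : ∀ x y : F, B (x + y) = B x + B y := by
    intro x y
    have h1 : x + y = ((A x + A y : ↥K) : F) + ((B x + B y : ↥K) : F) * α := by
      push_cast
      linear_combination (hrep x).symm + (hrep y).symm
    rw [h1, hBspec]
  have hBsub : ∀ x y : F, B (x - y) = B x - B y := by
    intro x y
    have h1 := hBadd (x - y) y
    rw [sub_add_cancel] at h1
    exact eq_sub_of_add_eq h1.symm
  have hB1 : B 1 = 0 := (hB0 1).mpr K.one_mem
  -- membership characterization
  have hcne : ∀ c : (↥K)ˣ, (c : ↥K) ≠ 0 := fun c => Units.ne_zero c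
  have hSc : ∀ c : (↥K)ˣ, S c = univ.filter (fun y : Fˣ => B (y : F) = (c : ↥K)) := by
    intro c
    ext x
    simp only [Finset.mem_filter, Finset.mem_univ, true_and, hS]
    constructor
    · rintro ⟨a, haK, hx⟩
      have h1 : (x : F) = ((⟨a, haK⟩ : ↥K) : F) + ((c : ↥K) : F) * α := hx
      rw [h1, hBspec]
    · intro h
      refine ⟨(A (x : F) : F), SetLike.coe_mem _, ?_⟩
      conv_lhs => rw [← hrep (x : F)]
      rw [h]
  have hcardFx : Fintype.card Fˣ = q ^ 2 - 1 := by rw [Fintype.card_units, hF]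
  have hcardKx : Fintype.card (↥K)ˣ = q - 1 := by rw [Fintype.card_units, hK]
  have hScard : ∀ c, (S c).card = q := by
    intro c
    have hne : ∀ a : ↥K, (a : F) + ((c : ↥K) : F) * α ≠ 0 := by
      intro a h
      apply hcne c
      have h0 : B ((a : F) + ((c : ↥K) : F) * α) = (c : ↥K) := hBspec a (c : ↥K)
      rw [h] at h0
      rw [← h0]
      exact (hB0 0).mpr K.zero_mem
    rw [hSc]
    rw [show q = (univ : Finset ↥K).card by rw [Finset.card_univ, hK]]
    refine Finset.card_bij' (fun x _ => A (x : F)) (fun a _ => Units.mk0 _ (hne a)) ?_ ?_ ?_ ?_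
    · intro x _; exact Finset.mem_univ _
    · intro a _
      simp only [Finset.mem_filter, Finset.mem_univ, true_and, Units.val_mk0]
      exact hBspec a (c : ↥K)
    · intro x hx
      simp only [Finset.mem_filter, Finset.mem_univ, true_and] at hx
      apply Units.ext
      rw [Units.val_mk0]
      conv_rhs => rw [← hrep (x : F)]
      rw [hx]
    · intro a _
      simp only [Units.val_mk0]
      exact hAspec a (c : ↥K)
  have hone : ∀ c, (1 : Fˣ) ∉ S c := by
    intro c h
    rw [hSc] at h
    simp only [Finset.mem_filter, Finset.mem_univ, true_and, Units.val_one] at h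
    exact hcne c (by rw [← h]; exact hB1)
  have hdisj : ∀ i j : (↥K)ˣ, i ≠ j → Disjoint (S i) (S j) := by
    intro i j hij
    rw [Finset.disjoint_left]
    intro x hxi hxj
    rw [hSc] at hxi hxj
    simp only [Finset.mem_filter, Finset.mem_univ, true_and] at hxi hxj
    exact hij (Units.ext (by rw [← hxi, ← hxj]))
  have hmemiff : ∀ g : Fˣ, (∃ i, g ∈ S i) ↔ B (g : F) ≠ 0 := by
    intro g
    constructor
    · rintro ⟨i, hi⟩
      rw [hSc] at hi
      simp only [Finset.mem_filter, Finset.mem_univ, true_and] at hi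
      rw [hi]; exact hcne i
    · intro h
      exact ⟨Units.mk0 (B (g : F)) h, by rw [hSc]; exact Finset.mem_filter.mpr ⟨Finset.mem_univ _, (Units.val_mk0 _).symm⟩⟩
  -- fiber lemma
  have hfiber : ∀ (s : Finset Fˣ) (f : Fˣ → ↥K),
      (∑ c : (↥K)ˣ, (s.filter fun y => f y = (c : ↥K)).card)
        = (s.filter fun y => f y ≠ 0).card := by
    intro s f
    have h1 : (s.filter fun y => f y ≠ 0).card
        = ∑ c ∈ (univ : Finset ↥K).filter (· ≠ 0),
            ((s.filter fun y => f y ≠ 0).filter fun y => f y = c).card := by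
      apply Finset.card_eq_sum_card_fiberwise
      intro x hx
      simp only [Finset.mem_coe, Finset.mem_filter, Finset.mem_univ, true_and] at hx ⊢
      exact hx.2
    rw [h1]
    refine Finset.sum_bij (fun (c : (↥K)ˣ) _ => (c : ↥K)) ?_ ?_ ?_ ?_
    · intro c _
      simp only [Finset.mem_filter, Finset.mem_univ, true_and]
      exact hcne c
    · intro c₁ _ c₂ _ h; exact Units.ext h
    · intro c hcmem
      simp only [Finset.mem_filter, Finset.mem_univ, true_and] at hcmem
      exact ⟨Units.mk0 c hcmem, Finset.mem_univ _, rfl⟩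
    · intro c _
      rw [Finset.filter_filter]
      congr 1
      apply Finset.filter_congr
      intro y _
      constructor
      · intro h; exact ⟨by rw [h]; exact hcne c, h⟩
      · intro h; exact h.2
  -- kernel card
  have hker : ∀ w : Fˣ, (univ.filter fun y : Fˣ => B ((w : F) * (y : F)) = 0).card = q - 1 := by
    intro w
    have hwne : (w : F) ≠ 0 := Units.ne_zero w
    have hkq : ((univ : Finset ↥K).filter (· ≠ 0)).card = q - 1 := by
      rw [Finset.filter_ne', Finset.card_erase_of_mem (Finset.mem_univ _), Finset.card_univ, hK]
    rw [← hkq]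
    refine Finset.card_bij' (fun y hy => (⟨(w : F) * (y : F), ?_⟩ : ↥K))
      (fun k hk => w⁻¹ * Units.mk0 (k : F) ?_) ?_ ?_ ?_ ?_
    · simp only [Finset.mem_filter, Finset.mem_univ, true_and] at hy
      exact (hB0 _).mp hy
    · simp only [Finset.mem_filter, Finset.mem_univ, true_and] at hk
      intro h
      exact hk (Subtype.ext h)
    · intro y hy
      simp only [Finset.mem_filter, Finset.mem_univ, true_and]
      intro h
      rw [Subtype.ext_iff] at h
      simp only at h
      exact (mul_ne_zero hwne (Units.ne_zero y)) h
    · intro k hk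
      simp only [Finset.mem_filter, Finset.mem_univ, true_and, Units.val_mul,
        Units.val_inv_eq_inv_val, Units.val_mk0]
      rw [mul_inv_cancel_left₀ hwne]
      exact (hB0 _).mpr (SetLike.coe_mem k)
    · intro y hy
      apply Units.ext
      simp only [Units.val_mul, Units.val_inv_eq_inv_val, Units.val_mk0]
      rw [inv_mul_cancel_left₀ hwne]
    · intro k hk
      apply Subtype.ext
      simp only [Units.val_mul, Units.val_inv_eq_inv_val, Units.val_mk0]
      rw [mul_inv_cancel_left₀ hwne]
    -- T condition equivalence
  have hTequiv : ∀ (g : Fˣ) (y : F), B ((g : F) * y) = B y ↔ ((g : F) - 1) * y ∈ K := by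
    intro g y
    rw [← hB0]
    have h1 : ((g : F) - 1) * y = (g : F) * y - y := by ring
    rw [h1, hBsub, sub_eq_zero]
  have hgne1 : ∀ g : Fˣ, g ≠ 1 → (g : F) - 1 ≠ 0 := by
    intro g hg
    refine sub_ne_zero.mpr fun h => hg (Units.ext ?_)
    simpa using h
  -- |T| case 1 : g ∉ K
  have hTcase1 : ∀ g : Fˣ, g ≠ 1 → B (g : F) ≠ 0 →
      (univ.filter fun y : Fˣ => B ((g : F) * y) = B (y : F) ∧ B (y : F) ≠ 0).card = q - 1 := by
    intro g hg1 hgB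
    have hgm1 : (g : F) - 1 ≠ 0 := hgne1 g hg1
    have hkq : ((univ : Finset ↥K).filter (· ≠ 0)).card = q - 1 := by
      rw [Finset.filter_ne', Finset.card_erase_of_mem (Finset.mem_univ _), Finset.card_univ, hK]
    rw [← hkq]
    refine Finset.card_bij' (fun y hy => (⟨((g : F) - 1) * y, ?_⟩ : ↥K))
      (fun k hk => Units.mk0 (((g : F) - 1)⁻¹ * (k : F)) ?_) ?_ ?_ ?_ ?_
    · simp only [Finset.mem_filter, Finset.mem_univ, true_and] at hy
      exact (hTequiv g y).mp hy.1
    · simp only [Finset.mem_filter, Finset.mem_univ, true_and] at hk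
      exact mul_ne_zero (inv_ne_zero hgm1) (fun h => hk (Subtype.ext h))
    · intro y hy
      simp only [Finset.mem_filter, Finset.mem_univ, true_and]
      intro h
      rw [Subtype.ext_iff] at h
      exact (mul_ne_zero hgm1 (Units.ne_zero y)) h
    · intro k hk
      simp only [Finset.mem_filter, Finset.mem_univ, true_and, Units.val_mk0]
      have hkmem : ((g : F) - 1) * (((g : F) - 1)⁻¹ * (k : F)) ∈ K := by
        rw [mul_inv_cancel_left₀ hgm1]
        exact SetLike.coe_mem k
      refine ⟨(hTequiv g _).mpr hkmem, ?_⟩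
      intro hB
      apply hgB
      have hyK : ((g : F) - 1)⁻¹ * (k : F) ∈ K := (hB0 _).mp hB
      simp only [Finset.mem_filter, Finset.mem_univ, true_and] at hk
      have hyne : ((g : F) - 1)⁻¹ * (k : F) ≠ 0 :=
        mul_ne_zero (inv_ne_zero hgm1) (fun h => hk (Subtype.ext h))
      have hgm1K : (g : F) - 1 ∈ K := by
        have hk0 : (k : F) ≠ 0 := fun h => hk (Subtype.ext h)
        have heq : (g : F) - 1 = (k : F) * (((g : F) - 1)⁻¹ * (k : F))⁻¹ := by
          rw [mul_inv, inv_inv, mul_comm ((g : F) - 1) ((k : F))⁻¹,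
            mul_inv_cancel_left₀ hk0]
        rw [heq]
        exact K.mul_mem (SetLike.coe_mem k) (K.inv_mem hyK)
      have hgK : (g : F) ∈ K := by
        have heq : (g : F) = ((g : F) - 1) + 1 := by ring
        rw [heq]
        exact K.add_mem hgm1K K.one_mem
      exact (hB0 _).mpr hgK
    · intro y hy
      apply Units.ext
      simp only [Units.val_mk0]
      rw [inv_mul_cancel_left₀ hgm1]
    · intro k hk
      apply Subtype.ext
      simp only [Units.val_mk0]
      rw [mul_inv_cancel_left₀ hgm1]
  -- |T| case 2 : g ∈ K
  have hTcase2 : ∀ g : Fˣ, g ≠ 1 → B (g : F) = 0 →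
      (univ.filter fun y : Fˣ => B ((g : F) * y) = B (y : F) ∧ B (y : F) ≠ 0).card = 0 := by
    intro g hg1 hgB
    rw [Finset.card_eq_zero, Finset.filter_eq_empty_iff]
    rintro y - ⟨h1, h2⟩
    have hmem : ((g : F) - 1) * y ∈ K := (hTequiv g y).mp h1
    have hgK : (g : F) ∈ K := (hB0 _).mp hgB
    have hgm1K : (g : F) - 1 ∈ K := K.sub_mem hgK K.one_mem
    have hgm1 : (g : F) - 1 ≠ 0 := hgne1 g hg1
    have hyK : (y : F) ∈ K := by
      have heq : (y : F) = ((g : F) - 1)⁻¹ * (((g : F) - 1) * y) := by field_simp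
      rw [heq]
      exact K.mul_mem (K.inv_mem hgm1K) hmem
    exact h2 ((hB0 _).mpr hyK)
  -- MulIntFam count
  have hInt : ∀ g : Fˣ, g ≠ 1 → (Finset.univ.sum fun c => (mulDInt (S c)).count g)
      = (univ.filter fun y : Fˣ => B ((g : F) * y) = B (y : F) ∧ B (y : F) ≠ 0).card := by
    intro g hg
    have step : ∀ c : (↥K)ˣ, (mulDInt (S c)).count g
        = ((univ.filter fun y : Fˣ => B ((g : F) * y) = B (y : F) ∧ B (y : F) ≠ 0).filter
            fun y : Fˣ => B (y : F) = (c : ↥K)).card := by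
      intro c
      rw [count_mulDInt']
      congr 1
      ext y
      simp only [Finset.mem_filter, Finset.mem_univ, true_and, hSc, Units.val_mul]
      constructor
      · rintro ⟨hy, hgy, -⟩
        exact ⟨⟨hgy.trans hy.symm, hy ▸ hcne c⟩, hy⟩
      · rintro ⟨⟨h1, h2⟩, h3⟩
        refine ⟨h3, h1.trans h3, fun h => hg ?_⟩
        exact mul_right_cancel (h.trans (one_mul _).symm)
    rw [Finset.sum_congr rfl fun c _ => step c, hfiber _ (fun y : Fˣ => B (y : F))]
    apply congrArg
    apply Finset.filter_true_of_mem
    intro y hy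
    simp only [Finset.mem_filter, Finset.mem_univ, true_and] at hy
    exact hy.2
  -- swap lemma
  have hswap : ∀ (f : (↥K)ˣ → (↥K)ˣ → ℕ),
      (∑ i : (↥K)ˣ, ∑ j ∈ univ.erase i, f i j) = ∑ j : (↥K)ˣ, ∑ i ∈ univ.erase j, f i j := by
    intro f
    have e1 : ∀ i : (↥K)ˣ, ∑ j ∈ univ.erase i, f i j
        = ∑ j : (↥K)ˣ, if j ≠ i then f i j else 0 := by
      intro i
      rw [← Finset.sum_filter, Finset.filter_ne']
    have e2 : ∀ j : (↥K)ˣ, ∑ i ∈ univ.erase j, f i j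
        = ∑ i : (↥K)ˣ, if j ≠ i then f i j else 0 := by
      intro j
      rw [← Finset.sum_filter, Finset.filter_ne]
    rw [Finset.sum_congr rfl fun i _ => e1 i, Finset.sum_comm,
      Finset.sum_congr rfl fun j _ => (e2 j).symm]
  -- MulExtFam count
  have hExt : ∀ g : Fˣ, g ≠ 1 →
      (∑ i : (↥K)ˣ, ∑ j ∈ univ.erase i, (mulDExt (S i) (S j)).count g)
        + (univ.filter fun y : Fˣ => B ((g : F) * y) = B (y : F) ∧ B (y : F) ≠ 0).card
      = (univ.filter fun y : Fˣ => B ((g : F) * y) ≠ 0 ∧ B (y : F) ≠ 0).card := by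
    intro g hg
    have hstepA : ∀ i j : (↥K)ˣ, (mulDExt (S i) (S j)).count g
        = (univ.filter fun y : Fˣ =>
            B (y : F) = (j : ↥K) ∧ B ((g : F) * y) = (i : ↥K)).card := by
      intro i j
      rw [count_mulDExt']
      congr 1
      ext y
      simp only [Finset.mem_filter, Finset.mem_univ, true_and, hSc, Units.val_mul]
    have hdiag : (∑ j : (↥K)ˣ, (univ.filter fun y : Fˣ =>
          B (y : F) = (j : ↥K) ∧ B ((g : F) * y) = (j : ↥K)).card)
        = (univ.filter fun y : Fˣ => B ((g : F) * y) = B (y : F) ∧ B (y : F) ≠ 0).card := by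
      have e3 : ∀ j : (↥K)ˣ, (univ.filter fun y : Fˣ =>
            B (y : F) = (j : ↥K) ∧ B ((g : F) * y) = (j : ↥K))
          = ((univ.filter fun y : Fˣ => B ((g : F) * y) = B (y : F)).filter
              fun y : Fˣ => B (y : F) = (j : ↥K)) := by
        intro j
        rw [Finset.filter_filter]
        apply Finset.filter_congr
        intro y _
        constructor
        · rintro ⟨h1, h2⟩; exact ⟨h2.trans h1.symm, h1⟩
        · rintro ⟨h1, h2⟩; exact ⟨h2, h1.trans h2⟩
      rw [Finset.sum_congr rfl fun j _ => by rw [e3 j],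
        hfiber _ (fun y : Fˣ => B (y : F)), Finset.filter_filter]
    have htot : (∑ j : (↥K)ˣ, ∑ i : (↥K)ˣ, (univ.filter fun y : Fˣ =>
          B (y : F) = (j : ↥K) ∧ B ((g : F) * y) = (i : ↥K)).card)
        = (univ.filter fun y : Fˣ => B ((g : F) * y) ≠ 0 ∧ B (y : F) ≠ 0).card := by
      have e4 : ∀ j : (↥K)ˣ, (∑ i : (↥K)ˣ, (univ.filter fun y : Fˣ =>
            B (y : F) = (j : ↥K) ∧ B ((g : F) * y) = (i : ↥K)).card)
          = ((univ.filter fun y : Fˣ => B (y : F) = (j : ↥K)).filter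
              fun y : Fˣ => B ((g : F) * y) ≠ 0).card := by
        intro j
        rw [← hfiber (univ.filter fun y : Fˣ => B (y : F) = (j : ↥K))
          (fun y : Fˣ => B ((g : F) * y))]
        apply Finset.sum_congr rfl
        intro i _
        rw [Finset.filter_filter]
      have e5 : ∀ j : (↥K)ˣ, ((univ.filter fun y : Fˣ => B (y : F) = (j : ↥K)).filter
            fun y : Fˣ => B ((g : F) * y) ≠ 0)
          = ((univ.filter fun y : Fˣ => B ((g : F) * y) ≠ 0).filter
              fun y : Fˣ => B (y : F) = (j : ↥K)) := by
        intro j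
        rw [Finset.filter_filter, Finset.filter_filter]
        apply Finset.filter_congr
        intro y _
        exact and_comm
      rw [Finset.sum_congr rfl fun j _ => by rw [e4 j, e5 j],
        hfiber _ (fun y : Fˣ => B (y : F)), Finset.filter_filter]
    rw [hswap (fun i j => (mulDExt (S i) (S j)).count g)]
    rw [Finset.sum_congr rfl fun j _ => Finset.sum_congr rfl fun i _ => hstepA i j]
    rw [← hdiag, ← htot, ← Finset.sum_add_distrib]
    apply Finset.sum_congr rfl
    intro j _
    exact Finset.sum_erase_add _ _ (Finset.mem_univ j)
  -- kernel for w = 1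
  have hker1 : (univ.filter fun y : Fˣ => B (y : F) = 0).card = q - 1 := by
    have h := hker 1
    simpa using h
  have hU1 : ∀ g : Fˣ, B (g : F) ≠ 0 →
      (univ.filter fun y : Fˣ => B ((g : F) * y) ≠ 0 ∧ B (y : F) ≠ 0).card
        + ((q - 1) + (q - 1)) = q ^ 2 - 1 := by
    intro g hgB
    have hsplit := Finset.card_filter_add_card_filter_not
      (s := (univ : Finset Fˣ)) (p := fun y : Fˣ => B ((g : F) * y) ≠ 0 ∧ B (y : F) ≠ 0)
    rw [Finset.card_univ, hcardFx] at hsplit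
    have hnegset : (univ.filter fun y : Fˣ => ¬(B ((g : F) * y) ≠ 0 ∧ B (y : F) ≠ 0))
        = (univ.filter fun y : Fˣ => B ((g : F) * (y : F)) = 0)
          ∪ (univ.filter fun y : Fˣ => B (y : F) = 0) := by
      rw [← Finset.filter_or]
      apply Finset.filter_congr
      intro y _
      constructor
      · intro h
        by_cases h1 : B ((g : F) * y) = 0
        · exact Or.inl h1
        · right
          by_contra h2
          exact h ⟨h1, h2⟩
      · rintro (h | h) hc
        · exact hc.1 h
        · exact hc.2 h
    have hdisj2 : Disjoint (univ.filter fun y : Fˣ => B ((g : F) * (y : F)) = 0)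
        (univ.filter fun y : Fˣ => B (y : F) = 0) := by
      rw [Finset.disjoint_left]
      intro y h1 h2
      simp only [Finset.mem_filter, Finset.mem_univ, true_and] at h1 h2
      apply hgB
      have hyK : (y : F) ∈ K := (hB0 _).mp h2
      have hgyK : (g : F) * y ∈ K := (hB0 _).mp h1
      have hyne : (y : F) ≠ 0 := Units.ne_zero y
      have hgK : (g : F) ∈ K := by
        have heq : (g : F) = ((g : F) * y) * ((y : F))⁻¹ := by field_simp
        rw [heq]
        exact K.mul_mem hgyK (K.inv_mem hyK)
      exact (hB0 _).mpr hgK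
    rw [hnegset, Finset.card_union_of_disjoint hdisj2, hker g, hker1] at hsplit
    exact hsplit
  have hU2 : ∀ g : Fˣ, B (g : F) = 0 →
      (univ.filter fun y : Fˣ => B ((g : F) * y) ≠ 0 ∧ B (y : F) ≠ 0).card + (q - 1)
        = q ^ 2 - 1 := by
    intro g hgB
    have hgK : (g : F) ∈ K := (hB0 _).mp hgB
    have hiff : ∀ y : Fˣ, (B ((g : F) * y) ≠ 0 ∧ B (y : F) ≠ 0) ↔ B (y : F) ≠ 0 := by
      intro y
      constructor
      · exact fun h => h.2
      · intro h
        refine ⟨fun h1 => h ?_, h⟩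
        have hgyK : (g : F) * y ∈ K := (hB0 _).mp h1
        have hgne : (g : F) ≠ 0 := Units.ne_zero g
        have hyK : (y : F) ∈ K := by
          have heq : (y : F) = ((g : F))⁻¹ * ((g : F) * y) := by field_simp
          rw [heq]
          exact K.mul_mem (K.inv_mem hgK) hgyK
        exact (hB0 _).mpr hyK
    have hsplit := Finset.card_filter_add_card_filter_not
      (s := (univ : Finset Fˣ)) (p := fun y : Fˣ => B (y : F) ≠ 0)
    rw [Finset.card_univ, hcardFx] at hsplit
    have hnn : (univ.filter fun y : Fˣ => ¬(B (y : F) ≠ 0))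
        = (univ.filter fun y : Fˣ => B (y : F) = 0) := by
      apply Finset.filter_congr
      intro y _
      exact not_not
    rw [hnn, hker1] at hsplit
    have hUeq : (univ.filter fun y : Fˣ => B ((g : F) * y) ≠ 0 ∧ B (y : F) ≠ 0)
        = univ.filter fun y : Fˣ => B (y : F) ≠ 0 :=
      Finset.filter_congr fun y _ => hiff y
    rw [hUeq]
    exact hsplit
  have hcount : ∀ g : Fˣ, (MulExtFam S).count g
      = ∑ i : (↥K)ˣ, ∑ j ∈ univ.erase i, (mulDExt (S i) (S j)).count g := by
    intro g
    rw [MulExtFam, Multiset.count_sum']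
    exact Finset.sum_congr rfl fun i _ => Multiset.count_sum'
  constructor
  · refine ⟨hcardFx, hcardKx, hScard, hone, hdisj, ?_, ?_⟩
    · intro g hg hex
      rw [MulIntFam, Multiset.count_sum', hInt g hg]
      exact hTcase1 g hg ((hmemiff g).mp hex)
    · intro g hg hnone
      have hB0g : B (g : F) = 0 := by
        by_contra h
        obtain ⟨i, hi⟩ := (hmemiff g).mpr h
        exact hnone i hi
      rw [MulIntFam, Multiset.count_sum', hInt g hg]
      exact hTcase2 g hg hB0g
  · refine ⟨hcardFx, hcardKx, hScard, hone, hdisj, ?_, ?_⟩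
    · intro g hg hex
      have hgB := (hmemiff g).mp hex
      have h1 := hExt g hg
      rw [hTcase1 g hg hgB] at h1
      have h2 := hU1 g hgB
      rw [hcount g]
      obtain ⟨m, rfl⟩ : ∃ m, q = m + 2 := ⟨q - 2, by omega⟩
      have eq1 : m + 2 - 1 = m + 1 := by omega
      have eq2 : m + 2 - 2 = m := by omega
      have eq3 : (m + 2) ^ 2 - 1 = m * m + 4 * m + 3 := by
        have h : (m + 2) ^ 2 = m * m + 4 * m + 3 + 1 := by ring
        rw [h, Nat.add_sub_cancel]
      rw [eq1] at h1 h2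
      rw [eq3] at h2
      rw [eq1, eq2]
      have hkey : (m + 1) * m + (m + 1) + (m + 1 + (m + 1)) = m * m + 4 * m + 3 := by ring
      linarith [h1, h2, hkey]
    · intro g hg hnone
      have hB0g : B (g : F) = 0 := by
        by_contra h
        obtain ⟨i, hi⟩ := (hmemiff g).mpr h
        exact hnone i hi
      have h1 := hExt g hg
      rw [hTcase2 g hg hB0g, Nat.add_zero] at h1
      have h2 := hU2 g hB0g
      rw [hcount g]
      obtain ⟨m, rfl⟩ : ∃ m, q = m + 2 := ⟨q - 2, by omega⟩
      have eq1 : m + 2 - 1 = m + 1 := by omega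
      have eq3 : (m + 2) ^ 2 - 1 = m * m + 4 * m + 3 := by
        have h : (m + 2) ^ 2 = m * m + 4 * m + 3 + 1 := by ring
        rw [h, Nat.add_sub_cancel]
      have eq4 : (m + 2) ^ 2 - (m + 2) = m * m + 3 * m + 2 := by
        have h : (m + 2) ^ 2 = m * m + 3 * m + 2 + (m + 2) := by ring
        rw [h, Nat.add_sub_cancel]
      rw [eq1, eq3] at h2
      rw [eq4]
      linarith [h1, h2]
end
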